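/- arXiv:2007.08865 — 8 statements merged into one kernel-verified Lean document; each statement's English description precedes it below -/
import Mathlib

section
/- (Duality) For every admissible index s = (s_1, …, s_l), one has ζ(s) = ζ(s†), where s† is the dual index of s. -/
/-- The multiple zeta value `ζ(s)` of a list `s = [s_1, …, s_l]`, as a sum over
strictly decreasing tuples of positive integers. -/
noncomputable def mzv (s : List ℕ) : ℝ :=
  ∑' n : {n : Fin s.length → ℕ // StrictAnti n ∧ ∀ i, 0 < n i},
    ∏ i, ((n.1 i : ℝ) ^ s.get i)⁻¹

/-- The admissible index `(u_1+1, 1^{t_1-1}, u_2+1, 1^{t_2-1}, …, u_k+1, 1^{t_k-1})`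
built from positive integers `u_1,…,u_k` and `t_1,…,t_k`. -/
def buildIndex {k : ℕ} (u t : Fin k → ℕ) : List ℕ :=
  (List.ofFn fun i => (u i + 1) :: List.replicate (t i - 1) 1).flatten

open scoped ENNReal NNReal
open Filter

namespace MzvDual

/-- the real connector `m! n! / (m+n)!` -/
noncomputable def cr (m n : ℕ) : ℝ := (m.factorial * n.factorial : ℝ) / (m + n).factorial

lemma cr_pos (m n : ℕ) : 0 < cr m n := by
  apply div_pos <;> positivity

lemma cr_zero_left (n : ℕ) : cr 0 n = 1 := by
  have : (n.factorial : ℝ) ≠ 0 := by positivity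
  simp [cr, div_self this]

lemma cr_comm (m n : ℕ) : cr m n = cr n m := by
  simp [cr, Nat.add_comm, mul_comm]

/-- ENNReal connector -/
noncomputable def cc (m n : ℕ) : ℝ≥0∞ := ENNReal.ofReal (cr m n)

lemma cc_zero_left (n : ℕ) : cc 0 n = 1 := by simp [cc, cr_zero_left]

lemma cc_comm (m n : ℕ) : cc m n = cc n m := by rw [cc, cc, cr_comm]

/-- telescoping step, real level -/
lemma cr_step (m n k : ℕ) (hm : 1 ≤ m) :
    ((n + 1 + k : ℕ) : ℝ)⁻¹ * cr m (n + 1 + k) = cr m (n + k) / m - cr m (n + (k+1)) / m := by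
  have h1 : ((m + (n + 1 + k)).factorial : ℝ) = (m + n + k + 1) * (m + n + k).factorial := by
    have : m + (n + 1 + k) = (m + n + k) + 1 := by ring
    rw [this, Nat.factorial_succ]; push_cast; ring
  have h2 : ((n + 1 + k).factorial : ℝ) = (n + k + 1) * (n + k).factorial := by
    have : n + 1 + k = (n + k) + 1 := by ring
    rw [this, Nat.factorial_succ]; push_cast; ring
  have h3 : m + (n + k) = m + n + k := by ring
  have h4 : n + (k+1) = n + 1 + k := by ring
  simp only [cr, h4, h3]
  have fpos1 : (0:ℝ) < (m + n + k).factorial := by positivity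
  have fpos2 : (0:ℝ) < (m + n + k + 1 : ℝ) := by positivity
  have hmpos : (0:ℝ) < m := by exact_mod_cast hm
  have hnpos : (0:ℝ) < (n + 1 + k : ℕ) := by positivity
  rw [h1, h2]
  have hn1k : ((n + 1 + k : ℕ) : ℝ) = (n:ℝ) + 1 + k := by push_cast; ring
  rw [hn1k]
  field_simp
  ring

lemma cr_le (m n : ℕ) (hm : 1 ≤ m) : cr m n ≤ (m.factorial : ℝ) / (n + 1) := by
  rw [cr, div_le_div_iff₀ (by positivity) (by positivity)]
  have h : ((n+1).factorial : ℝ) ≤ ((m+n).factorial : ℝ) := by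
    exact_mod_cast Nat.factorial_le (by omega)
  calc (m.factorial : ℝ) * n.factorial * (n + 1)
      = (m.factorial : ℝ) * ((n+1) * n.factorial) := by ring
    _ = (m.factorial : ℝ) * (n+1).factorial := by rw [Nat.factorial_succ]; push_cast; ring
    _ ≤ (m.factorial : ℝ) * (m+n).factorial := by
        apply mul_le_mul_of_nonneg_left h (by positivity)
    _ = (m.factorial : ℝ) * (m+n).factorial * 1 := by ring
    _ ≤ _ := by nlinarith [cr_pos m n]

lemma cr_tendsto (m n : ℕ) (hm : 1 ≤ m) :
    Tendsto (fun k => cr m (n + k) / m) atTop (nhds 0) := by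
  have hg : Tendsto (fun k : ℕ => (m.factorial : ℝ) / ((k + 1 : ℕ) : ℝ)) atTop (nhds 0) := by
    exact (tendsto_const_div_atTop_nhds_zero_nat (m.factorial : ℝ)).comp
      (tendsto_add_atTop_nat 1)
  refine squeeze_zero (fun k => div_nonneg (cr_pos _ _).le (Nat.cast_nonneg _))
    (fun k => ?_) hg
  have h1 : cr m (n + k) / (m : ℝ) ≤ cr m (n + k) := by
    have := cr_pos m (n + k)
    have hm1 : (1:ℝ) ≤ m := by exact_mod_cast hm
    calc cr m (n+k) / (m:ℝ) ≤ cr m (n+k) / 1 := by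
          apply div_le_div_of_nonneg_left (le_of_lt this) (by norm_num) hm1
      _ = cr m (n+k) := by ring
  refine h1.trans ((cr_le m (n+k) hm).trans ?_)
  apply div_le_div_of_nonneg_left (by positivity) (by positivity)
  push_cast; linarith [Nat.cast_nonneg (α := ℝ) n]

lemma cr_hasSum (m n : ℕ) (hm : 1 ≤ m) :
    HasSum (fun k : ℕ => ((n + 1 + k : ℕ) : ℝ)⁻¹ * cr m (n + 1 + k)) (cr m n / m) := by
  have hnn : ∀ k : ℕ, 0 ≤ ((n + 1 + k : ℕ) : ℝ)⁻¹ * cr m (n + 1 + k) :=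
    fun k => mul_nonneg (by positivity) (cr_pos _ _).le
  rw [hasSum_iff_tendsto_nat_of_nonneg hnn]
  have hps : ∀ K, ∑ k ∈ Finset.range K, ((n + 1 + k : ℕ) : ℝ)⁻¹ * cr m (n + 1 + k)
      = cr m n / m - cr m (n + K) / m := by
    intro K
    have h0 := Finset.sum_range_sub' (fun k => cr m (n + k) / m) K
    simp only [Nat.add_zero] at h0
    rw [← h0]
    exact Finset.sum_congr rfl fun k _ => cr_step m n k hm
  simp only [hps]
  have := (cr_tendsto m n hm).const_sub (cr m n / m)
  simpa using this

lemma harmonic_top (n : ℕ) : ∑' k : ℕ, ((n + 1 + k : ℕ) : ℝ≥0∞)⁻¹ = ⊤ := by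
  by_contra h
  have hrw : ∀ k : ℕ, ((n + 1 + k : ℕ) : ℝ≥0∞)⁻¹
      = (((((n + 1 + k : ℕ) : ℝ≥0))⁻¹ : ℝ≥0) : ℝ≥0∞) := by
    intro k
    rw [ENNReal.coe_inv (Nat.cast_ne_zero.mpr (by omega)), ENNReal.coe_natCast]
  simp only [hrw] at h
  have hs : Summable fun k : ℕ => (((n + 1 + k : ℕ) : ℝ≥0))⁻¹ :=
    ENNReal.tsum_coe_ne_top_iff_summable.mp h
  have hs2 : Summable fun k : ℕ => (((n + 1 + k : ℕ) : ℝ))⁻¹ := by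
    have := NNReal.summable_coe.mpr hs
    simpa using this
  have hs3 : Summable fun k : ℕ => ((k : ℝ))⁻¹ := by
    have heq : (fun k : ℕ => (((n + 1 + k : ℕ) : ℝ))⁻¹)
        = fun k : ℕ => (((k + (n + 1) : ℕ) : ℝ))⁻¹ := by
      funext k; congr 1; push_cast; ring
    rw [heq] at hs2
    exact (summable_nat_add_iff (n + 1)).mp hs2
  exact Real.not_summable_natCast_inv hs3

/-- key telescoping identity in `ℝ≥0∞`, including the divergent case `m = 0`. -/
lemma T1 (m n : ℕ) :
    ((m : ℝ≥0∞))⁻¹ * cc m n = ∑' k : ℕ, ((n + 1 + k : ℕ) : ℝ≥0∞)⁻¹ * cc m (n + 1 + k) := by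
  rcases Nat.eq_zero_or_pos m with rfl | hm
  · simp only [cc_zero_left, mul_one, Nat.cast_zero, ENNReal.inv_zero]
    exact (harmonic_top n).symm
  · have hsum := cr_hasSum m n hm
    have hLHS : ((m : ℝ≥0∞))⁻¹ * cc m n = ENNReal.ofReal (cr m n / m) := by
      rw [div_eq_inv_mul, ENNReal.ofReal_mul (by positivity)]
      congr 1
      rw [ENNReal.ofReal_inv_of_pos (by exact_mod_cast hm), ENNReal.ofReal_natCast]
    rw [hLHS, ← hsum.tsum_eq]
    rw [ENNReal.ofReal_tsum_of_nonneg (fun k => mul_nonneg (by positivity) (cr_pos _ _).le)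
      hsum.summable]
    apply tsum_congr
    intro k
    rw [ENNReal.ofReal_mul (by positivity), cc]
    congr 1
    rw [ENNReal.ofReal_inv_of_pos (by exact_mod_cast (by omega : 0 < n + 1 + k)),
      ENNReal.ofReal_natCast]

/-- iterated-sum reading of a (reversed) word : `true` opens a new larger variable,
`false` multiplies by the inverse of the current variable. -/
noncomputable def R : List Bool → ℕ → ℝ≥0∞
  | [], _ => 1
  | (false :: w), m => ((m : ℝ≥0∞))⁻¹ * R w m
  | (true :: w), m => ∑' k : ℕ, ((m + 1 + k : ℕ) : ℝ≥0∞)⁻¹ * R w (m + 1 + k)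

/-- right half of the connected sum. -/
noncomputable def Z2 : List Bool → ℕ → ℕ → ℝ≥0∞
  | [], m, n => cc m n
  | (false :: v), m, n => ((n : ℝ≥0∞))⁻¹ * Z2 v m n
  | (true :: v), m, n => ∑' k : ℕ, ((n + 1 + k : ℕ) : ℝ≥0∞)⁻¹ * Z2 v m (n + 1 + k)

/-- the connected sum of Seki–Yamamoto. -/
noncomputable def Z : List Bool → List Bool → ℕ → ℕ → ℝ≥0∞
  | [], v, m, n => Z2 v m n
  | (false :: w), v, m, n => ((m : ℝ≥0∞))⁻¹ * Z w v m n
  | (true :: w), v, m, n => ∑' k : ℕ, ((m + 1 + k : ℕ) : ℝ≥0∞)⁻¹ * Z w v (m + 1 + k) n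

lemma T2 (m n : ℕ) :
    (∑' k : ℕ, ((m + 1 + k : ℕ) : ℝ≥0∞)⁻¹ * cc (m + 1 + k) n) = ((n : ℝ≥0∞))⁻¹ * cc m n := by
  rw [cc_comm m n, T1 n m]
  exact tsum_congr fun k => by rw [cc_comm]

lemma L1 (v : List Bool) : ∀ (m n : ℕ), ((m : ℕ) : ℝ≥0∞)⁻¹ * Z2 v m n = Z2 (v ++ [true]) m n := by
  induction v with
  | nil => intro m n; simpa [Z2] using T1 m n
  | cons b v ih =>
    intro m n
    cases b with
    | false =>
      simp only [List.cons_append, Z2, List.append_eq]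
      rw [← ih m n]
      ring
    | true =>
      simp only [List.cons_append, Z2, List.append_eq]
      rw [← ENNReal.tsum_mul_left]
      exact tsum_congr fun k => by rw [← ih m (n + 1 + k)]; ring

lemma L2 (v : List Bool) : ∀ (m n : ℕ),
    (∑' k : ℕ, ((m + 1 + k : ℕ) : ℝ≥0∞)⁻¹ * Z2 v (m + 1 + k) n) = Z2 (v ++ [false]) m n := by
  induction v with
  | nil => intro m n; simpa [Z2] using T2 m n
  | cons b v ih =>
    intro m n
    cases b with
    | false =>
      simp only [List.cons_append, Z2, List.append_eq]
      rw [← ih m n, ← ENNReal.tsum_mul_left]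
      exact tsum_congr fun k => by ring
    | true =>
      simp only [List.cons_append, Z2, List.append_eq]
      simp only [← ENNReal.tsum_mul_left]
      rw [ENNReal.tsum_comm]
      refine tsum_congr fun j => ?_
      rw [← ih m (n + 1 + j), ← ENNReal.tsum_mul_left]
      exact tsum_congr fun k => by ring

lemma M1 (w : List Bool) : ∀ (v : List Bool) (m n : ℕ),
    Z (w ++ [false]) v m n = Z w (v ++ [true]) m n := by
  induction w with
  | nil => intro v m n; simpa [Z] using L1 v m n
  | cons b w ih =>
    intro v m n
    cases b with
    | false =>
      simp only [List.cons_append, Z, List.append_eq]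
      rw [ih]
    | true =>
      simp only [List.cons_append, Z, List.append_eq]
      exact tsum_congr fun k => by rw [ih]

lemma M2 (w : List Bool) : ∀ (v : List Bool) (m n : ℕ),
    Z (w ++ [true]) v m n = Z w (v ++ [false]) m n := by
  induction w with
  | nil => intro v m n; simpa [Z] using L2 v m n
  | cons b w ih =>
    intro v m n
    cases b with
    | false =>
      simp only [List.cons_append, Z, List.append_eq]
      rw [ih]
    | true =>
      simp only [List.cons_append, Z, List.append_eq]
      exact tsum_congr fun k => by rw [ih]

lemma Zmain (w : List Bool) : ∀ (v : List Bool) (m n : ℕ),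
    Z w v m n = Z2 (v ++ (w.reverse.map Bool.not)) m n := by
  induction w using List.reverseRecOn with
  | nil => intro v m n; simp [Z]
  | append_singleton w c ih =>
    intro v m n
    cases c with
    | false =>
      rw [M1, ih]
      simp
    | true =>
      rw [M2, ih]
      simp

lemma Z_nil_right (w : List Bool) : ∀ m : ℕ, Z w [] m 0 = R w m := by
  induction w with
  | nil =>
    intro m
    have hne : (m.factorial : ℝ) ≠ 0 := by positivity
    simp [Z, Z2, R, cc, cr, div_self hne]
  | cons b w ih =>
    intro m
    cases b with
    | false => simp only [Z, R]; rw [ih]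
    | true => simp only [Z, R]; exact tsum_congr fun k => by rw [ih]

lemma Z2_zero_left (v : List Bool) : ∀ n : ℕ, Z2 v 0 n = R v n := by
  induction v with
  | nil => intro n; simp [Z2, R, cc_zero_left]
  | cons b v ih =>
    intro n
    cases b with
    | false => simp only [Z2, R]; rw [ih]
    | true => simp only [Z2, R]; exact tsum_congr fun k => by rw [ih]

/-- the global duality at the level of words. -/
lemma R_duality (w : List Bool) : R w 0 = R (w.reverse.map Bool.not) 0 := by
  rw [← Z_nil_right w 0, Zmain w [] 0 0, List.nil_append, Z2_zero_left]

/-- `G q m` : sum over strictly increasing tuples with all entries `> m`. -/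
noncomputable def G (q : List ℕ) (m : ℕ) : ℝ≥0∞ :=
  ∑' n : {n : Fin q.length → ℕ // StrictMono n ∧ ∀ i, m < n i},
    ∏ i, ((n.1 i : ℝ≥0∞) ^ q.get i)⁻¹

lemma G_nil (m : ℕ) : G [] m = 1 := by
  have hu : Unique {n : Fin ([] : List ℕ).length → ℕ // StrictMono n ∧ ∀ i, m < n i} := by
    refine ⟨⟨⟨fun i => i.elim0, ?_, fun i => i.elim0⟩⟩, ?_⟩
    · intro i; exact i.elim0
    · intro x; apply Subtype.ext; funext i; exact i.elim0
    
  rw [G, tsum_eq_single (hu.default)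
    (fun b hb => absurd (hu.uniq b) hb)]
  simp

lemma strictMono_cons {l : ℕ} (a : ℕ) (n : Fin l → ℕ) (h : StrictMono n)
    (ha : ∀ i, a < n i) : StrictMono (Fin.cons a n : Fin (l+1) → ℕ) := by
  intro i j hij
  induction j using Fin.cases with
  | zero => exact absurd hij (Fin.not_lt_zero _)
  | succ j' =>
    induction i using Fin.cases with
    | zero => simpa using ha j'
    | succ i' =>
      have : i' < j' := by rwa [Fin.succ_lt_succ_iff] at hij
      simpa using h this

lemma G_cons (a : ℕ) (q : List ℕ) (m : ℕ) :
    G (a :: q) m = ∑' k : ℕ, (((m + 1 + k : ℕ) : ℝ≥0∞) ^ a)⁻¹ * G q (m + 1 + k) := by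
  classical
  set A := {n : Fin (q.length + 1) → ℕ // StrictMono n ∧ ∀ i, m < n i} with hA
  set B := (Σ k : ℕ, {n : Fin q.length → ℕ // StrictMono n ∧ ∀ i, m + 1 + k < n i}) with hB
  have hf1 : ∀ p : B, StrictMono (Fin.cons (m + 1 + p.1) p.2.1 : Fin (q.length + 1) → ℕ) :=
    fun p => strictMono_cons _ _ p.2.2.1 (fun i => by have := p.2.2.2 i; omega)
  have hf2 : ∀ p : B, ∀ i, m < (Fin.cons (m + 1 + p.1) p.2.1 : Fin (q.length + 1) → ℕ) i := by
    intro p i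
    induction i using Fin.cases with
    | zero => simp only [Fin.cons_zero]; omega
    | succ i' => have := p.2.2.2 i'; simp only [Fin.cons_succ]; omega
  let f : B → A := fun p => ⟨Fin.cons (m + 1 + p.1) p.2.1, hf1 p, hf2 p⟩
  have hinj : Function.Injective f := by
    rintro ⟨k1, n1⟩ ⟨k2, n2⟩ h
    have h' := congrArg Subtype.val h
    simp only [f] at h'
    have hk : k1 = k2 := by
      have := congrFun h' 0
      simpa using this
    subst hk
    have hn : n1 = n2 := by
      apply Subtype.ext
      funext i
      have := congrFun h' i.succ
      simpa using this
    rw [hn]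
  have hsurj : Function.Surjective f := by
    rintro ⟨n, hmono, hbd⟩
    have hb0 : m < n 0 := hbd 0
    refine ⟨⟨n 0 - (m + 1), ⟨fun i => n i.succ,
      fun i j hij => hmono (Fin.succ_lt_succ_iff.mpr hij), fun i => ?_⟩⟩, ?_⟩
    · show m + 1 + (n 0 - (m + 1)) < n i.succ
      have h1 : n 0 < n i.succ := hmono (Fin.succ_pos i)
      omega
    · apply Subtype.ext
      funext i
      induction i using Fin.cases with
      | zero => simp [f]; omega
      | succ i' => simp [f]
  let e : B ≃ A := Equiv.ofBijective f ⟨hinj, hsurj⟩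
  let F : A → ℝ≥0∞ := fun n => ∏ i : Fin (q.length + 1), ((n.1 i : ℝ≥0∞) ^ (a :: q).get i)⁻¹
  have hG : G (a :: q) m = ∑' n : A, F n := rfl
  rw [hG, ← Equiv.tsum_eq e F, ENNReal.tsum_sigma']
  apply tsum_congr
  intro k
  rw [G, ← ENNReal.tsum_mul_left]
  apply tsum_congr
  intro n'
  have hFe : F (e ⟨k, n'⟩)
      = ∏ i : Fin (q.length + 1),
        (((Fin.cons (m + 1 + k) n'.1 : Fin (q.length + 1) → ℕ) i : ℝ≥0∞) ^ (a :: q).get i)⁻¹ :=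
    rfl
  rw [hFe, Fin.prod_univ_succ]
  simp

lemma R_replicate_append (w : List Bool) (m : ℕ) :
    ∀ j : ℕ, R (List.replicate j false ++ w) m = (((m : ℕ) : ℝ≥0∞))⁻¹ ^ j * R w m := by
  intro j
  induction j with
  | zero => simp
  | succ j ih =>
    rw [List.replicate_succ, List.cons_append]
    show ((m : ℕ) : ℝ≥0∞)⁻¹ * R (List.replicate j false ++ w) m = _
    rw [ih, pow_succ]
    ring

/-- word attached to an index, in the reading order of `R`. -/
def wordR (q : List ℕ) : List Bool := (q.map fun a => true :: List.replicate (a - 1) false).flatten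

lemma R_wordR (q : List ℕ) (hq : ∀ a ∈ q, 1 ≤ a) : ∀ m, R (wordR q) m = G q m := by
  induction q with
  | nil => intro m; rw [G_nil]; rfl
  | cons a q ih =>
    intro m
    have ha : 1 ≤ a := hq a List.mem_cons_self
    have hwr : wordR (a :: q) = true :: (List.replicate (a - 1) false ++ wordR q) := rfl
    rw [hwr, G_cons]
    show (∑' k : ℕ, ((m + 1 + k : ℕ) : ℝ≥0∞)⁻¹
        * R (List.replicate (a - 1) false ++ wordR q) (m + 1 + k)) = _
    apply tsum_congr
    intro k
    rw [R_replicate_append, ih (fun b hb => hq b (List.mem_cons_of_mem a hb))]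
    rw [← mul_assoc]
    congr 1
    rw [ENNReal.inv_pow, ← pow_succ']
    congr 1
    omega

/-- the `ℝ≥0∞`-valued multiple zeta value. -/
noncomputable def E (s : List ℕ) : ℝ≥0∞ :=
  ∑' n : {n : Fin s.length → ℕ // StrictAnti n ∧ ∀ i, 0 < n i},
    ∏ i, ((n.1 i : ℝ≥0∞) ^ s.get i)⁻¹

lemma G_zero_eq_E (q : List ℕ) : G q 0 = E q.reverse := by
  classical
  have hl : q.reverse.length = q.length := List.length_reverse
  set A := {n : Fin q.length → ℕ // StrictMono n ∧ ∀ i, 0 < n i} with hA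
  set Bt := {n : Fin q.reverse.length → ℕ // StrictAnti n ∧ ∀ i, 0 < n i} with hBt
  have hlt : ∀ {i j : Fin q.reverse.length}, i < j →
      ((Fin.cast hl j).rev : Fin q.length) < (Fin.cast hl i).rev := by
    intro i j hij
    have hi := i.isLt
    have hj := j.isLt
    simp only [Fin.lt_def, Fin.val_rev, Fin.coe_cast] at *
    omega
  have hlt2 : ∀ {i j : Fin q.length}, i < j →
      ((Fin.cast hl.symm j.rev) : Fin q.reverse.length) < Fin.cast hl.symm i.rev := by
    intro i j hij
    have hi := i.isLt
    have hj := j.isLt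
    simp only [Fin.lt_def, Fin.val_rev, Fin.coe_cast] at *
    omega
  let φ : A ≃ Bt := by
    refine ⟨fun n => ⟨fun j => n.1 ((Fin.cast hl j).rev), ?_, fun j => n.2.2 _⟩,
      fun n => ⟨fun i => n.1 (Fin.cast hl.symm i.rev), ?_, fun i => n.2.2 _⟩, ?_, ?_⟩
    · intro i j hij
      exact n.2.1 (hlt hij)
    · intro i j hij
      exact n.2.1 (hlt2 hij)
    · intro n
      apply Subtype.ext
      funext i
      show n.1 ((Fin.cast hl (Fin.cast hl.symm i.rev)).rev) = n.1 i
      refine congrArg n.1 (Fin.ext ?_)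
      have := i.isLt
      simp only [Fin.val_rev, Fin.coe_cast]
      omega
    · intro n
      apply Subtype.ext
      funext j
      show n.1 (Fin.cast hl.symm ((Fin.cast hl j).rev).rev) = n.1 j
      refine congrArg n.1 (Fin.ext ?_)
      have := j.isLt
      simp only [Fin.val_rev, Fin.coe_cast]
      omega
  have key := Equiv.tsum_eq φ
    (fun n : Bt => ∏ j, ((n.1 j : ℝ≥0∞) ^ q.reverse.get j)⁻¹)
  rw [E, ← key]
  apply tsum_congr
  intro n
  have hφ : ∀ j : Fin q.reverse.length, (φ n).1 j = n.1 ((Fin.cast hl j).rev) := fun j => rfl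
  let ψ : Fin q.length ≃ Fin q.reverse.length := by
    refine ⟨fun i => Fin.cast hl.symm i.rev, fun j => (Fin.cast hl j).rev, ?_, ?_⟩
    · intro i
      apply Fin.ext
      have := i.isLt
      simp only [Fin.val_rev, Fin.coe_cast]
      omega
    · intro j
      apply Fin.ext
      have := j.isLt
      simp only [Fin.val_rev, Fin.coe_cast]
      omega
  refine Fintype.prod_equiv ψ _ _ fun i => ?_
  have harg : ((Fin.cast hl (ψ i)).rev : Fin q.length) = i := by
    apply Fin.ext
    have := i.isLt
    simp only [ψ, Equiv.coe_fn_mk, Fin.val_rev, Fin.coe_cast]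
    omega
  rw [hφ, harg]
  congr 2
  rw [List.get_eq_getElem, List.get_eq_getElem, List.getElem_reverse]
  have hidx : q.length - 1 - ((ψ i : Fin q.reverse.length) : ℕ) = (i : ℕ) := by
    have := i.isLt
    simp only [ψ, Equiv.coe_fn_mk, Fin.val_rev, Fin.coe_cast]
    omega
  simp only [hidx]

lemma E_toReal (s : List ℕ) : (E s).toReal = mzv s := by
  rw [E, mzv, ENNReal.tsum_toReal_eq]
  · apply tsum_congr
    intro n
    rw [ENNReal.toReal_prod]
    apply Finset.prod_congr rfl
    intro i _
    rw [ENNReal.toReal_inv, ENNReal.toReal_pow, ENNReal.toReal_natCast]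
  · intro n
    apply ENNReal.prod_ne_top
    intro i _
    rw [Ne, ENNReal.inv_eq_top]
    exact pow_ne_zero _ (Nat.cast_ne_zero.mpr (n.2.2 i).ne')

/-- word attached to an index, in the standard order. -/
def wordOf (s : List ℕ) : List Bool :=
  (s.map fun a => List.replicate (a - 1) false ++ [true]).flatten

lemma wordOf_append (s1 s2 : List ℕ) : wordOf (s1 ++ s2) = wordOf s1 ++ wordOf s2 := by
  simp [wordOf]

lemma wordOf_flatten (L : List (List ℕ)) : wordOf L.flatten = (L.map wordOf).flatten := by
  induction L with
  | nil => rfl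
  | cons l L ih => rw [List.flatten_cons, wordOf_append, ih, List.map_cons, List.flatten_cons]

lemma wordOf_replicate_one (j : ℕ) : wordOf (List.replicate j 1) = List.replicate j true := by
  induction j with
  | zero => rfl
  | succ j ih =>
    rw [List.replicate_succ, List.replicate_succ]
    have : wordOf (1 :: List.replicate j 1) = [true] ++ wordOf (List.replicate j 1) := rfl
    rw [this, ih]
    rfl

lemma wordOf_block (a t : ℕ) (ht : 1 ≤ t) :
    wordOf ((a + 1) :: List.replicate (t - 1) 1)
      = List.replicate a false ++ List.replicate t true := by
  have h1 : wordOf ((a + 1) :: List.replicate (t - 1) 1)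
      = (List.replicate a false ++ [true]) ++ wordOf (List.replicate (t - 1) 1) := rfl
  rw [h1, wordOf_replicate_one, List.append_assoc, List.singleton_append,
    ← List.replicate_succ]
  congr 2
  omega

lemma wordOf_buildIndex {k : ℕ} (u t : Fin k → ℕ) (ht : ∀ i, 1 ≤ t i) :
    wordOf (buildIndex u t)
      = (List.ofFn fun i => List.replicate (u i) false ++ List.replicate (t i) true).flatten := by
  rw [buildIndex, wordOf_flatten, List.map_ofFn]
  exact congrArg List.flatten (congrArg List.ofFn (funext fun i => wordOf_block (u i) (t i) (ht i)))

lemma ofFn_reverse {α : Type*} {n : ℕ} (f : Fin n → α) :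
    (List.ofFn f).reverse = List.ofFn (fun i => f i.rev) := by
  apply List.ext_getElem
  · simp
  · intro i h1 h2
    rw [List.getElem_reverse]
    simp only [List.getElem_ofFn]
    congr 1
    apply Fin.ext
    simp only [Fin.val_rev]
    simp only [List.length_reverse, List.length_ofFn] at h1 h2 ⊢
    omega

lemma wordR_eq_reverse (s : List ℕ) : (wordOf s).reverse = wordR s.reverse := by
  rw [wordOf, wordR, List.reverse_flatten, List.map_map, ← List.map_reverse]
  have hfun : (List.reverse ∘ fun a : ℕ => List.replicate (a - 1) false ++ [true])
      = fun a : ℕ => true :: List.replicate (a - 1) false := by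
    funext a
    simp [Function.comp, List.reverse_append]
  rw [hfun]

lemma buildIndex_pos {k : ℕ} (u t : Fin k → ℕ) : ∀ a ∈ buildIndex u t, 1 ≤ a := by
  intro a ha
  rw [buildIndex, List.mem_flatten] at ha
  obtain ⟨l, hl, hal⟩ := ha
  rw [List.mem_ofFn] at hl
  obtain ⟨i, rfl⟩ := hl
  rcases List.mem_cons.mp hal with h | h
  · omega
  · rw [List.eq_of_mem_replicate h]

lemma word_dual {k : ℕ} (u t : Fin k → ℕ) (hu : ∀ i, 1 ≤ u i) (ht : ∀ i, 1 ≤ t i) :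
    (wordOf (buildIndex u t)).map Bool.not
      = (wordOf (buildIndex (fun i => t i.rev) (fun i => u i.rev))).reverse := by
  rw [wordOf_buildIndex u t ht, wordOf_buildIndex _ _ (fun i => hu i.rev)]
  rw [List.map_flatten, List.map_ofFn, List.reverse_flatten, List.map_ofFn, ofFn_reverse]
  refine congrArg List.flatten (congrArg List.ofFn (funext fun i => ?_))
  simp [Function.comp, Fin.rev_rev, List.reverse_append, List.reverse_replicate,
    List.map_append, List.map_replicate]

lemma E_dual {k : ℕ} (u t : Fin k → ℕ) (hu : ∀ i, 1 ≤ u i) (ht : ∀ i, 1 ≤ t i) :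
    E (buildIndex u t) = E (buildIndex (fun i => t i.rev) (fun i => u i.rev)) := by
  set s := buildIndex u t with hsdef
  set s' := buildIndex (fun i => t i.rev) (fun i => u i.rev) with hsdef'
  have hs : ∀ a ∈ s.reverse, 1 ≤ a := fun a ha => buildIndex_pos u t a (List.mem_reverse.mp ha)
  have hs' : ∀ a ∈ s'.reverse, 1 ≤ a := fun a ha => buildIndex_pos _ _ a (List.mem_reverse.mp ha)
  calc E s = G s.reverse 0 := by rw [G_zero_eq_E, List.reverse_reverse]
    _ = R (wordR s.reverse) 0 := (R_wordR _ hs 0).symm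
    _ = R ((wordOf s).reverse) 0 := by rw [wordR_eq_reverse]
    _ = R (((wordOf s).reverse).reverse.map Bool.not) 0 := R_duality _
    _ = R ((wordOf s).map Bool.not) 0 := by rw [List.reverse_reverse]
    _ = R ((wordOf s').reverse) 0 := by rw [word_dual u t hu ht]
    _ = R (wordR s'.reverse) 0 := by rw [wordR_eq_reverse]
    _ = G s'.reverse 0 := R_wordR _ hs' 0
    _ = E s' := by rw [G_zero_eq_E, List.reverse_reverse]

end MzvDual

/-- **Duality**: for every admissible index `s` (written in its unique block form
via positive integers `u_i`, `t_i`), one has `ζ(s) = ζ(s†)`, where the dual `s†`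
is obtained by swapping the roles of the `u_i` and `t_i` and reversing. -/
theorem mzv_duality (k : ℕ) (hk : 1 ≤ k) (u t : Fin k → ℕ)
    (hu : ∀ i, 1 ≤ u i) (ht : ∀ i, 1 ≤ t i) :
    mzv (buildIndex u t) =
      mzv (buildIndex (fun i => t i.rev) (fun i => u i.rev)) := by
  rw [← MzvDual.E_toReal, ← MzvDual.E_toReal, MzvDual.E_dual u t hu ht]
end

section
/- (Hoffman's relations) For every admissible index s = (s_1, …, s_l), one has Σ_{k=1}^{l} ζ(s_1, …, s_{k−1}, s_k+1, s_{k+1}, …, s_l) = Σ_{k=1, s_k ≥ 2}^{l} Σ_{j=0}^{s_k−2} ζ(s_1, …, s_{k−1}, s_k−j, j+1, s_{k+1}, …, s_l). -/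
open Finset

noncomputable def hsum (M : ℕ) : ℝ := ∑ n ∈ Finset.Icc 1 M, ((n : ℝ))⁻¹

noncomputable def HT : List ℕ → ℕ → ℝ
  | [], _ => 1
  | a :: v, M => ∑ n ∈ Finset.Icc 1 M, ((n : ℝ) ^ a)⁻¹ * HT v (n - 1)

noncomputable def A1 : List ℕ → ℕ → ℝ
  | [], _ => 0
  | a :: v, M =>
      ∑ n ∈ Finset.Icc 1 M, ((n : ℝ) ^ a)⁻¹ * HT v (n - 1) * (hsum M - hsum (M - n))

@[simp] lemma HT_nil (M : ℕ) : HT [] M = 1 := rfl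
lemma HT_cons (a : ℕ) (v : List ℕ) (M : ℕ) :
    HT (a :: v) M = ∑ n ∈ Finset.Icc 1 M, ((n : ℝ) ^ a)⁻¹ * HT v (n - 1) := rfl
@[simp] lemma A1_nil (M : ℕ) : A1 [] M = 0 := rfl
lemma A1_cons (a : ℕ) (v : List ℕ) (M : ℕ) :
    A1 (a :: v) M
      = ∑ n ∈ Finset.Icc 1 M, ((n : ℝ) ^ a)⁻¹ * HT v (n - 1) * (hsum M - hsum (M - n)) := rfl

lemma HT_nonneg (u : List ℕ) (M : ℕ) : 0 ≤ HT u M := by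
  induction u generalizing M with
  | nil => norm_num [HT]
  | cons a v ih =>
      rw [HT_cons]
      exact Finset.sum_nonneg fun n _ => mul_nonneg (by positivity) (ih _)

lemma HT_mono (u : List ℕ) : Monotone (HT u) := by
  cases u with
  | nil => exact monotone_const
  | cons a v =>
      intro M N hMN
      rw [HT_cons, HT_cons]
      apply Finset.sum_le_sum_of_subset_of_nonneg
      · exact Finset.Icc_subset_Icc_right hMN
      · intro n _ _
        exact mul_nonneg (by positivity) (HT_nonneg _ _)

lemma hsum_nonneg (M : ℕ) : 0 ≤ hsum M :=
  Finset.sum_nonneg fun n _ => by positivity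

lemma hsum_mono : Monotone hsum := by
  intro a b h
  exact Finset.sum_le_sum_of_subset_of_nonneg (Finset.Icc_subset_Icc_right h)
    (fun n _ _ => by positivity)

lemma hsum_add (K M : ℕ) (h : K ≤ M) :
    hsum M = hsum K + ∑ m ∈ Finset.Icc (K+1) M, ((m : ℝ))⁻¹ := by
  rw [hsum, hsum, ← Finset.sum_union]
  · congr 1
    ext x
    simp only [Finset.mem_union, Finset.mem_Icc]
    omega
  · rw [Finset.disjoint_left]
    intro x hx hx'
    simp only [Finset.mem_Icc] at hx hx'
    omega

lemma hsum_sub (K M : ℕ) (h : K ≤ M) :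
    hsum M - hsum K = ∑ m ∈ Finset.Icc (K+1) M, ((m : ℝ))⁻¹ := by
  rw [hsum_add K M h]; ring

lemma hsum_zero : hsum 0 = 0 := by simp [hsum]

lemma hsum_sub_self (n : ℕ) (h : 1 ≤ n) : hsum n - hsum (n-1) = (n : ℝ)⁻¹ := by
  rw [hsum_sub (n-1) n (by omega)]
  have : Finset.Icc (n-1+1) n = {n} := by
    ext x; simp only [Finset.mem_Icc, Finset.mem_singleton]; omega
  rw [this, Finset.sum_singleton]

lemma sum_inv_shift (m M : ℕ) :
    ∑ n ∈ Finset.Icc (m+1) M, (((n - m : ℕ) : ℝ))⁻¹ = hsum (M - m) := by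
  rw [hsum]
  apply Finset.sum_nbij' (i := fun n => n - m) (j := fun r => r + m)
  · intro a ha; simp only [Finset.mem_Icc] at *; omega
  · intro a ha; simp only [Finset.mem_Icc] at *; omega
  · intro a ha; simp only [Finset.mem_Icc] at ha; omega
  · intro a ha; simp only [Finset.mem_Icc] at ha; omega
  · intro a ha; rfl

lemma sum_inv_reflect (n c : ℕ) (hc : c < n) :
    ∑ m ∈ Finset.Icc 1 c, (((n - m : ℕ) : ℝ))⁻¹ = hsum (n-1) - hsum (n-1-c) := by
  rw [hsum_sub (n-1-c) (n-1) (by omega)]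
  apply Finset.sum_nbij' (i := fun m => n - m) (j := fun r => n - r)
  · intro a ha; simp only [Finset.mem_Icc] at *; omega
  · intro a ha; simp only [Finset.mem_Icc] at *; omega
  · intro a ha; simp only [Finset.mem_Icc] at ha; omega
  · intro a ha; simp only [Finset.mem_Icc] at ha; omega
  · intro a ha; rfl

lemma sum_inv_reflect_full (n : ℕ) (hn : 1 ≤ n) :
    ∑ m ∈ Finset.Icc 1 (n-1), (((n - m : ℕ) : ℝ))⁻¹ = hsum (n-1) := by
  rcases Nat.eq_or_lt_of_le hn with h | h
  · simp [← h, hsum_zero]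
  · rw [sum_inv_reflect n (n-1) (by omega)]
    simp [hsum_zero]

lemma sum_swap_lt (F : ℕ → ℕ → ℝ) (M : ℕ) :
    ∑ n ∈ Finset.Icc 1 M, ∑ m ∈ Finset.Icc 1 (n-1), F n m
      = ∑ m ∈ Finset.Icc 1 M, ∑ n ∈ Finset.Icc (m+1) M, F n m := by
  apply Finset.sum_comm'
  intro n m
  simp only [Finset.mem_Icc]
  omega

lemma telescope (a n m : ℕ) (hm : 1 ≤ m) (hmn : m < n) :
    (∑ p ∈ Finset.Icc 1 a, ((n:ℝ)^p)⁻¹ * ((m:ℝ)^(a+1-p))⁻¹) * ((n:ℝ) - (m:ℝ))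
      = ((m:ℝ)^a)⁻¹ - ((n:ℝ)^a)⁻¹ := by
  have hm0 : (0:ℝ) < (m:ℝ) := by exact_mod_cast Nat.lt_of_lt_of_le Nat.zero_lt_one hm
  have hn0 : (0:ℝ) < (n:ℝ) := by exact_mod_cast Nat.lt_of_lt_of_le (by omega) (le_refl n)
  rw [Finset.sum_mul]
  have hre : ∑ p ∈ Finset.Icc 1 a, ((n:ℝ)^p)⁻¹ * ((m:ℝ)^(a+1-p))⁻¹ * ((n:ℝ) - (m:ℝ))
      = ∑ i ∈ Finset.range a,
          ((n:ℝ)^(i+1))⁻¹ * ((m:ℝ)^(a-i))⁻¹ * ((n:ℝ) - (m:ℝ)) := by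
    apply Finset.sum_nbij' (i := fun p => p - 1) (j := fun i => i + 1)
    · intro p hp; simp only [Finset.mem_Icc, Finset.mem_range] at *; omega
    · intro i hi; simp only [Finset.mem_Icc, Finset.mem_range] at *; omega
    · intro p hp; simp only [Finset.mem_Icc] at hp; omega
    · intro i hi; omega
    · intro p hp
      simp only [Finset.mem_Icc] at hp
      have e1 : p - 1 + 1 = p := by omega
      have e2 : a - (p - 1) = a + 1 - p := by omega
      rw [e1, e2]
  rw [hre]
  have key : ∀ i ∈ Finset.range a,
      ((n:ℝ)^(i+1))⁻¹ * ((m:ℝ)^(a-i))⁻¹ * ((n:ℝ) - (m:ℝ))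
        = (fun i => ((n:ℝ)^i)⁻¹ * ((m:ℝ)^(a-i))⁻¹) i
          - (fun i => ((n:ℝ)^i)⁻¹ * ((m:ℝ)^(a-i))⁻¹) (i+1) := by
    intro i hi
    simp only [Finset.mem_range] at hi
    have h2 : a - i = (a - (i+1)) + 1 := by omega
    simp only []
    rw [h2, pow_succ, pow_succ]
    have hni : ((n:ℝ)^i) ≠ 0 := by positivity
    have hmi : ((m:ℝ)^(a-(i+1))) ≠ 0 := by positivity
    field_simp
  rw [Finset.sum_congr rfl key, Finset.sum_range_sub']
  simp

lemma Lf (a n m : ℕ) (hm : 1 ≤ m) (hmn : m < n) :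
    ∑ p ∈ Finset.Icc 1 a, ((n:ℝ)^p)⁻¹ * ((m:ℝ)^(a+1-p))⁻¹
      = (((m:ℝ)^a)⁻¹ - ((n:ℝ)^a)⁻¹) * (((n - m : ℕ):ℝ))⁻¹ := by
  have hcast : ((n - m : ℕ):ℝ) = (n:ℝ) - (m:ℝ) := by
    push_cast [Nat.cast_sub hmn.le]; ring
  have hne : (n:ℝ) - (m:ℝ) ≠ 0 := by
    have : (m:ℝ) < (n:ℝ) := by exact_mod_cast hmn
    linarith
  rw [hcast, eq_comm, mul_comm, inv_mul_eq_iff_eq_mul₀ hne, mul_comm]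
  exact (telescope a n m hm hmn).symm

lemma Lsplit (a n m : ℕ) (ha : 1 ≤ a) :
    ∑ j ∈ Finset.range (a-1), ((n:ℝ)^(a-j))⁻¹ * ((m:ℝ)^(j+1))⁻¹
      = (∑ p ∈ Finset.Icc 1 a, ((n:ℝ)^p)⁻¹ * ((m:ℝ)^(a+1-p))⁻¹)
        - (n:ℝ)⁻¹ * ((m:ℝ)^a)⁻¹ := by
  have h1 : Finset.Icc 1 a = insert 1 (Finset.Icc 2 a) := by
    ext x; simp only [Finset.mem_Icc, Finset.mem_insert]; omega
  rw [h1, Finset.sum_insert (by simp [Finset.mem_Icc])]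
  have h2 : a + 1 - 1 = a := by omega
  rw [h2, pow_one, add_sub_cancel_left]
  apply Finset.sum_nbij' (i := fun j => a - j) (j := fun p => a - p)
  · intro j hj; simp only [Finset.mem_range, Finset.mem_Icc] at *; omega
  · intro p hp; simp only [Finset.mem_range, Finset.mem_Icc] at *; omega
  · intro j hj; simp only [Finset.mem_range] at hj; omega
  · intro p hp; simp only [Finset.mem_Icc] at hp; omega
  · intro j hj
    simp only [Finset.mem_range] at hj
    have : a + 1 - (a - j) = j + 1 := by omega
    rw [this]

lemma Ldiamond (v : List ℕ) (n : ℕ) (hn : 1 ≤ n) :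
    ∑ m ∈ Finset.Icc 1 (n-1), (((n - m : ℕ):ℝ))⁻¹ * (HT v (n-1) - HT v (m-1))
      = A1 v (n-1) := by
  cases v with
  | nil => simp
  | cons b w =>
    have hdiff : ∀ m ∈ Finset.Icc 1 (n-1),
        (((n - m : ℕ):ℝ))⁻¹ * (HT (b::w) (n-1) - HT (b::w) (m-1))
          = ∑ c ∈ Finset.Icc m (n-1),
              (((n - m : ℕ):ℝ))⁻¹ * (((c:ℝ)^b)⁻¹ * HT w (c-1)) := by
      intro m hm
      simp only [Finset.mem_Icc] at hm
      rw [← Finset.mul_sum]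
      congr 1
      rw [HT_cons, HT_cons]
      have hu : Finset.Icc 1 (n-1) = Finset.Icc 1 (m-1) ∪ Finset.Icc m (n-1) := by
        ext x; simp only [Finset.mem_union, Finset.mem_Icc]; omega
      have hd : Disjoint (Finset.Icc 1 (m-1)) (Finset.Icc m (n-1)) := by
        rw [Finset.disjoint_left]
        intro x hx hx'
        simp only [Finset.mem_Icc] at hx hx'
        omega
      rw [hu, Finset.sum_union hd, add_sub_cancel_left]
    rw [Finset.sum_congr rfl hdiff]
    rw [Finset.sum_comm' (s' := fun c => Finset.Icc 1 c) (t' := Finset.Icc 1 (n-1))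
      (by intro m c; simp only [Finset.mem_Icc]; omega)]
    rw [A1_cons]
    apply Finset.sum_congr rfl
    intro c hc
    simp only [Finset.mem_Icc] at hc
    rw [← Finset.sum_mul, mul_comm, Finset.sum_congr rfl (fun m _ => rfl),
      sum_inv_reflect n c (by omega)]

lemma pull1 {L : ℕ} (S : Finset ℕ) (c : ℕ → ℝ) (G : Fin L → ℕ → ℝ) :
    ∑ x : Fin L, ∑ n ∈ S, c n * G x n = ∑ n ∈ S, c n * ∑ x : Fin L, G x n := by
  rw [Finset.sum_comm]
  exact Finset.sum_congr rfl fun n _ => (Finset.mul_sum _ _ _).symm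

lemma pull2 {L : ℕ} (S : Finset ℕ) (c : ℕ → ℝ) (r : Fin L → ℕ) (G : Fin L → ℕ → ℕ → ℝ) :
    ∑ x : Fin L, ∑ j ∈ Finset.range (r x), ∑ n ∈ S, c n * G x j n
      = ∑ n ∈ S, c n * ∑ x : Fin L, ∑ j ∈ Finset.range (r x), G x j n := by
  calc ∑ x : Fin L, ∑ j ∈ Finset.range (r x), ∑ n ∈ S, c n * G x j n
      = ∑ x : Fin L, ∑ n ∈ S, ∑ j ∈ Finset.range (r x), c n * G x j n :=
        Finset.sum_congr rfl fun x _ => Finset.sum_comm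
    _ = ∑ n ∈ S, ∑ x : Fin L, ∑ j ∈ Finset.range (r x), c n * G x j n := Finset.sum_comm
    _ = _ := Finset.sum_congr rfl fun n _ => by
          rw [Finset.mul_sum]
          exact Finset.sum_congr rfl fun x _ => (Finset.mul_sum _ _ _).symm

lemma star (a : ℕ) (ha : 1 ≤ a) (v : List ℕ) (M : ℕ) :
    HT ((a+1) :: v) M
      - (∑ j ∈ Finset.range (a-1), HT ((a-j) :: (j+1) :: v) M)
      + (∑ n ∈ Finset.Icc 1 M, ((n:ℝ)^a)⁻¹ * A1 v (n-1))
      = A1 (a :: v) M := by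
  have hS : ∑ j ∈ Finset.range (a-1), HT ((a-j) :: (j+1) :: v) M
      = (∑ n ∈ Finset.Icc 1 M, ∑ m ∈ Finset.Icc 1 (n-1),
          ((m:ℝ)^a)⁻¹ * (((n - m : ℕ):ℝ))⁻¹ * HT v (m-1))
        - (∑ n ∈ Finset.Icc 1 M, ∑ m ∈ Finset.Icc 1 (n-1),
          ((n:ℝ)^a)⁻¹ * ((((n - m : ℕ):ℝ))⁻¹ * HT v (m-1)))
        - (∑ n ∈ Finset.Icc 1 M, ∑ m ∈ Finset.Icc 1 (n-1),
          (n:ℝ)⁻¹ * (((m:ℝ)^a)⁻¹ * HT v (m-1))) := by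
    have e1 : ∑ j ∈ Finset.range (a-1), HT ((a-j) :: (j+1) :: v) M
        = ∑ n ∈ Finset.Icc 1 M, ∑ m ∈ Finset.Icc 1 (n-1),
            (∑ j ∈ Finset.range (a-1), ((n:ℝ)^(a-j))⁻¹ * ((m:ℝ)^(j+1))⁻¹)
              * HT v (m-1) := by
      have step1 : ∀ j, HT ((a-j) :: (j+1) :: v) M
          = ∑ n ∈ Finset.Icc 1 M, ∑ m ∈ Finset.Icc 1 (n-1),
              ((n:ℝ)^(a-j))⁻¹ * ((m:ℝ)^(j+1))⁻¹ * HT v (m-1) := by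
        intro j
        rw [HT_cons]
        apply Finset.sum_congr rfl
        intro n _
        rw [HT_cons, Finset.mul_sum]
        apply Finset.sum_congr rfl
        intro m _
        ring
      rw [Finset.sum_congr rfl (fun j _ => step1 j), Finset.sum_comm]
      apply Finset.sum_congr rfl
      intro n _
      rw [Finset.sum_comm, Finset.sum_congr rfl (fun m _ => (Finset.sum_mul _ _ _).symm)]
    rw [e1]
    have e2 : ∀ n ∈ Finset.Icc 1 M, ∀ m ∈ Finset.Icc 1 (n-1),
        (∑ j ∈ Finset.range (a-1), ((n:ℝ)^(a-j))⁻¹ * ((m:ℝ)^(j+1))⁻¹) * HT v (m-1)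
          = ((m:ℝ)^a)⁻¹ * (((n - m : ℕ):ℝ))⁻¹ * HT v (m-1)
            - ((n:ℝ)^a)⁻¹ * ((((n - m : ℕ):ℝ))⁻¹ * HT v (m-1))
            - (n:ℝ)⁻¹ * (((m:ℝ)^a)⁻¹ * HT v (m-1)) := by
      intro n hn m hm
      simp only [Finset.mem_Icc] at hn hm
      rw [Lsplit a n m ha, Lf a n m hm.1 (by omega)]
      ring
    calc ∑ n ∈ Finset.Icc 1 M, ∑ m ∈ Finset.Icc 1 (n-1),
          (∑ j ∈ Finset.range (a-1), ((n:ℝ)^(a-j))⁻¹ * ((m:ℝ)^(j+1))⁻¹) * HT v (m-1)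
        = ∑ n ∈ Finset.Icc 1 M, ∑ m ∈ Finset.Icc 1 (n-1),
            (((m:ℝ)^a)⁻¹ * (((n - m : ℕ):ℝ))⁻¹ * HT v (m-1)
              - ((n:ℝ)^a)⁻¹ * ((((n - m : ℕ):ℝ))⁻¹ * HT v (m-1))
              - (n:ℝ)⁻¹ * (((m:ℝ)^a)⁻¹ * HT v (m-1))) := by
          exact Finset.sum_congr rfl fun n hn =>
            Finset.sum_congr rfl fun m hm => e2 n hn m hm
      _ = _ := by
          simp only [Finset.sum_sub_distrib]
  -- Step 2: evaluate the two double sums needing order swap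
  have hD1 : ∑ n ∈ Finset.Icc 1 M, ∑ m ∈ Finset.Icc 1 (n-1),
        ((m:ℝ)^a)⁻¹ * (((n - m : ℕ):ℝ))⁻¹ * HT v (m-1)
      = ∑ n ∈ Finset.Icc 1 M, ((n:ℝ)^a)⁻¹ * HT v (n-1) * hsum (M-n) := by
    rw [sum_swap_lt]
    apply Finset.sum_congr rfl
    intro m hm
    calc ∑ n ∈ Finset.Icc (m+1) M, ((m:ℝ)^a)⁻¹ * (((n - m : ℕ):ℝ))⁻¹ * HT v (m-1)
        = (((m:ℝ)^a)⁻¹ * HT v (m-1)) * ∑ n ∈ Finset.Icc (m+1) M, (((n - m : ℕ):ℝ))⁻¹ := by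
          rw [Finset.mul_sum]
          exact Finset.sum_congr rfl fun n _ => by ring
      _ = ((m:ℝ)^a)⁻¹ * HT v (m-1) * hsum (M-m) := by rw [sum_inv_shift]
  have hD3 : ∑ n ∈ Finset.Icc 1 M, ∑ m ∈ Finset.Icc 1 (n-1),
        (n:ℝ)⁻¹ * (((m:ℝ)^a)⁻¹ * HT v (m-1))
      = ∑ n ∈ Finset.Icc 1 M, ((n:ℝ)^a)⁻¹ * HT v (n-1) * (hsum M - hsum n) := by
    rw [sum_swap_lt]
    apply Finset.sum_congr rfl
    intro m hm
    simp only [Finset.mem_Icc] at hm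
    calc ∑ n ∈ Finset.Icc (m+1) M, (n:ℝ)⁻¹ * (((m:ℝ)^a)⁻¹ * HT v (m-1))
        = (((m:ℝ)^a)⁻¹ * HT v (m-1)) * ∑ n ∈ Finset.Icc (m+1) M, (n:ℝ)⁻¹ := by
          rw [Finset.mul_sum]
          exact Finset.sum_congr rfl fun n _ => by ring
      _ = ((m:ℝ)^a)⁻¹ * HT v (m-1) * (hsum M - hsum m) := by
          rw [hsum_sub m M hm.2]
  rw [HT_cons, hS, hD1, hD3, A1_cons]
  -- Step 3: per-n identity and assembly
  have Hper : ∀ n ∈ Finset.Icc 1 M,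
      ((n:ℝ)^(a+1))⁻¹ * HT v (n-1)
        + ((∑ m ∈ Finset.Icc 1 (n-1),
            ((n:ℝ)^a)⁻¹ * ((((n - m : ℕ):ℝ))⁻¹ * HT v (m-1)))
          + (((n:ℝ)^a)⁻¹ * HT v (n-1) * (hsum M - hsum n)
            + ((n:ℝ)^a)⁻¹ * A1 v (n-1)))
      = ((n:ℝ)^a)⁻¹ * HT v (n-1) * hsum (M-n)
        + ((n:ℝ)^a)⁻¹ * HT v (n-1) * (hsum M - hsum (M-n)) := by
    intro n hn
    simp only [Finset.mem_Icc] at hn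
    have hn1 : 1 ≤ n := hn.1
    have hd := Ldiamond v n hn1
    have hrefl := sum_inv_reflect_full n hn1
    have hss := hsum_sub_self n hn1
    have hdia : ∑ m ∈ Finset.Icc 1 (n-1), (((n - m : ℕ):ℝ))⁻¹ * HT v (m-1)
        = hsum (n-1) * HT v (n-1) - A1 v (n-1) := by
      simp only [mul_sub] at hd
      rw [Finset.sum_sub_distrib, ← Finset.sum_mul, hrefl] at hd
      linarith
    rw [← Finset.mul_sum, hdia, pow_succ, mul_inv]
    linear_combination (-(((n:ℝ)^a)⁻¹ * HT v (n-1))) * hss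
  have HL : ∑ n ∈ Finset.Icc 1 M,
      (((n:ℝ)^(a+1))⁻¹ * HT v (n-1)
        + ((∑ m ∈ Finset.Icc 1 (n-1),
            ((n:ℝ)^a)⁻¹ * ((((n - m : ℕ):ℝ))⁻¹ * HT v (m-1)))
          + (((n:ℝ)^a)⁻¹ * HT v (n-1) * (hsum M - hsum n)
            + ((n:ℝ)^a)⁻¹ * A1 v (n-1))))
      = ∑ n ∈ Finset.Icc 1 M,
          (((n:ℝ)^a)⁻¹ * HT v (n-1) * hsum (M-n)
            + ((n:ℝ)^a)⁻¹ * HT v (n-1) * (hsum M - hsum (M-n))) :=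
    Finset.sum_congr rfl Hper
  simp only [Finset.sum_add_distrib] at HL
  linarith

set_option maxHeartbeats 1000000 in
lemma key (u : List ℕ) (hpos : ∀ x ∈ u, 1 ≤ x) (M : ℕ) :
    (∑ k : Fin u.length, HT (u.set k (u.get k + 1)) M)
      - ∑ k : Fin u.length, ∑ j ∈ Finset.range (u.get k - 1),
          HT (u.take k ++ [u.get k - j, j + 1] ++ u.drop (k + 1)) M
      = A1 u M := by
  induction u generalizing M with
  | nil => simp
  | cons a v ih =>
    have ha : 1 ≤ a := hpos a (by simp)
    have hposv : ∀ x ∈ v, 1 ≤ x := fun x hx => hpos x (by simp [hx])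
    simp only [List.length_cons]
    rw [Fin.sum_univ_succ, Fin.sum_univ_succ]
    simp only [Fin.val_zero, Fin.val_succ, List.get_eq_getElem, List.getElem_cons_zero,
      List.getElem_cons_succ, List.set_cons_succ, List.take_succ_cons, List.drop_succ_cons,
      List.take_zero, List.nil_append, List.cons_append, List.set_cons_zero, List.drop_zero]
    simp only [List.get_eq_getElem] at ih
    have h1 : ∑ x : Fin v.length, HT (a :: v.set (↑x) (v[(↑x : ℕ)] + 1)) M
        = ∑ n ∈ Finset.Icc 1 M, ((n:ℝ)^a)⁻¹
            * ∑ x : Fin v.length, HT (v.set (↑x) (v[(↑x : ℕ)] + 1)) (n-1) := by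
      simp only [HT_cons]
      refine pull1 _ _ _
    have h2 : ∑ x : Fin v.length, ∑ j ∈ Finset.range (v[(↑x : ℕ)] - 1),
          HT (a :: (List.take (↑x) v ++ [v[(↑x : ℕ)] - j, j + 1] ++ List.drop (↑x + 1) v)) M
        = ∑ n ∈ Finset.Icc 1 M, ((n:ℝ)^a)⁻¹
            * ∑ x : Fin v.length, ∑ j ∈ Finset.range (v[(↑x : ℕ)] - 1),
                HT (List.take (↑x) v ++ [v[(↑x : ℕ)] - j, j + 1] ++ List.drop (↑x + 1) v) (n-1) := by
      simp only [HT_cons]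
      refine pull2 _ _ _ _
    rw [h1, h2]
    have h4 : (∑ n ∈ Finset.Icc 1 M, ((n:ℝ)^a)⁻¹
            * ∑ x : Fin v.length, HT (v.set (↑x) (v[(↑x : ℕ)] + 1)) (n-1))
        - (∑ n ∈ Finset.Icc 1 M, ((n:ℝ)^a)⁻¹
            * ∑ x : Fin v.length, ∑ j ∈ Finset.range (v[(↑x : ℕ)] - 1),
                HT (List.take (↑x) v ++ [v[(↑x : ℕ)] - j, j + 1] ++ List.drop (↑x + 1) v) (n-1))
        = ∑ n ∈ Finset.Icc 1 M, ((n:ℝ)^a)⁻¹ * A1 v (n-1) := by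
      rw [← Finset.sum_sub_distrib]
      exact Finset.sum_congr rfl fun n _ => by rw [← mul_sub, ih hposv (n-1)]
    have h5 := star a ha v M
    linarith

open scoped Classical in
noncomputable def CF (L M : ℕ) : Finset (Fin L → ℕ) :=
  (Fintype.piFinset fun _ : Fin L => Finset.Icc 1 M).filter fun n => StrictAnti n

lemma mem_CF {L M : ℕ} {n : Fin L → ℕ} :
    n ∈ CF L M ↔ (∀ i, 1 ≤ n i ∧ n i ≤ M) ∧ StrictAnti n := by
  classical
  simp [CF, Fintype.mem_piFinset, Finset.mem_Icc]

lemma CF_zero_eq (M : ℕ) : CF 0 M = {fun i : Fin 0 => i.elim0} := by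
  ext f
  simp only [mem_CF, Finset.mem_singleton]
  constructor
  · intro _; funext i; exact i.elim0
  · intro _
    refine ⟨fun i => i.elim0, fun i j hij => i.elim0⟩

lemma sum_CF_succ (L M : ℕ) (F : (Fin (L+1) → ℕ) → ℝ) :
    ∑ c ∈ CF (L+1) M, F c
      = ∑ n ∈ Finset.Icc 1 M, ∑ t ∈ CF L (n-1), F (Fin.cons n t) := by
  rw [← Finset.sum_sigma (Finset.Icc 1 M) (fun n => CF L (n-1))
      (fun x => F (Fin.cons x.1 x.2))]
  symm
  apply Finset.sum_nbij' (i := fun x => Fin.cons x.1 x.2)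
    (j := fun c => (⟨c 0, Fin.tail c⟩ : Σ _ : ℕ, (Fin L → ℕ)))
  · rintro ⟨n, t⟩ hx
    simp only [Finset.mem_sigma, Finset.mem_Icc, mem_CF] at hx
    obtain ⟨⟨hn1, hnM⟩, ⟨hent, hanti⟩⟩ := hx
    rw [mem_CF]
    constructor
    · intro i
      refine Fin.cases ?_ ?_ i
      · simp only [Fin.cons_zero]
        exact ⟨hn1, hnM⟩
      · intro j
        simp only [Fin.cons_succ]
        exact ⟨(hent j).1, le_trans (hent j).2 (by omega)⟩
    · intro i j hij
      have hj : j ≠ 0 := by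
        intro h; rw [h] at hij; exact absurd hij (Fin.not_lt_zero i).elim
      obtain ⟨j', rfl⟩ := Fin.eq_succ_of_ne_zero hj
      rcases Fin.eq_zero_or_eq_succ i with rfl | ⟨i', rfl⟩
      · simp only [Fin.cons_succ, Fin.cons_zero]
        have := (hent j').2; omega
      · simp only [Fin.cons_succ]
        exact hanti (Fin.succ_lt_succ_iff.mp hij)
  · intro c hc
    rw [mem_CF] at hc
    obtain ⟨hent, hanti⟩ := hc
    simp only [Finset.mem_sigma, Finset.mem_Icc, mem_CF]
    refine ⟨⟨(hent 0).1, (hent 0).2⟩, ?_, ?_⟩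
    · intro i
      simp only [Fin.tail]
      refine ⟨(hent i.succ).1, ?_⟩
      have h1 : c i.succ < c 0 := hanti (Fin.succ_pos i)
      have h2 := (hent 0).1
      omega
    · exact hanti.comp_strictMono (Fin.strictMono_succ)
  · rintro ⟨n, t⟩ _
    simp only [Fin.cons_zero, Fin.tail_cons]
  · intro c _
    exact Fin.cons_self_tail c
  · rintro ⟨n, t⟩ _
    rfl

lemma HT_eq_sum (s : List ℕ) (M : ℕ) :
    HT s M = ∑ c ∈ CF s.length M, ∏ i, ((c i : ℝ) ^ s.get i)⁻¹ := by
  induction s generalizing M with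
  | nil =>
      have h : CF (List.length ([] : List ℕ)) M = {fun i : Fin 0 => i.elim0} := CF_zero_eq M
      rw [h, Finset.sum_singleton]
      simp
  | cons a v ih =>
      have h : ∑ c ∈ CF ((a :: v).length) M, ∏ i, ((c i : ℝ) ^ (a :: v).get i)⁻¹
          = ∑ n ∈ Finset.Icc 1 M, ∑ t ∈ CF v.length (n-1),
              ∏ i, (((Fin.cons n t : Fin (v.length+1) → ℕ) i : ℝ) ^ (a :: v).get i)⁻¹ :=
        sum_CF_succ v.length M _
      rw [h, HT_cons]
      apply Finset.sum_congr rfl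
      intro n _
      rw [ih, Finset.mul_sum]
      apply Finset.sum_congr rfl
      intro t _
      rw [Fin.prod_univ_succ]
      simp only [Fin.cons_zero, Fin.cons_succ, List.get_eq_getElem, List.getElem_cons_zero,
        List.getElem_cons_succ, Fin.val_succ, Fin.val_zero]

lemma hasSum_chains (s : List ℕ) (C : ℝ) (hC : ∀ M, HT s M ≤ C) :
    HasSum (fun c : {n : Fin s.length → ℕ // StrictAnti n ∧ ∀ i, 0 < n i} =>
        ∏ i, ((c.1 i : ℝ) ^ s.get i)⁻¹) (⨆ M, HT s M) := by
  have hbdd : BddAbove (Set.range fun M => HT s M) := by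
    refine ⟨C, ?_⟩
    rintro _ ⟨M, rfl⟩
    exact hC M
  have hnonneg : ∀ c : {n : Fin s.length → ℕ // StrictAnti n ∧ ∀ i, 0 < n i},
      0 ≤ ∏ i, ((c.1 i : ℝ) ^ s.get i)⁻¹ :=
    fun c => Finset.prod_nonneg fun i _ => by positivity
  apply hasSum_of_isLUB_of_nonneg _ hnonneg
  constructor
  · rintro _ ⟨fs, rfl⟩
    have hsub : fs.image Subtype.val ⊆ CF s.length (fs.sup fun c => Finset.univ.sup c.1) := by
      intro x hx
      rw [Finset.mem_image] at hx
      obtain ⟨c, hc, rfl⟩ := hx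
      rw [mem_CF]
      refine ⟨fun i => ⟨c.2.2 i, ?_⟩, c.2.1⟩
      exact le_trans (Finset.le_sup (Finset.mem_univ i))
        (Finset.le_sup (f := fun c => Finset.univ.sup c.1) hc)
    calc ∑ c ∈ fs, ∏ i, ((c.1 i : ℝ) ^ s.get i)⁻¹
        = ∑ x ∈ fs.image Subtype.val, ∏ i, ((x i : ℝ) ^ s.get i)⁻¹ := by
          rw [Finset.sum_image]
          intro x hx y hy hxy
          exact Subtype.ext hxy
      _ ≤ ∑ x ∈ CF s.length (fs.sup fun c => Finset.univ.sup c.1),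
            ∏ i, ((x i : ℝ) ^ s.get i)⁻¹ :=
          Finset.sum_le_sum_of_subset_of_nonneg hsub
            (fun x _ _ => Finset.prod_nonneg fun i _ => by positivity)
      _ = HT s (fs.sup fun c => Finset.univ.sup c.1) := (HT_eq_sum s _).symm
      _ ≤ ⨆ M, HT s M := le_ciSup hbdd _
  · intro b hb
    refine ciSup_le fun M => ?_
    have hemb : ∀ x : {x // x ∈ CF s.length M}, StrictAnti x.1 ∧ ∀ i, 0 < x.1 i := by
      intro x
      have := mem_CF.mp x.2
      exact ⟨this.2, fun i => (this.1 i).1⟩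
    have heq : HT s M
        = ∑ c ∈ (CF s.length M).attach.image
            (fun x => (⟨x.1, hemb x⟩ : {n : Fin s.length → ℕ // StrictAnti n ∧ ∀ i, 0 < n i})),
            ∏ i, ((c.1 i : ℝ) ^ s.get i)⁻¹ := by
      rw [Finset.sum_image (by intro x _ y _ hxy; exact Subtype.ext (by simpa using hxy))]
      rw [HT_eq_sum s M, ← Finset.sum_attach (CF s.length M) (fun x => ∏ i, ((x i : ℝ) ^ s.get i)⁻¹)]
    rw [heq]
    exact hb ⟨_, rfl⟩

lemma mzv_eq_iSup (s : List ℕ) (C : ℝ) (hC : ∀ M, HT s M ≤ C) :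
    mzv s = ⨆ M, HT s M :=
  (hasSum_chains s C hC).tsum_eq

lemma tendsto_HT_mzv (s : List ℕ) (C : ℝ) (hC : ∀ M, HT s M ≤ C) :
    Filter.Tendsto (HT s) Filter.atTop (nhds (mzv s)) := by
  rw [mzv_eq_iSup s C hC]
  exact tendsto_atTop_ciSup (HT_mono s) ⟨C, by rintro _ ⟨M, rfl⟩; exact hC M⟩

lemma hsum_succ (N : ℕ) : hsum (N+1) = hsum N + ((N+1 : ℕ) : ℝ)⁻¹ := by
  rw [hsum, hsum, Finset.sum_Icc_succ_top (by omega)]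

lemma one_add_log_nonneg (n : ℕ) : 0 ≤ 1 + Real.log n := by
  cases n with
  | zero => simp
  | succ m =>
      have : (0:ℝ) ≤ Real.log (m+1 : ℕ) :=
        Real.log_nonneg (by exact_mod_cast Nat.one_le_iff_ne_zero.mpr (by omega))
      linarith

lemma hsum_le_log (N : ℕ) : hsum N ≤ 1 + Real.log N := by
  induction N with
  | zero => simp [hsum_zero]
  | succ N ih =>
      rcases Nat.eq_zero_or_pos N with rfl | hN
      · norm_num [hsum_succ, hsum_zero]
      · rw [hsum_succ]
        have hlog : ((N+1 : ℕ) : ℝ)⁻¹ ≤ Real.log (N+1 : ℕ) - Real.log N := by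
          have hN0 : (0:ℝ) < (N:ℝ) := by exact_mod_cast hN
          have hN1 : (0:ℝ) < ((N+1 : ℕ):ℝ) := by positivity
          have hx : Real.log ((N:ℝ) / ((N+1:ℕ):ℝ)) ≤ (N:ℝ) / ((N+1:ℕ):ℝ) - 1 :=
            Real.log_le_sub_one_of_pos (by positivity)
          rw [Real.log_div (ne_of_gt hN0) (ne_of_gt hN1)] at hx
          have he : (N:ℝ) / ((N+1:ℕ):ℝ) - 1 = -(((N+1:ℕ):ℝ))⁻¹ := by
            field_simp
            push_cast; ring
          rw [he] at hx
          linarith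
        have hcast : ((N+1 : ℕ) : ℝ) = ((N:ℝ) + 1) := by push_cast; ring
        calc hsum N + ((N+1 : ℕ) : ℝ)⁻¹ ≤ (1 + Real.log N) + (Real.log (N+1:ℕ) - Real.log N) := by
              linarith
          _ = 1 + Real.log ((N+1 : ℕ) : ℝ) := by ring
          _ = 1 + Real.log (((N:ℕ) + 1 : ℕ) : ℝ) := by norm_num

lemma HT_le_pow (v : List ℕ) (hv : ∀ x ∈ v, 1 ≤ x) (N : ℕ) :
    HT v N ≤ hsum N ^ v.length := by
  induction v generalizing N with
  | nil => simp
  | cons b w ih =>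
      have hb : 1 ≤ b := hv b (by simp)
      have hw : ∀ x ∈ w, 1 ≤ x := fun x hx => hv x (by simp [hx])
      rw [HT_cons, List.length_cons, pow_succ']
      have hle : ∀ n ∈ Finset.Icc 1 N,
          ((n:ℝ)^b)⁻¹ * HT w (n-1) ≤ (n:ℝ)⁻¹ * hsum N ^ w.length := by
        intro n hn
        simp only [Finset.mem_Icc] at hn
        have hn1 : (1:ℝ) ≤ (n:ℝ) := by exact_mod_cast hn.1
        have h1 : ((n:ℝ)^b)⁻¹ ≤ (n:ℝ)⁻¹ := by
          rw [← pow_one (n:ℝ)⁻¹, ← inv_pow]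
          exact pow_le_pow_of_le_one (by positivity) (inv_le_one_of_one_le₀ hn1) hb
        have h2 : HT w (n-1) ≤ hsum N ^ w.length :=
          le_trans (ih hw (n-1))
            (pow_le_pow_left₀ (hsum_nonneg _) (hsum_mono (by omega)) _)
        exact mul_le_mul h1 h2 (HT_nonneg _ _) (by positivity)
      calc ∑ n ∈ Finset.Icc 1 N, ((n:ℝ)^b)⁻¹ * HT w (n-1)
          ≤ ∑ n ∈ Finset.Icc 1 N, (n:ℝ)⁻¹ * hsum N ^ w.length := Finset.sum_le_sum hle
        _ = hsum N * hsum N ^ w.length := by rw [← Finset.sum_mul, hsum]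

lemma log_pow_le (p n : ℕ) (hn : 1 ≤ n) :
    (1 + Real.log n)^p ≤ ((2*(p+1) : ℕ):ℝ)^p * ((n:ℝ) ^ ((1:ℝ)/2)) := by
  set q : ℕ := p + 1
  have hn0 : (0:ℝ) < (n:ℝ) := by exact_mod_cast hn
  have hn1 : (1:ℝ) ≤ (n:ℝ) := by exact_mod_cast hn
  set δ : ℝ := 1 / (2*q) with hδ
  have hq0 : (0:ℝ) < (2*q : ℕ) := by positivity
  have hδ0 : 0 < δ := by positivity
  -- 1 + log n ≤ 2q * n^δ
  have hlog : 1 + Real.log n ≤ ((2*q : ℕ):ℝ) * (n:ℝ)^δ := by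
    have h1 : Real.log ((n:ℝ)^δ) ≤ (n:ℝ)^δ - 1 :=
      Real.log_le_sub_one_of_pos (Real.rpow_pos_of_pos hn0 δ)
    have h2 : Real.log ((n:ℝ)^δ) = δ * Real.log n := Real.log_rpow hn0 δ
    have h3 : Real.log n = ((2*q:ℕ):ℝ) * (δ * Real.log n) := by
      rw [hδ]; field_simp
      push_cast
      rw [mul_div_assoc, mul_div_cancel_right₀ _ (Nat.cast_ne_zero.mpr (Nat.succ_ne_zero p) : (q:ℝ) ≠ 0)]
    have h4 : ((2*q:ℕ):ℝ) * (δ * Real.log n) ≤ ((2*q:ℕ):ℝ) * ((n:ℝ)^δ - 1) := by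
      apply mul_le_mul_of_nonneg_left _ (le_of_lt hq0)
      rw [← h2]; exact h1
    have h5 : (1:ℝ) ≤ ((2*q:ℕ):ℝ) := by
      have : (1:ℕ) ≤ 2*q := by omega
      exact_mod_cast this
    nlinarith [h3, h4]
  have hbase : 0 ≤ 1 + Real.log n := one_add_log_nonneg n
  calc (1 + Real.log n)^p ≤ (((2*q : ℕ):ℝ) * (n:ℝ)^δ)^p := pow_le_pow_left₀ hbase hlog p
    _ = ((2*q : ℕ):ℝ)^p * ((n:ℝ)^δ)^p := mul_pow _ _ _
    _ = ((2*q : ℕ):ℝ)^p * (n:ℝ)^(δ * p) := by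
        rw [← Real.rpow_natCast ((n:ℝ)^δ) p, ← Real.rpow_mul (le_of_lt hn0)]
    _ ≤ ((2*q : ℕ):ℝ)^p * (n:ℝ)^((1:ℝ)/2) := by
        apply mul_le_mul_of_nonneg_left _ (by positivity)
        apply Real.rpow_le_rpow_of_exponent_le hn1
        rw [hδ]
        rw [div_mul_eq_mul_div, one_mul, div_le_div_iff₀ (by positivity) (by norm_num)]
        push_cast
        nlinarith [show (q:ℝ) = (p:ℝ) + 1 by simp [q]]
  
lemma summable_bnd (p : ℕ) :
    Summable (fun n : ℕ => ((n:ℝ)^2)⁻¹ * (1 + Real.log n)^p) := by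
  have h32 : Summable (fun n : ℕ => ((n:ℝ) ^ ((3:ℝ)/2))⁻¹) :=
    Real.summable_nat_rpow_inv.mpr (by norm_num)
  apply Summable.of_nonneg_of_le
    (fun n => mul_nonneg (by positivity) (pow_nonneg (one_add_log_nonneg n) p))
    (fun n => ?_) (h32.mul_left (((2*(p+1) : ℕ):ℝ)^p))
  rcases Nat.eq_zero_or_pos n with rfl | hn
  · simp
  · have hn0 : (0:ℝ) < (n:ℝ) := by exact_mod_cast hn
    have key := log_pow_le p n hn
    have h2 : ((n:ℝ)^2)⁻¹ * (1 + Real.log n)^p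
        ≤ ((n:ℝ)^2)⁻¹ * (((2*(p+1) : ℕ):ℝ)^p * ((n:ℝ) ^ ((1:ℝ)/2))) :=
      mul_le_mul_of_nonneg_left key (by positivity)
    refine le_trans h2 (le_of_eq ?_)
    rw [← Real.rpow_natCast (n:ℝ) 2]
    rw [← Real.rpow_neg (le_of_lt hn0) ((3:ℝ)/2)]
    rw [← Real.rpow_neg (le_of_lt hn0) ((2:ℕ):ℝ)]
    rw [mul_comm (((n:ℝ))^(-((2:ℕ):ℝ))) _, mul_assoc]
    congr 1
    rw [← Real.rpow_add hn0]
    norm_num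

lemma hsum_window_le_hsum (n M : ℕ) (h : n ≤ M) : hsum M - hsum (M-n) ≤ hsum n := by
  rw [hsum_sub (M-n) M (by omega)]
  have he : ∑ m ∈ Finset.Icc (M-n+1) M, ((m:ℝ))⁻¹
      = ∑ r ∈ Finset.Icc 1 n, (((r + (M-n) : ℕ)):ℝ)⁻¹ := by
    apply Finset.sum_nbij' (i := fun m => m - (M-n)) (j := fun r => r + (M-n))
    · intro x hx; simp only [Finset.mem_Icc] at *; omega
    · intro x hx; simp only [Finset.mem_Icc] at *; omega
    · intro x hx; simp only [Finset.mem_Icc] at hx; omega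
    · intro x hx; simp only [Finset.mem_Icc] at hx; omega
    · intro x hx
      simp only [Finset.mem_Icc] at hx
      have hxx : x - (M-n) + (M-n) = x := by omega
      rw [hxx]
  rw [he, hsum]
  apply Finset.sum_le_sum
  intro r hr
  simp only [Finset.mem_Icc] at hr
  apply inv_anti₀ (by exact_mod_cast hr.1)
  exact_mod_cast Nat.le_add_right r (M-n)

lemma hsum_window_le_frac (n M : ℕ) (h : n ≤ M) :
    hsum M - hsum (M-n) ≤ (n:ℝ) * (((M-n+1 : ℕ)):ℝ)⁻¹ := by
  rw [hsum_sub (M-n) M (by omega)]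
  have hcard : (Finset.Icc (M-n+1) M).card = n := by
    rw [Nat.card_Icc]; omega
  calc ∑ m ∈ Finset.Icc (M-n+1) M, ((m:ℝ))⁻¹
      ≤ (Finset.Icc (M-n+1) M).card • (((M-n+1 : ℕ)):ℝ)⁻¹ := by
        apply Finset.sum_le_card_nsmul
        intro x hx
        simp only [Finset.mem_Icc] at hx
        apply inv_anti₀ (by positivity)
        exact_mod_cast hx.1
    _ = (n:ℝ) * (((M-n+1 : ℕ)):ℝ)⁻¹ := by rw [hcard, nsmul_eq_mul]

lemma HT_term_le (a : ℕ) (ha : 2 ≤ a) (v : List ℕ) (hv : ∀ x ∈ v, 1 ≤ x)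
    (n : ℕ) (hn : 1 ≤ n) :
    ((n:ℝ)^a)⁻¹ * HT v (n-1) ≤ ((n:ℝ)^2)⁻¹ * (1 + Real.log n)^(v.length) := by
  have hn1 : (1:ℝ) ≤ (n:ℝ) := by exact_mod_cast hn
  have h1 : ((n:ℝ)^a)⁻¹ ≤ ((n:ℝ)^2)⁻¹ := by
    rw [← inv_pow, ← inv_pow]
    exact pow_le_pow_of_le_one (by positivity) (inv_le_one_of_one_le₀ hn1) ha
  have h2 : HT v (n-1) ≤ (1 + Real.log n)^(v.length) := by
    refine le_trans (HT_le_pow v hv (n-1)) (pow_le_pow_left₀ (hsum_nonneg _) ?_ _)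
    exact le_trans (hsum_mono (by omega)) (hsum_le_log n)
  exact mul_le_mul h1 h2 (HT_nonneg _ _) (by positivity)

lemma HT_bounded (a : ℕ) (ha : 2 ≤ a) (v : List ℕ) (hv : ∀ x ∈ v, 1 ≤ x) :
    ∀ M, HT (a :: v) M ≤ ∑' n : ℕ, ((n:ℝ)^2)⁻¹ * (1 + Real.log n)^(v.length) := by
  intro M
  rw [HT_cons]
  calc ∑ n ∈ Finset.Icc 1 M, ((n:ℝ)^a)⁻¹ * HT v (n-1)
      ≤ ∑ n ∈ Finset.Icc 1 M, ((n:ℝ)^2)⁻¹ * (1 + Real.log n)^(v.length) := by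
        apply Finset.sum_le_sum
        intro n hn
        simp only [Finset.mem_Icc] at hn
        exact HT_term_le a ha v hv n hn.1
    _ ≤ ∑' n : ℕ, ((n:ℝ)^2)⁻¹ * (1 + Real.log n)^(v.length) := by
        apply Summable.sum_le_tsum
        · intro n _
          exact mul_nonneg (by positivity) (pow_nonneg (one_add_log_nonneg n) _)
        · exact summable_bnd v.length

lemma A1_tendsto_zero (a : ℕ) (ha : 2 ≤ a) (v : List ℕ) (hv : ∀ x ∈ v, 1 ≤ x) :
    Filter.Tendsto (fun M => A1 (a :: v) M) Filter.atTop (nhds 0) := by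
  classical
  set p : ℕ := v.length + 1 with hp
  set bnd : ℕ → ℝ := fun n => ((n:ℝ)^2)⁻¹ * (1 + Real.log n)^p with hbnd
  set g : ℕ → ℕ → ℝ := fun M n =>
    if n ∈ Finset.Icc 1 M then ((n:ℝ)^a)⁻¹ * HT v (n-1) * (hsum M - hsum (M-n)) else 0
    with hg
  have hA : ∀ M, A1 (a :: v) M = ∑' n, g M n := by
    intro M
    rw [A1_cons]
    rw [tsum_eq_sum (s := Finset.Icc 1 M) (fun n hn => if_neg hn)]
    exact Finset.sum_congr rfl fun n hn => (if_pos hn).symm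
  have hg0 : ∀ n, Filter.Tendsto (fun M => g M n) Filter.atTop (nhds 0) := by
    intro n
    rcases Nat.eq_zero_or_pos n with rfl | hn
    · have : (fun M => g M 0) = fun _ => 0 := by
        funext M
        exact if_neg (by simp)
      rw [this]
      exact tendsto_const_nhds
    · have hdiff : Filter.Tendsto (fun M => hsum M - hsum (M-n)) Filter.atTop (nhds 0) := by
        have hup : Filter.Tendsto (fun M : ℕ => (n:ℝ) * (((M-n+1 : ℕ)):ℝ)⁻¹)
            Filter.atTop (nhds 0) := by
          have h1 : Filter.Tendsto (fun M : ℕ => M - n + 1) Filter.atTop Filter.atTop :=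
            Filter.tendsto_atTop_atTop.mpr (fun b => ⟨b + n, fun x hx => by omega⟩)
          have h2 : Filter.Tendsto (fun M : ℕ => (((M-n+1 : ℕ)):ℝ)) Filter.atTop Filter.atTop :=
            tendsto_natCast_atTop_atTop.comp h1
          have h3 := h2.inv_tendsto_atTop
          have h4 := h3.const_mul (n:ℝ)
          simpa using h4
        apply tendsto_of_tendsto_of_tendsto_of_le_of_le' tendsto_const_nhds hup
        · filter_upwards with M
          have := hsum_mono (Nat.sub_le M n)
          linarith
        · filter_upwards [Filter.eventually_atTop.mpr ⟨n, fun M hM => hM⟩] with M hM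
          exact hsum_window_le_frac n M hM
      have hc : Filter.Tendsto
          (fun M => ((n:ℝ)^a)⁻¹ * HT v (n-1) * (hsum M - hsum (M-n)))
          Filter.atTop (nhds 0) := by
        have := hdiff.const_mul (((n:ℝ)^a)⁻¹ * HT v (n-1))
        simpa using this
      apply hc.congr'
      filter_upwards [Filter.eventually_atTop.mpr ⟨n, fun M (hM : n ≤ M) => hM⟩] with M hM
      exact (if_pos (Finset.mem_Icc.mpr ⟨hn, hM⟩)).symm
  have hbound : ∀ᶠ M in Filter.atTop, ∀ n, ‖g M n‖ ≤ bnd n := by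
    filter_upwards with M n
    by_cases hmem : n ∈ Finset.Icc 1 M
    · simp only [hg, if_pos hmem]
      simp only [Finset.mem_Icc] at hmem
      have hwin_nonneg : 0 ≤ hsum M - hsum (M-n) := by
        have := hsum_mono (Nat.sub_le M n); linarith
      have hterm_nonneg : 0 ≤ ((n:ℝ)^a)⁻¹ * HT v (n-1) :=
        mul_nonneg (by positivity) (HT_nonneg _ _)
      rw [Real.norm_eq_abs, abs_of_nonneg (mul_nonneg hterm_nonneg hwin_nonneg)]
      have h1 : ((n:ℝ)^a)⁻¹ * HT v (n-1) ≤ ((n:ℝ)^2)⁻¹ * (1 + Real.log n)^(v.length) :=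
        HT_term_le a ha v hv n hmem.1
      have h2 : hsum M - hsum (M-n) ≤ 1 + Real.log n :=
        le_trans (hsum_window_le_hsum n M hmem.2) (hsum_le_log n)
      calc ((n:ℝ)^a)⁻¹ * HT v (n-1) * (hsum M - hsum (M-n))
          ≤ (((n:ℝ)^2)⁻¹ * (1 + Real.log n)^(v.length)) * (1 + Real.log n) :=
            mul_le_mul h1 h2 hwin_nonneg
              (mul_nonneg (by positivity) (pow_nonneg (one_add_log_nonneg n) _))
        _ = bnd n := by rw [hbnd, hp, pow_succ]; ring
    · simp only [hg, if_neg hmem, norm_zero]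
      exact mul_nonneg (by positivity) (pow_nonneg (one_add_log_nonneg n) _)
  have hmain := tendsto_tsum_of_dominated_convergence (𝓕 := Filter.atTop)
    (f := g) (g := fun _ => (0:ℝ)) (bound := bnd) (summable_bnd p) hg0 hbound
  rw [tsum_zero] at hmain
  apply hmain.congr
  intro M
  exact (hA M).symm

lemma tendsto_HT_mzv' (t : List ℕ) (ht : t ≠ []) (hh : 2 ≤ t.headI)
    (hp : ∀ x ∈ t, 1 ≤ x) :
    Filter.Tendsto (HT t) Filter.atTop (nhds (mzv t)) := by
  obtain ⟨b, w, rfl⟩ : ∃ b w, t = b :: w := by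
    cases t with
    | nil => exact absurd rfl ht
    | cons b w => exact ⟨b, w, rfl⟩
  simp only [List.headI_cons] at hh
  exact tendsto_HT_mzv _ _ (HT_bounded b hh w (fun x hx => hp x (by simp [hx])))

/-- **Hoffman's relations**: for an admissible index `s = (s_1, …, s_l)` (head
`≥ 2`, all entries positive),
`Σ_k ζ(s_1, …, s_k + 1, …, s_l)
  = Σ_{k, s_k ≥ 2} Σ_{j=0}^{s_k-2} ζ(s_1, …, s_{k-1}, s_k - j, j+1, s_{k+1}, …, s_l)`.
(On the right the inner range over `j` is empty whenever `s_k = 1`.) -/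
theorem hoffman_relations (s : List ℕ) (hne : s ≠ [])
    (hadm : 2 ≤ s.headI) (hpos : ∀ x ∈ s, 1 ≤ x) :
    ∑ k : Fin s.length, mzv (s.set k (s.get k + 1)) =
      ∑ k : Fin s.length, ∑ j ∈ Finset.range (s.get k - 1),
        mzv (s.take k ++ [s.get k - j, j + 1] ++ s.drop (k + 1)) := by
  obtain ⟨a, v, rfl⟩ : ∃ a v, s = a :: v := by
    cases s with
    | nil => exact absurd rfl hne
    | cons a v => exact ⟨a, v, rfl⟩
  simp only [List.headI_cons] at hadm
  set s := a :: v with hs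
  -- convergence of each bump term
  have hbump : ∀ k : Fin s.length,
      Filter.Tendsto (HT (s.set k (s.get k + 1))) Filter.atTop
        (nhds (mzv (s.set k (s.get k + 1)))) := by
    intro k
    apply tendsto_HT_mzv'
    · intro h
      have := congrArg List.length h
      simp [hs] at this
    · rcases k with ⟨kv, hk⟩
      cases kv with
      | zero =>
          show 2 ≤ ((a::v).set 0 ((a::v).get ⟨0, hk⟩ + 1)).headI
          simp only [List.set_cons_zero, List.headI_cons, List.get_eq_getElem,
            List.getElem_cons_zero]
          omega
      | succ m =>
          show 2 ≤ ((a::v).set (m+1) ((a::v).get ⟨m+1, hk⟩ + 1)).headI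
          simp only [List.set_cons_succ, List.headI_cons]
          exact hadm
    · intro x hx
      rcases List.mem_or_eq_of_mem_set hx with h | h
      · exact hpos x h
      · omega
  -- convergence of each split term
  have hsplit : ∀ k : Fin s.length, ∀ j ∈ Finset.range (s.get k - 1),
      Filter.Tendsto (HT (s.take k ++ [s.get k - j, j + 1] ++ s.drop (k + 1)))
        Filter.atTop
        (nhds (mzv (s.take k ++ [s.get k - j, j + 1] ++ s.drop (k + 1)))) := by
    intro k j hj
    simp only [Finset.mem_range] at hj
    have hgetpos : 1 ≤ s.get k := hpos _ (List.get_mem s k)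
    apply tendsto_HT_mzv'
    · simp
    · rcases k with ⟨kv, hk⟩
      cases kv with
      | zero =>
          simp only [hs, List.take_zero, List.nil_append, List.cons_append,
            List.headI_cons]
          simp only [hs, List.get_eq_getElem, List.getElem_cons_zero] at hj ⊢
          omega
      | succ m =>
          simp only [hs, List.take_succ_cons, List.cons_append, List.headI_cons]
          exact hadm
    · intro x hx
      have hx' : x ∈ s.take ↑k ∨ x = s.get k - j ∨ x = j + 1 ∨ x ∈ s.drop (↑k+1) := by
        simp only [List.mem_append, List.mem_cons, List.not_mem_nil, or_false] at hx
        tauto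
      rcases hx' with h | h | h | h
      · exact hpos x (List.take_subset _ _ h)
      · omega
      · omega
      · exact hpos x (List.drop_subset _ _ h)
  have h1 : Filter.Tendsto (fun M => ∑ k : Fin s.length, HT (s.set k (s.get k + 1)) M)
      Filter.atTop (nhds (∑ k : Fin s.length, mzv (s.set k (s.get k + 1)))) :=
    tendsto_finset_sum _ (fun k _ => hbump k)
  have h2 : Filter.Tendsto
      (fun M => ∑ k : Fin s.length, ∑ j ∈ Finset.range (s.get k - 1),
        HT (s.take k ++ [s.get k - j, j + 1] ++ s.drop (k + 1)) M)
      Filter.atTop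
      (nhds (∑ k : Fin s.length, ∑ j ∈ Finset.range (s.get k - 1),
        mzv (s.take k ++ [s.get k - j, j + 1] ++ s.drop (k + 1)))) :=
    tendsto_finset_sum _ (fun k _ => tendsto_finset_sum _ (fun j hj => hsplit k j hj))
  have h3 := h1.sub h2
  have h4 : Filter.Tendsto
      (fun M => (∑ k : Fin s.length, HT (s.set k (s.get k + 1)) M)
        - ∑ k : Fin s.length, ∑ j ∈ Finset.range (s.get k - 1),
            HT (s.take k ++ [s.get k - j, j + 1] ++ s.drop (k + 1)) M)
      Filter.atTop (nhds 0) := by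
    have hA := A1_tendsto_zero a hadm v (fun x hx => hpos x (by simp [hs, hx]))
    apply hA.congr
    intro M
    exact (key s hpos M).symm
  have h5 := tendsto_nhds_unique h3 h4
  linarith
end

section
/- (Shuffle product in length 1) For all integers s, t ≥ 2, one has ζ(s)·ζ(t) = Σ_{j=2}^{s+t−1} (C(j−1, s−1) + C(j−1, t−1)) · ζ(j, s+t−j), where C(a,b) denotes the binomial coefficient (the term j = 1 may be included with coefficient C(0,s−1)+C(0,t−1) = 0 since s, t ≥ 2). -/
open Finset

/-! ### The polynomial partial-fraction identity -/

private lemma baseId (a b : ℝ) : ∀ s : ℕ,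
    (a+b)^(s+1) = (∑ i ∈ range (s+1), a^i * b * (a+b)^(s-i)) + a^(s+1) := by
  intro s
  induction s with
  | zero => simp; ring
  | succ s ih =>
    have h1 : (a+b)^(s+1+1) = a*((a+b)^(s+1)) + b*(a+b)^(s+1) := by ring
    rw [h1]; nth_rewrite 1 [ih]
    rw [mul_add, Finset.mul_sum]
    rw [Finset.sum_range_succ' (fun i => a^i * b * (a+b)^(s+1-i)) (s+1)]
    simp only [Nat.succ_sub_succ, pow_zero, Nat.sub_zero]
    have h2 : ∀ i ∈ range (s+1), a * (a^i * b * (a+b)^(s-i)) = a^(i+1) * b * (a+b)^(s-i) := by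
      intro i _; ring
    rw [Finset.sum_congr rfl h2]
    ring

private theorem polyId (a b : ℝ) : ∀ s t : ℕ,
    (a+b)^(s+t+1) =
      (∑ i ∈ range (s+1), ((t+i).choose i : ℝ) * (a^i * b^(t+1) * (a+b)^(s-i)))
      + ∑ i ∈ range (t+1), ((s+i).choose i : ℝ) * (a^(s+1) * b^i * (a+b)^(t-i)) := by
  intro s
  induction s with
  | zero =>
    intro t
    have hb := baseId b a t
    rw [add_comm b a] at hb
    simp only [Nat.zero_add, Nat.choose_self, Nat.cast_one, one_mul, Finset.sum_range_one,
      Nat.choose_zero_right, pow_zero, Nat.sub_zero, Nat.sub_self, zero_add]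
    rw [hb]
    have : ∀ i ∈ range (t+1), b^i * a * (a+b)^(t-i) = a^1 * b^i * (a+b)^(t-i) := by
      intro i _; ring
    rw [Finset.sum_congr rfl this]
    ring
  | succ s ihs =>
    intro t
    induction t with
    | zero =>
      have hb := baseId a b (s+1)
      simp only [Nat.zero_add, Nat.choose_self, Nat.cast_one, one_mul, Finset.sum_range_one,
        Nat.choose_zero_right, pow_zero, Nat.sub_zero, Nat.sub_self, zero_add, add_zero]
      rw [hb]
      have : ∀ i ∈ range (s+1+1), a^i * b * (a+b)^(s+1-i) = a^i * b^(0+1) * (a+b)^(s+1-i) := by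
        intro i _; ring
      rw [Finset.sum_congr rfl this]
      ring
    | succ t iht =>
      have h1 := ihs (t+1)
      have h2 := iht
      have key : (a+b)^(s+1+(t+1)+1)
          = a * ((a+b)^(s+(t+1)+1)) + b * ((a+b)^(s+1+t+1)) := by ring
      rw [key, h1, h2, mul_add, mul_add, Finset.mul_sum, Finset.mul_sum, Finset.mul_sum,
        Finset.mul_sum]
      have claim1 :
          (∑ i ∈ range (s+1+1), ((t+1+i).choose i : ℝ) * (a^i * b^(t+1+1) * (a+b)^(s+1-i)))
          = (∑ i ∈ range (s+1), a * (((t+1+i).choose i : ℝ) * (a^i * b^(t+1+1) * (a+b)^(s-i))))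
            + ∑ i ∈ range (s+1+1), b * (((t+i).choose i : ℝ) * (a^i * b^(t+1) * (a+b)^(s+1-i))) := by
        rw [Finset.sum_range_succ'
          (fun i => ((t+1+i).choose i : ℝ) * (a^i * b^(t+1+1) * (a+b)^(s+1-i))) (s+1)]
        rw [Finset.sum_range_succ'
          (fun i => b * (((t+i).choose i : ℝ) * (a^i * b^(t+1) * (a+b)^(s+1-i)))) (s+1)]
        have hterm : ∀ i ∈ range (s+1),
            ((t+1+(i+1)).choose (i+1) : ℝ) * (a^(i+1) * b^(t+1+1) * (a+b)^(s+1-(i+1)))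
            = a * (((t+1+i).choose i : ℝ) * (a^i * b^(t+1+1) * (a+b)^(s-i)))
              + b * (((t+(i+1)).choose (i+1) : ℝ) * (a^(i+1) * b^(t+1) * (a+b)^(s+1-(i+1)))) := by
          intro i _
          have e1 : t+1+(i+1) = (t+1+i)+1 := by ring
          have e2 : t+(i+1) = t+1+i := by ring
          have e3 : s+1-(i+1) = s-i := by omega
          rw [e1, e2, e3, Nat.choose_succ_succ (t+1+i) i]
          push_cast
          ring
        rw [Finset.sum_congr rfl hterm, Finset.sum_add_distrib]
        simp only [Nat.choose_zero_right, Nat.cast_one, one_mul, pow_zero, Nat.sub_zero]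
        ring
      have claim2 :
          (∑ i ∈ range (t+1+1), ((s+1+i).choose i : ℝ) * (a^(s+1+1) * b^i * (a+b)^(t+1-i)))
          = (∑ i ∈ range (t+1+1), a * (((s+i).choose i : ℝ) * (a^(s+1) * b^i * (a+b)^(t+1-i))))
            + ∑ i ∈ range (t+1), b * (((s+1+i).choose i : ℝ) * (a^(s+1+1) * b^i * (a+b)^(t-i))) := by
        rw [Finset.sum_range_succ'
          (fun i => ((s+1+i).choose i : ℝ) * (a^(s+1+1) * b^i * (a+b)^(t+1-i))) (t+1)]
        rw [Finset.sum_range_succ'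
          (fun i => a * (((s+i).choose i : ℝ) * (a^(s+1) * b^i * (a+b)^(t+1-i)))) (t+1)]
        have hterm : ∀ i ∈ range (t+1),
            ((s+1+(i+1)).choose (i+1) : ℝ) * (a^(s+1+1) * b^(i+1) * (a+b)^(t+1-(i+1)))
            = a * (((s+(i+1)).choose (i+1) : ℝ) * (a^(s+1) * b^(i+1) * (a+b)^(t+1-(i+1))))
              + b * (((s+1+i).choose i : ℝ) * (a^(s+1+1) * b^i * (a+b)^(t-i))) := by
          intro i _
          have e1 : s+1+(i+1) = (s+1+i)+1 := by ring
          have e2 : s+(i+1) = s+1+i := by ring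
          have e3 : t+1-(i+1) = t-i := by omega
          rw [e1, e2, e3, Nat.choose_succ_succ (s+1+i) i]
          push_cast
          ring
        rw [Finset.sum_congr rfl hterm, Finset.sum_add_distrib]
        simp only [Nat.choose_zero_right, Nat.cast_one, one_mul, pow_zero, Nat.sub_zero]
        ring
      rw [claim1, claim2]
      ring

/-- Euler's partial-fraction decomposition. -/
private lemma invKey (s t : ℕ) (a b : ℝ) (ha : 0 < a) (hb : 0 < b) :
    (a^(s+1))⁻¹ * (b^(t+1))⁻¹ =
      (∑ i ∈ range (s+1), ((t+i).choose i : ℝ) * (((a+b)^(t+1+i))⁻¹ * (a^(s+1-i))⁻¹))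
      + ∑ i ∈ range (t+1), ((s+i).choose i : ℝ) * (((a+b)^(s+1+i))⁻¹ * (b^(t+1-i))⁻¹) := by
  have hc : (0:ℝ) < a + b := by linarith
  have ha' : (a:ℝ) ≠ 0 := ne_of_gt ha
  have hb' : (b:ℝ) ≠ 0 := ne_of_gt hb
  have hc' : (a+b) ≠ 0 := ne_of_gt hc
  set K : ℝ := (a^(s+1) * b^(t+1) * (a+b)^(s+t+1))⁻¹ with hK
  have h1 : ∀ i ∈ range (s+1),
      ((t+i).choose i : ℝ) * (((a+b)^(t+1+i))⁻¹ * (a^(s+1-i))⁻¹)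
      = ((t+i).choose i : ℝ) * (a^i * b^(t+1) * (a+b)^(s-i)) * K := by
    intro i hi
    have hi' : i ≤ s := by simpa using Nat.lt_succ_iff.mp (mem_range.mp hi)
    have e1 : s+1 = i + (s+1-i) := by omega
    have e2 : s+t+1 = (t+1+i) + (s-i) := by omega
    rw [hK, e1, e2, pow_add, pow_add]
    field_simp
    simp only [Nat.add_sub_cancel_left]
    ring
  have h2 : ∀ i ∈ range (t+1),
      ((s+i).choose i : ℝ) * (((a+b)^(s+1+i))⁻¹ * (b^(t+1-i))⁻¹)
      = ((s+i).choose i : ℝ) * (a^(s+1) * b^i * (a+b)^(t-i)) * K := by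
    intro i hi
    have hi' : i ≤ t := by simpa using Nat.lt_succ_iff.mp (mem_range.mp hi)
    have e1 : t+1 = i + (t+1-i) := by omega
    have e2 : s+t+1 = (s+1+i) + (t-i) := by omega
    rw [hK, e1, e2, pow_add, pow_add]
    field_simp
    simp only [Nat.add_sub_cancel_left]
    ring
  rw [Finset.sum_congr rfl h1, Finset.sum_congr rfl h2, ← Finset.sum_mul, ← Finset.sum_mul,
    ← add_mul, ← polyId a b s t, hK]
  field_simp

/-! ### Rewriting `mzv` as sums over `ℕ` and `ℕ × ℕ` -/

private def eOne (k : ℕ) : ℕ ≃ {n : Fin 1 → ℕ // StrictAnti n ∧ ∀ i, 0 < n i} where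
  toFun m := ⟨fun _ => m + 1,
    fun i j hij => absurd (Subsingleton.elim i j) (ne_of_lt hij),
    fun _ => Nat.succ_pos m⟩
  invFun v := v.1 0 - 1
  left_inv m := by simp
  right_inv v := Subtype.ext (funext fun i => by
    have h1 := v.2.2 0
    have h2 : i = 0 := Subsingleton.elim i 0
    rw [h2]
    show v.1 0 - 1 + 1 = v.1 0
    omega)

private lemma mzv_one (k : ℕ) : mzv [k] = ∑' n : ℕ, (((n:ℝ)+1)^k)⁻¹ := by
  have h : mzv [k] = ∑' n : {n : Fin 1 → ℕ // StrictAnti n ∧ ∀ i, 0 < n i}, ((n.1 0 : ℝ)^k)⁻¹ := by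
    unfold mzv
    apply tsum_congr
    intro v
    show (∏ i : Fin 1, ((v.1 i : ℝ) ^ ([k].get i))⁻¹) = _
    rw [Fin.prod_univ_one]
    rfl
  rw [h, ← Equiv.tsum_eq (eOne k)]
  apply tsum_congr
  intro m
  simp [eOne]

private def eTwo : ℕ × ℕ ≃ {n : Fin 2 → ℕ // StrictAnti n ∧ ∀ i, 0 < n i} where
  toFun p := ⟨![p.1 + p.2 + 2, p.2 + 1], by
      constructor
      · intro x y hxy
        fin_cases x <;> fin_cases y <;> simp_all <;> omega
      · intro x; fin_cases x <;> simp⟩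
  invFun v := (v.1 0 - v.1 1 - 1, v.1 1 - 1)
  left_inv p := by
    simp only [Matrix.cons_val_zero, Matrix.cons_val_one, Matrix.head_cons]
    rw [Prod.ext_iff]
    constructor <;> simp <;> omega
  right_inv v := by
    obtain ⟨f, hanti, hpos⟩ := v
    have h01 : f 1 < f 0 := hanti (by norm_num : (0 : Fin 2) < 1)
    have h1 : 0 < f 1 := hpos 1
    apply Subtype.ext
    funext i
    fin_cases i <;> simp <;> omega

private lemma mzv_two (j k : ℕ) :
    mzv [j, k] = ∑' p : ℕ × ℕ, ((((p.1:ℝ)+(p.2:ℝ))+2)^j)⁻¹ * (((p.2:ℝ)+1)^k)⁻¹ := by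
  have h : mzv [j, k] = ∑' n : {n : Fin 2 → ℕ // StrictAnti n ∧ ∀ i, 0 < n i},
      ((n.1 0 : ℝ)^j)⁻¹ * ((n.1 1 : ℝ)^k)⁻¹ := by
    unfold mzv
    apply tsum_congr
    intro v
    show (∏ i : Fin 2, ((v.1 i : ℝ) ^ ([j,k].get i))⁻¹) = _
    rw [Fin.prod_univ_two]
    rfl
  rw [h, ← Equiv.tsum_eq eTwo]
  apply tsum_congr
  intro p
  simp [eTwo]

private lemma mzv_two' (j k : ℕ) :
    mzv [j, k] = ∑' p : ℕ × ℕ, ((((p.1:ℝ)+(p.2:ℝ))+2)^j)⁻¹ * (((p.1:ℝ)+1)^k)⁻¹ := by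
  rw [mzv_two j k, ← Equiv.tsum_eq (Equiv.prodComm ℕ ℕ)]
  apply tsum_congr
  intro p
  simp only [Equiv.prodComm_apply, Prod.fst_swap, Prod.snd_swap]
  rw [add_comm ((p.2:ℝ)) ((p.1:ℝ))]

/-! ### Summability -/

private lemma sumOne (k : ℕ) (hk : 2 ≤ k) : Summable (fun n : ℕ => (((n:ℝ)+1)^k)⁻¹) := by
  have h := Real.summable_nat_pow_inv.2 (by omega : 1 < k)
  have h2 := h.comp_injective (add_left_injective 1)
  apply h2.congr
  intro n
  simp [Function.comp]

private lemma sumTwo (j k : ℕ) (hj : 2 ≤ j) (hjk : 4 ≤ j + k) :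
    Summable (fun p : ℕ × ℕ => ((((p.1:ℝ)+(p.2:ℝ))+2)^j)⁻¹ * (((p.2:ℝ)+1)^k)⁻¹) := by
  have hg : Summable (fun p : ℕ × ℕ =>
      (((p.1:ℝ)+1)^2)⁻¹ * (((p.2:ℝ)+1)^(j+k-2))⁻¹) :=
    Summable.mul_of_nonneg (f := fun n : ℕ => (((n:ℝ)+1)^2)⁻¹)
      (g := fun n : ℕ => (((n:ℝ)+1)^(j+k-2))⁻¹)
      (sumOne 2 le_rfl) (sumOne (j+k-2) (by omega))
      (Pi.le_def.mpr fun n => by positivity) (Pi.le_def.mpr fun n => by positivity)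
  apply Summable.of_nonneg_of_le (fun p => by positivity) _ hg
  intro p
  set x : ℝ := (p.1:ℝ)+1 with hx
  set y : ℝ := (p.2:ℝ)+1 with hy
  have hx1 : 1 ≤ x := by simp [hx]
  have hy1 : 1 ≤ y := by simp [hy]
  have hxy : ((p.1:ℝ)+(p.2:ℝ))+2 = x + y := by rw [hx, hy]; ring
  rw [hxy, ← mul_inv, ← mul_inv]
  apply inv_anti₀ (by positivity)
  have e1 : j + k - 2 = (j-2) + k := by omega
  have e2 : j = 2 + (j-2) := by omega
  rw [e1, pow_add]
  nth_rewrite 2 [e2]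
  rw [pow_add, mul_comm ((x+y)^2) _, mul_assoc, ← mul_assoc]
  calc x^2 * y^(j-2) * y^k ≤ ((x+y)^(j-2) * (x+y)^2) * y^k := by
        rw [mul_comm ((x+y)^(j-2))]
        gcongr <;> linarith
    _ = (x+y)^(j-2) * ((x+y)^2 * y^k) := by ring

private lemma sumTwo' (j k : ℕ) (hj : 2 ≤ j) (hjk : 4 ≤ j + k) :
    Summable (fun p : ℕ × ℕ => ((((p.1:ℝ)+(p.2:ℝ))+2)^j)⁻¹ * (((p.1:ℝ)+1)^k)⁻¹) := by
  have h := (sumTwo j k hj hjk).comp_injective (Equiv.prodComm ℕ ℕ).injective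
  apply h.congr
  intro p
  simp only [Function.comp, Equiv.prodComm_apply, Prod.fst_swap, Prod.snd_swap]
  rw [add_comm ((p.2:ℝ)) ((p.1:ℝ))]

/-! ### Reindexing the right-hand side -/

private lemma reidx (u v : ℕ) (M : ℕ → ℝ) :
    ∑ j ∈ Icc 2 (u+v+3), ((j-1).choose (u+1) : ℝ) * M j
      = ∑ i ∈ range (v+2), ((u+1+i).choose i : ℝ) * M (u+2+i) := by
  have hsub : Icc 2 (u+v+3) ⊆ range (u+v+4) := by
    intro x hx; simp only [mem_Icc] at hx; simp only [mem_range]; omega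
  rw [Finset.sum_subset hsub (fun x _ hx => by
    have hx2 : x < 2 := by
      by_contra hc
      exact hx (mem_Icc.mpr ⟨by omega, by
        have := mem_range.mp ‹x ∈ range (u+v+4)›; omega⟩)
    have : x - 1 = 0 := by omega
    rw [this, Nat.choose_eq_zero_of_lt (by omega)]
    simp)]
  rw [show u+v+4 = (u+2) + (v+2) from by omega, Finset.sum_range_add]
  rw [Finset.sum_eq_zero (fun i hi => by
    have : i < u + 2 := mem_range.mp hi
    rw [Nat.choose_eq_zero_of_lt (by omega)]
    simp)]
  rw [zero_add]
  apply Finset.sum_congr rfl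
  intro i _
  have hcs : (u+2+i-1).choose (u+1) = (u+1+i).choose i := by
    rw [show u+2+i-1 = u+1+i from by omega]
    rw [← Nat.choose_symm (show i ≤ u+1+i from by omega)]
    congr 1
    omega
  rw [hcs]

/-! ### Main theorem -/

set_option maxHeartbeats 2000000 in
/-- **Shuffle product in length 1**: for integers `s, t ≥ 2`,
`ζ(s)·ζ(t) = Σ_{j=2}^{s+t-1} (C(j-1, s-1) + C(j-1, t-1)) ζ(j, s+t-j)`. -/
theorem shuffle_length_one (s t : ℕ) (hs : 2 ≤ s) (ht : 2 ≤ t) :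
    mzv [s] * mzv [t] =
      ∑ j ∈ Finset.Icc 2 (s + t - 1),
        (((j - 1).choose (s - 1) + (j - 1).choose (t - 1) : ℕ) : ℝ) *
          mzv [j, s + t - j] := by
  obtain ⟨s', rfl⟩ : ∃ k, s = k + 2 := ⟨s - 2, by omega⟩
  obtain ⟨t', rfl⟩ : ∃ k, t = k + 2 := ⟨t - 2, by omega⟩
  clear hs ht
  have hS1 := sumOne (s'+2) (by omega)
  have hT1 := sumOne (t'+2) (by omega)
  have hprod : Summable (fun p : ℕ × ℕ =>
      (((p.1:ℝ)+1)^(s'+2))⁻¹ * (((p.2:ℝ)+1)^(t'+2))⁻¹) :=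
    Summable.mul_of_nonneg (f := fun n : ℕ => (((n:ℝ)+1)^(s'+2))⁻¹)
      (g := fun n : ℕ => (((n:ℝ)+1)^(t'+2))⁻¹) hS1 hT1
      (Pi.le_def.mpr fun n => by positivity) (Pi.le_def.mpr fun n => by positivity)
  -- the left-hand side as a double sum
  have hLHS : mzv [s'+2] * mzv [t'+2]
      = ∑' p : ℕ × ℕ, (((p.1:ℝ)+1)^(s'+2))⁻¹ * (((p.2:ℝ)+1)^(t'+2))⁻¹ := by
    rw [mzv_one, mzv_one, Summable.tsum_prod' hprod
      (fun m => by simpa using hT1.mul_left ((((m:ℕ):ℝ)+1)^(s'+2))⁻¹), ← tsum_mul_right]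
    exact tsum_congr fun m => tsum_mul_left.symm
  -- pointwise partial-fraction decomposition
  have hpt : ∀ p : ℕ × ℕ,
      (((p.1:ℝ)+1)^(s'+2))⁻¹ * (((p.2:ℝ)+1)^(t'+2))⁻¹
      = (∑ i ∈ range (s'+2), ((t'+1+i).choose i : ℝ) *
            (((((p.1:ℝ)+(p.2:ℝ))+2)^(t'+2+i))⁻¹ * (((p.1:ℝ)+1)^(s'+2-i))⁻¹))
        + ∑ i ∈ range (t'+2), ((s'+1+i).choose i : ℝ) *
            (((((p.1:ℝ)+(p.2:ℝ))+2)^(s'+2+i))⁻¹ * (((p.2:ℝ)+1)^(t'+2-i))⁻¹) := by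
    intro p
    have h := invKey (s'+1) (t'+1) ((p.1:ℝ)+1) ((p.2:ℝ)+1) (by positivity) (by positivity)
    have hab : ((p.1:ℝ)+1) + ((p.2:ℝ)+1) = ((p.1:ℝ)+(p.2:ℝ))+2 := by ring
    rw [hab] at h
    exact h
  -- summability of each summand
  have hg : ∀ i ∈ range (s'+2), Summable (fun p : ℕ × ℕ =>
      ((t'+1+i).choose i : ℝ) *
        (((((p.1:ℝ)+(p.2:ℝ))+2)^(t'+2+i))⁻¹ * (((p.1:ℝ)+1)^(s'+2-i))⁻¹)) := by
    intro i hi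
    have hi' : i < s' + 2 := mem_range.mp hi
    exact (sumTwo' (t'+2+i) (s'+2-i) (by omega) (by omega)).mul_left _
  have hh : ∀ i ∈ range (t'+2), Summable (fun p : ℕ × ℕ =>
      ((s'+1+i).choose i : ℝ) *
        (((((p.1:ℝ)+(p.2:ℝ))+2)^(s'+2+i))⁻¹ * (((p.2:ℝ)+1)^(t'+2-i))⁻¹)) := by
    intro i hi
    have hi' : i < t' + 2 := mem_range.mp hi
    exact (sumTwo (s'+2+i) (t'+2-i) (by omega) (by omega)).mul_left _
  rw [hLHS, tsum_congr hpt, Summable.tsum_add (summable_sum hg) (summable_sum hh),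
    Summable.tsum_finsetSum hg, Summable.tsum_finsetSum hh]
  have hv1 : ∀ i ∈ range (s'+2),
      (∑' p : ℕ × ℕ, ((t'+1+i).choose i : ℝ) *
        (((((p.1:ℝ)+(p.2:ℝ))+2)^(t'+2+i))⁻¹ * (((p.1:ℝ)+1)^(s'+2-i))⁻¹))
      = ((t'+1+i).choose i : ℝ) * mzv [t'+2+i, s'+2-i] := by
    intro i _
    rw [tsum_mul_left, mzv_two']
  have hv2 : ∀ i ∈ range (t'+2),
      (∑' p : ℕ × ℕ, ((s'+1+i).choose i : ℝ) *
        (((((p.1:ℝ)+(p.2:ℝ))+2)^(s'+2+i))⁻¹ * (((p.2:ℝ)+1)^(t'+2-i))⁻¹))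
      = ((s'+1+i).choose i : ℝ) * mzv [s'+2+i, t'+2-i] := by
    intro i _
    rw [tsum_mul_left, mzv_two]
  rw [Finset.sum_congr rfl hv1, Finset.sum_congr rfl hv2]
  -- now reindex the right-hand side
  have hrhs : ∑ j ∈ Finset.Icc 2 (s'+2 + (t'+2) - 1),
        (((j - 1).choose (s'+2 - 1) + (j - 1).choose (t'+2 - 1) : ℕ) : ℝ) *
          mzv [j, s'+2 + (t'+2) - j]
      = (∑ j ∈ Finset.Icc 2 (s'+2 + (t'+2) - 1),
          ((j-1).choose (s'+1) : ℝ) * mzv [j, s'+2 + (t'+2) - j])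
        + ∑ j ∈ Finset.Icc 2 (s'+2 + (t'+2) - 1),
          ((j-1).choose (t'+1) : ℝ) * mzv [j, s'+2 + (t'+2) - j] := by
    rw [← Finset.sum_add_distrib]
    apply Finset.sum_congr rfl
    intro j _
    rw [show s'+2-1 = s'+1 from rfl, show t'+2-1 = t'+1 from rfl]
    push_cast
    ring
  rw [hrhs]
  have e1 : s'+2 + (t'+2) - 1 = s' + t' + 3 := by omega
  rw [e1]
  rw [reidx s' t' (fun j => mzv [j, s'+2 + (t'+2) - j])]
  rw [show s' + t' + 3 = t' + s' + 3 from by omega]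
  rw [reidx t' s' (fun j => mzv [j, s'+2 + (t'+2) - j])]
  rw [add_comm (∑ i ∈ range (t'+2), _) (∑ i ∈ range (s'+2), _)]
  congr 1
  · apply Finset.sum_congr rfl
    intro i _
    rw [show s'+2 + (t'+2) - (t'+2+i) = s'+2-i from by omega]
  · apply Finset.sum_congr rfl
    intro i _
    rw [show s'+2 + (t'+2) - (s'+2+i) = t'+2-i from by omega]
end

section
/- For all integers n ≥ 1 and m ≥ 0, the series Σ_{k=m+1}^{∞} (1/k)·(k!·n!)/((k+n)!) converges and equals (1/n)·(m!·n!)/((m+n)!). -/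
/-- For integers `n ≥ 1` and `m ≥ 0`, the series
`Σ_{k > m} (1/k)·(k!·n!)/((k+n)!)` converges to `(1/n)·(m!·n!)/((m+n)!)`. -/
theorem factorial_telescoping_sum (n m : ℕ) (hn : 1 ≤ n) :
    HasSum
      (fun k : {k : ℕ // m < k} =>
        (1 / (k.1 : ℝ)) * ((k.1.factorial : ℝ) * (n.factorial : ℝ)) /
          ((k.1 + n).factorial : ℝ))
      ((1 / (n : ℝ)) * ((m.factorial : ℝ) * (n.factorial : ℝ)) /
        ((m + n).factorial : ℝ)) := by
  set F : ℕ → ℝ := fun k => (1 / (n : ℝ)) * ((k.factorial : ℝ) * (n.factorial : ℝ)) /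
      ((k + n).factorial : ℝ) with hF
  have hn0 : (0:ℝ) < n := by exact_mod_cast hn
  -- key identity
  have key : ∀ j : ℕ, (1 / ((j+1 : ℕ) : ℝ)) * (((j+1).factorial : ℝ) * (n.factorial : ℝ)) /
      (((j+1) + n).factorial : ℝ) = F j - F (j+1) := by
    intro j
    have h1 : ((j+1).factorial : ℝ) = (j+1) * (j.factorial : ℝ) := by
      rw [Nat.factorial_succ]; push_cast; ring
    have h2 : (((j+1) + n).factorial : ℝ) = (j+n+1) * ((j+n).factorial : ℝ) := by
      have : (j+1) + n = (j+n) + 1 := by ring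
      rw [this, Nat.factorial_succ]; push_cast; ring
    have hb : ((j+n).factorial : ℝ) ≠ 0 := by positivity
    have hj : ((j:ℝ)+1) ≠ 0 := by positivity
    have hjn : ((j:ℝ)+(n:ℝ)+1) ≠ 0 := by positivity
    rw [hF]
    simp only [h1, h2]
    push_cast
    field_simp
    ring
  -- reindex
  set e : ℕ ≃ {k : ℕ // m < k} :=
    { toFun := fun i => ⟨m + 1 + i, by omega⟩
      invFun := fun k => k.1 - (m + 1)
      left_inv := fun i => by simp
      right_inv := fun k => Subtype.ext (show m + 1 + (k.1 - (m+1)) = k.1 by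
        have := k.2; omega) }
  rw [← e.hasSum_iff]
  have hterm : ∀ i : ℕ,
      ((fun k : {k : ℕ // m < k} =>
        (1 / (k.1 : ℝ)) * ((k.1.factorial : ℝ) * (n.factorial : ℝ)) /
          ((k.1 + n).factorial : ℝ)) ∘ e) i = F (m + i) - F (m + i + 1) := by
    intro i
    have : m + 1 + i = (m + i) + 1 := by ring
    simp only [Function.comp, e, Equiv.coe_fn_mk, this]
    exact key (m + i)
  have hnonneg : ∀ i : ℕ,
      (((fun k : {k : ℕ // m < k} =>
        (1 / (k.1 : ℝ)) * ((k.1.factorial : ℝ) * (n.factorial : ℝ)) /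
          ((k.1 + n).factorial : ℝ)) ∘ e) i) ≥ 0 := by
    intro i; simp only [Function.comp]; positivity
  rw [hasSum_iff_tendsto_nat_of_nonneg hnonneg]
  have hsum : ∀ N : ℕ, (∑ i ∈ Finset.range N,
      ((fun k : {k : ℕ // m < k} =>
        (1 / (k.1 : ℝ)) * ((k.1.factorial : ℝ) * (n.factorial : ℝ)) /
          ((k.1 + n).factorial : ℝ)) ∘ e) i) = F m - F (m + N) := by
    intro N
    calc (∑ i ∈ Finset.range N, _) = ∑ i ∈ Finset.range N,
        ((fun i => F (m + i)) i - (fun i => F (m + i)) (i+1)) := by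
          refine Finset.sum_congr rfl fun i _ => ?_
          rw [hterm i]; ring_nf
      _ = F m - F (m + N) := by rw [Finset.sum_range_sub' (fun i => F (m + i))]; simp
  simp only [hsum]
  -- F (m+N) → 0
  have hF0 : Filter.Tendsto (fun N => F (m + N)) Filter.atTop (nhds 0) := by
    have hbound : ∀ k : ℕ, F k ≤ (1/(n:ℝ)) * (n.factorial : ℝ) / (k + 1) := by
      intro k
      have h1 : ((k+1 : ℕ):ℝ) * (k.factorial : ℝ) ≤ ((k+n).factorial : ℝ) := by
        have : (k+1).factorial ≤ (k+n).factorial :=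
          Nat.factorial_le (by omega)
        calc ((k+1:ℕ):ℝ) * (k.factorial : ℝ) = ((k+1).factorial : ℝ) := by
              rw [Nat.factorial_succ]; push_cast; ring
          _ ≤ _ := by exact_mod_cast this
      rw [hF, div_le_div_iff₀ (by positivity) (by positivity)]
      push_cast at h1 ⊢
      have p1 : (0:ℝ) < n.factorial := by exact_mod_cast Nat.factorial_pos n
      have p2 : (0:ℝ) < (k+n).factorial := by exact_mod_cast Nat.factorial_pos (k+n)
      have p3 : (0:ℝ) ≤ k.factorial := by positivity
      nlinarith [mul_le_mul_of_nonneg_left h1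
        (by positivity : (0:ℝ) ≤ 1/(n:ℝ) * (n.factorial:ℝ))]
    have hFnn : ∀ k : ℕ, 0 ≤ F k := fun k => by rw [hF]; positivity
    have htend : Filter.Tendsto (fun N : ℕ => (1/(n:ℝ)) * (n.factorial : ℝ) / ((m+N) + 1))
        Filter.atTop (nhds 0) := by
      apply Filter.Tendsto.div_atTop tendsto_const_nhds
      apply Filter.tendsto_atTop_add_const_right
      apply Filter.tendsto_atTop_add_const_left
      exact tendsto_natCast_atTop_atTop
    refine squeeze_zero (fun N => hFnn _) (fun N => ?_) htend
    have := hbound (m + N); push_cast at this ⊢; linarith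
  have htt : Filter.Tendsto (fun N => F m - F (m + N)) Filter.atTop (nhds (F m - 0)) :=
    Filter.Tendsto.const_sub _ hF0
  convert htt using 2
  rw [hF]; ring
end

section
/- (Index-shift identity for connected sums) For every tuple of positive integers s = (s_1, …, s_l) with l ≥ 1 and every tuple of positive integers t = (t_1, …, t_p) with p ≥ 0 (possibly empty), both connected sums below converge and Z(s_1+1, s_2, …, s_l ; t_1, …, t_p) = Z(s_1, …, s_l ; 1, t_1, …, t_p). -/
/-- The first entry of a tuple, with the convention that it is `0` for the
empty tuple. -/
def headF {l : ℕ} (n : Fin l → ℕ) : ℕ := if h : 0 < l then n ⟨0, h⟩ else 0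

/-- The summand of the connected sum `Z(s ; t)`: the connector
`n_1!·m_1!/(n_1+m_1)!` times `∏ n_i^{-s_i} · ∏ m_j^{-t_j}`.  (When one of the
tuples is empty its head is `0`, and the connector equals `1`, as required.) -/
noncomputable def connTerm (s t : List ℕ)
    (x : {n : Fin s.length → ℕ // StrictAnti n ∧ ∀ i, 0 < n i} ×
         {m : Fin t.length → ℕ // StrictAnti m ∧ ∀ i, 0 < m i}) : ℝ :=
  ((headF x.1.1).factorial : ℝ) * ((headF x.2.1).factorial : ℝ) /
      ((headF x.1.1 + headF x.2.1).factorial : ℝ) *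
    (∏ i, ((x.1.1 i : ℝ) ^ s.get i)⁻¹) * (∏ j, ((x.2.1 j : ℝ) ^ t.get j)⁻¹)

/-- The connected sum `Z(s ; t)` of Seki–Yamamoto. -/
noncomputable def connSum (s t : List ℕ) : ℝ := ∑' x, connTerm s t x

open Finset Filter

namespace ConnAux

/-- connector -/
noncomputable def fc (n m : ℕ) : ℝ := (n.factorial : ℝ) * m.factorial / (n + m).factorial

lemma factR_pos (n : ℕ) : (0:ℝ) < n.factorial := by exact_mod_cast n.factorial_pos

lemma fc_nonneg (n m : ℕ) : 0 ≤ fc n m := by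
  unfold fc; positivity

lemma fc_le_one (n m : ℕ) : fc n m ≤ 1 := by
  rw [fc, div_le_one (factR_pos _)]
  exact_mod_cast Nat.le_of_dvd (n+m).factorial_pos
    (Nat.factorial_mul_factorial_dvd_factorial_add n m)

lemma key_nat : ∀ n, 1 ≤ n → ∀ m, n ≤ m →
    n * m * (n.factorial * m.factorial) ≤ 2 * (n + m).factorial := by
  intro n hn
  induction n, hn using Nat.le_induction with
  | base =>
    intro m hm
    have : (1 + m).factorial = (m+1) * m.factorial := by
      rw [Nat.add_comm 1 m]; exact Nat.factorial_succ m
    rw [this]; simp [Nat.factorial]; nlinarith [Nat.factorial_pos m]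
  | succ n hn ih =>
    intro m hm
    have h1 := ih (m+1) (by omega)
    have e1 : n + (m+1) = (n+1) + m := by omega
    rw [e1] at h1
    have e2 : (m+1).factorial = (m+1) * m.factorial := Nat.factorial_succ m
    rw [e2] at h1
    have e3 : (n+1).factorial = (n+1) * n.factorial := Nat.factorial_succ n
    rw [e3]
    -- goal : (n+1) * m * ((n+1) * n! * m!) ≤ 2 * ((n+1)+m)!
    -- h1 : n * (m+1) * (n! * ((m+1) * m!)) ≤ 2 * ((n+1)+m)!
    have hkey : (n+1) * (n+1) * m ≤ n * ((m+1) * (m+1)) := by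
      zify; nlinarith [mul_nonneg (show (0:ℤ) ≤ m - n by omega) (show (0:ℤ) ≤ n*m - 1 by nlinarith [show (1:ℤ) ≤ n by omega, show (1:ℤ) ≤ m by omega])]
    calc (n+1) * m * ((n+1) * n.factorial * m.factorial)
        = ((n+1) * (n+1) * m) * (n.factorial * m.factorial) := by ring
      _ ≤ (n * ((m+1) * (m+1))) * (n.factorial * m.factorial) :=
          Nat.mul_le_mul_right _ hkey
      _ = n * (m+1) * (n.factorial * ((m+1) * m.factorial)) := by ring
      _ ≤ 2 * ((n+1) + m).factorial := h1

lemma key_nat' (n m : ℕ) (hn : 1 ≤ n) (hm : 1 ≤ m) :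
    n * m * (n.factorial * m.factorial) ≤ 2 * (n + m).factorial := by
  rcases le_total n m with h | h
  · exact key_nat n hn m h
  · have := key_nat m hm n h
    calc n * m * (n.factorial * m.factorial)
        = m * n * (m.factorial * n.factorial) := by ring
      _ ≤ 2 * (m + n).factorial := this
      _ = 2 * (n + m).factorial := by rw [Nat.add_comm]

lemma fc_le_prod (n m : ℕ) (hn : 1 ≤ n) (hm : 1 ≤ m) :
    fc n m ≤ 2 / ((n : ℝ) * m) := by
  rw [fc, div_le_div_iff₀ (factR_pos _) (by positivity)]
  have := key_nat' n m hn hm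
  have : ((n * m * (n.factorial * m.factorial) : ℕ) : ℝ) ≤ ((2 * (n+m).factorial : ℕ) : ℝ) := by
    exact_mod_cast this
  push_cast at this
  nlinarith [this]

lemma fc_zero (n : ℕ) : fc n 0 = 1 := by
  simp [fc, Nat.factorial]
  exact Nat.factorial_ne_zero n

lemma fc_le_headm (n m : ℕ) (hn : 1 ≤ n) :
    fc n m ≤ 2 * ((max m 1 : ℕ) : ℝ)⁻¹ := by
  rcases Nat.eq_zero_or_pos m with rfl | hm
  · simpa [fc_zero] using fc_le_one n 0 |>.trans (by norm_num)
  · have hmax : max m 1 = m := max_eq_left hm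
    rw [hmax]
    calc fc n m ≤ 2 / ((n:ℝ) * m) := fc_le_prod n m hn hm
      _ ≤ 2 * (m:ℝ)⁻¹ := by
          rw [div_le_iff₀ (by positivity)]
          have h1 : (1:ℝ) ≤ n := by exact_mod_cast hn
          have h2 : (1:ℝ) ≤ m := by exact_mod_cast hm
          rw [mul_assoc]
          nlinarith [inv_mul_cancel₀ (show (m:ℝ) ≠ 0 by positivity)]

lemma fc_one (m : ℕ) : fc 1 m = ((m:ℝ)+1)⁻¹ := by
  have : (1 + m).factorial = (m+1) * m.factorial := by
    rw [Nat.add_comm 1 m]; exact Nat.factorial_succ m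
  rw [fc, this]
  push_cast
  rw [Nat.factorial_one]
  field_simp
  ring

/-- telescoping identity -/
lemma fc_sub (n m : ℕ) : fc n m - fc n (m+1) = n * (fc n (m+1) * ((m:ℝ)+1)⁻¹) := by
  have e1 : n + (m+1) = (n+m) + 1 := by omega
  unfold fc
  rw [e1, Nat.factorial_succ, Nat.factorial_succ]
  have h1 : ((n+m).factorial : ℝ) ≠ 0 := (factR_pos _).ne'
  have h2 : ((m).factorial : ℝ) ≠ 0 := (factR_pos _).ne'
  push_cast
  field_simp
  ring



lemma fc_term_eq (n m j : ℕ) (hn : 1 ≤ n) :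
    fc n (m+1+j) * ((m+1+j : ℕ) : ℝ)⁻¹
      = (fc n (m+j) - fc n (m+j+1)) * (n : ℝ)⁻¹ := by
  have e : m+1+j = (m+j)+1 := by omega
  rw [e, fc_sub n (m+j)]
  have hn' : (n:ℝ) ≠ 0 := by positivity
  push_cast
  field_simp

lemma fc_tendsto_zero (n m : ℕ) (hn : 1 ≤ n) :
    Tendsto (fun M : ℕ => fc n (m + M)) atTop (nhds 0) := by
  apply squeeze_zero' (Eventually.of_forall fun M => fc_nonneg n (m+M))
    (g := fun M : ℕ => 2 / (M : ℝ))
  · filter_upwards [eventually_ge_atTop 1] with M hM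
    calc fc n (m+M) ≤ 2 * ((max (m+M) 1 : ℕ) : ℝ)⁻¹ := fc_le_headm n (m+M) hn
      _ ≤ 2 / (M:ℝ) := by
          have h1 : max (m+M) 1 = m + M := max_eq_left (by omega)
          rw [h1, mul_comm, ← div_eq_inv_mul]
          apply div_le_div_of_nonneg_left (by norm_num) (by exact_mod_cast hM)
          exact_mod_cast Nat.le_add_left M m
  · exact tendsto_const_div_atTop_nhds_zero_nat 2

lemma hasSum_fc_nat (n m : ℕ) (hn : 1 ≤ n) :
    HasSum (fun j : ℕ => fc n (m+1+j) * ((m+1+j : ℕ) : ℝ)⁻¹)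
      (fc n m * (n : ℝ)⁻¹) := by
  rw [hasSum_iff_tendsto_nat_of_nonneg
    (fun j => mul_nonneg (fc_nonneg _ _) (by positivity)) _]
  have heq : ∀ M : ℕ, ∑ j ∈ Finset.range M, fc n (m+1+j) * ((m+1+j : ℕ) : ℝ)⁻¹
      = (fc n m - fc n (m + M)) * (n:ℝ)⁻¹ := by
    intro M
    have : ∀ j ∈ Finset.range M, fc n (m+1+j) * ((m+1+j : ℕ) : ℝ)⁻¹
        = (fc n (m+j) - fc n (m+(j+1))) * (n:ℝ)⁻¹ := by
      intro j _
      rw [fc_term_eq n m j hn]; ring_nf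
    rw [Finset.sum_congr rfl this, ← Finset.sum_mul,
      Finset.sum_range_sub' (fun j => fc n (m+j))]
    simp
  apply Tendsto.congr (fun M => (heq M).symm)
  have : Tendsto (fun M : ℕ => (fc n m - fc n (m+M)) * (n:ℝ)⁻¹) atTop
      (nhds ((fc n m - 0) * (n:ℝ)⁻¹)) :=
    (tendsto_const_nhds.sub (fc_tendsto_zero n m hn)).mul tendsto_const_nhds
  simpa using this

/-- equiv of ℕ with the integers above m -/
def tailEquiv (m : ℕ) : ℕ ≃ {k : ℕ // m < k} where
  toFun j := ⟨m+1+j, by omega⟩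
  invFun k := k.1 - (m+1)
  left_inv j := by show m+1+j-(m+1) = j; omega
  right_inv k := by ext; show m+1+(k.1-(m+1)) = k.1; have := k.2; omega

lemma hasSum_fc_tail (n m : ℕ) (hn : 1 ≤ n) :
    HasSum (fun k : {k : ℕ // m < k} => fc n k.1 * ((k.1 : ℕ) : ℝ)⁻¹)
      (fc n m * (n : ℝ)⁻¹) := by
  rw [← (tailEquiv m).hasSum_iff]
  exact hasSum_fc_nat n m hn

lemma summable_inv_sq_tail (m : ℕ) :
    Summable (fun k : {k : ℕ // m < k} => ((k.1 : ℝ))⁻¹ * ((k.1 : ℝ))⁻¹) := by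
  apply Summable.of_nonneg_of_le (f := fun k : {k : ℕ // m < k} => 2 * (fc 1 k.1 * ((k.1:ℕ):ℝ)⁻¹))
    (fun k => by positivity)
  · intro k
    have hk : 1 ≤ k.1 := by have := k.2; omega
    have hk' : (1:ℝ) ≤ (k.1:ℝ) := by exact_mod_cast hk
    rw [fc_one]
    have h1 : ((k.1:ℝ))⁻¹ ≤ 2 * ((k.1:ℝ)+1)⁻¹ := by
      nlinarith [inv_mul_cancel₀ (show ((k.1:ℝ)+1) ≠ 0 by positivity),
        inv_mul_cancel₀ (show ((k.1:ℝ)) ≠ 0 by positivity),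
        inv_nonneg.mpr (show (0:ℝ) ≤ (k.1:ℝ)+1 by positivity),
        inv_nonneg.mpr (show (0:ℝ) ≤ (k.1:ℝ) by positivity)]
    calc ((k.1:ℝ))⁻¹ * ((k.1:ℝ))⁻¹ ≤ (2 * ((k.1:ℝ)+1)⁻¹) * ((k.1:ℝ))⁻¹ :=
          mul_le_mul_of_nonneg_right h1 (by positivity)
      _ = 2 * (((k.1:ℝ)+1)⁻¹ * ((k.1:ℝ))⁻¹) := by ring
  · exact ((hasSum_fc_tail 1 m le_rfl).summable).mul_left 2

lemma tsum_inv_sq_tail_le (m : ℕ) :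
    ∑' k : {k : ℕ // m < k}, ((k.1 : ℝ))⁻¹ * ((k.1 : ℝ))⁻¹
      ≤ 2 * ((max m 1 : ℕ) : ℝ)⁻¹ := by
  have hb := (hasSum_fc_tail 1 m le_rfl).summable.mul_left 2
  have h1 : ∑' k : {k : ℕ // m < k}, 2 * (fc 1 k.1 * ((k.1:ℕ):ℝ)⁻¹)
      = 2 * (fc 1 m * (1:ℝ)⁻¹) := by
    rw [tsum_mul_left, (hasSum_fc_tail 1 m le_rfl).tsum_eq]
    norm_num
  calc ∑' k : {k : ℕ // m < k}, ((k.1 : ℝ))⁻¹ * ((k.1 : ℝ))⁻¹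
      ≤ ∑' k : {k : ℕ // m < k}, 2 * (fc 1 k.1 * ((k.1:ℕ):ℝ)⁻¹) := by
        apply Summable.tsum_le_tsum _ (summable_inv_sq_tail m) hb
        intro k
        have hk : 1 ≤ k.1 := by have := k.2; omega
        have hk' : (1:ℝ) ≤ (k.1:ℝ) := by exact_mod_cast hk
        rw [fc_one]
        have h1 : ((k.1:ℝ))⁻¹ ≤ 2 * ((k.1:ℝ)+1)⁻¹ := by
          nlinarith [inv_mul_cancel₀ (show ((k.1:ℝ)+1) ≠ 0 by positivity),
            inv_mul_cancel₀ (show ((k.1:ℝ)) ≠ 0 by positivity),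
            inv_nonneg.mpr (show (0:ℝ) ≤ (k.1:ℝ)+1 by positivity),
            inv_nonneg.mpr (show (0:ℝ) ≤ (k.1:ℝ) by positivity)]
        calc ((k.1:ℝ))⁻¹ * ((k.1:ℝ))⁻¹ ≤ (2 * ((k.1:ℝ)+1)⁻¹) * ((k.1:ℝ))⁻¹ :=
              mul_le_mul_of_nonneg_right h1 (by positivity)
          _ = 2 * (((k.1:ℝ)+1)⁻¹ * ((k.1:ℝ))⁻¹) := by ring
    _ = 2 * (fc 1 m * (1:ℝ)⁻¹) := h1
    _ ≤ 2 * ((max m 1 : ℕ) : ℝ)⁻¹ := by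
        rw [fc_one]; norm_num
        apply inv_anti₀ (by positivity)
        have h2 : max m 1 ≤ m + 1 := by omega
        have h3 : ((max m 1 : ℕ):ℝ) ≤ (m:ℝ)+1 := by exact_mod_cast h2
        push_cast at h3 ⊢
        exact h3


section Chains

/-- strictly decreasing positive chains -/
abbrev Chain (l : ℕ) := {n : Fin l → ℕ // StrictAnti n ∧ ∀ i, 0 < n i}

lemma headF_succ {l : ℕ} (n : Fin (l+1) → ℕ) : headF n = n 0 := by
  unfold headF
  rw [dif_pos (Nat.succ_pos l)]
  congr 1

lemma headF_pos {l : ℕ} (c : Chain (l+1)) : 0 < headF c.1 := by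
  rw [headF_succ]; exact c.2.2 0

/-- the tail of a chain -/
def chainTail {l : ℕ} (c : Chain (l+1)) : Chain l :=
  ⟨fun i => c.1 i.succ,
   fun i j hij => c.2.1 (by exact Fin.succ_lt_succ_iff.mpr hij),
   fun i => c.2.2 _⟩

lemma headF_chainTail_lt {l : ℕ} (c : Chain (l+1)) : headF (chainTail c).1 < c.1 0 := by
  unfold headF
  split
  · next h =>
    exact c.2.1 (show (0 : Fin (l+1)) < Fin.succ ⟨0, h⟩ from
      by simp [Fin.lt_def])
  · exact c.2.2 0

/-- prepending a larger head to a chain -/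
def chainCons {l : ℕ} (c : Chain l) (k : ℕ) (hk : headF c.1 < k) : Chain (l+1) := by
  refine ⟨Fin.cons k c.1, ?_, ?_⟩
  · intro i j hij
    induction j using Fin.cases with
    | zero => simp [Fin.lt_def] at hij
    | succ j =>
      induction i using Fin.cases with
      | zero =>
        rw [Fin.cons_zero, Fin.cons_succ]
        calc c.1 j ≤ c.1 ⟨0, j.pos⟩ :=
              (c.2.1.antitone) (show (⟨0, j.pos⟩ : Fin l) ≤ j from by
                simp [Fin.le_def])
          _ = headF c.1 := by unfold headF; rw [dif_pos j.pos]
          _ < k := hk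
      | succ i =>
        rw [Fin.cons_succ, Fin.cons_succ]
        exact c.2.1 (by exact Fin.succ_lt_succ_iff.mp hij)
  · intro i
    induction i using Fin.cases with
    | zero => rw [Fin.cons_zero]; omega
    | succ i => rw [Fin.cons_succ]; exact c.2.2 i

lemma headF_chainCons {l : ℕ} (c : Chain l) (k : ℕ) (hk : headF c.1 < k) :
    headF (chainCons c k hk).1 = k := by
  rw [headF_succ]; simp [chainCons]

lemma chainCons_val_succ {l : ℕ} (c : Chain l) (k : ℕ) (hk : headF c.1 < k) (i : Fin l) :
    (chainCons c k hk).1 i.succ = c.1 i := by simp [chainCons]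

lemma chainCons_val_zero {l : ℕ} (c : Chain l) (k : ℕ) (hk : headF c.1 < k) :
    (chainCons c k hk).1 0 = k := by simp [chainCons]

/-- a chain of length `l+1` is a chain of length `l` plus a new larger head -/
def chainEquiv (l : ℕ) : Chain (l+1) ≃ Σ c : Chain l, {k : ℕ // headF c.1 < k} where
  toFun c := ⟨chainTail c, ⟨c.1 0, headF_chainTail_lt c⟩⟩
  invFun z := chainCons z.1 z.2.1 z.2.2
  left_inv c := by
    apply Subtype.ext
    show Fin.cons (c.1 0) (fun i => c.1 i.succ) = c.1
    exact Fin.cons_self_tail c.1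
  right_inv z := by
    obtain ⟨c, k, hk⟩ := z
    have h1 : chainTail (chainCons c k hk) = c :=
      Subtype.ext (funext fun i => chainCons_val_succ c k hk i)
    refine Sigma.ext h1 ?_
    refine (Subtype.heq_iff_coe_eq ?_).mpr (chainCons_val_zero c k hk)
    intro x
    show headF (chainTail (chainCons c k hk)).1 < x ↔ headF c.1 < x
    rw [h1]

/-- summable weight on chains -/
noncomputable def chainW {l : ℕ} (c : Chain l) : ℝ :=
  ((max (headF c.1) 1 : ℕ) : ℝ)⁻¹ * ∏ i, ((c.1 i : ℝ))⁻¹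

lemma chainW_nonneg {l : ℕ} (c : Chain l) : 0 ≤ chainW c := by
  unfold chainW
  apply mul_nonneg (by positivity)
  exact Finset.prod_nonneg fun i _ => by positivity

lemma chainW_cons {l : ℕ} (c : Chain l) (k : ℕ) (hk : headF c.1 < k) :
    chainW (chainCons c k hk) = ((k:ℝ))⁻¹ * ((k:ℝ))⁻¹ * ∏ i, ((c.1 i : ℝ))⁻¹ := by
  unfold chainW
  rw [headF_chainCons]
  have h1 : max k 1 = k := max_eq_left (by omega)
  rw [h1, Fin.prod_univ_succ]
  rw [chainCons_val_zero]
  have : ∀ i : Fin l, (((chainCons c k hk).1 i.succ : ℝ))⁻¹ = ((c.1 i : ℝ))⁻¹ := by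
    intro i; rw [chainCons_val_succ]
  rw [Finset.prod_congr rfl (fun i _ => this i)]
  ring

lemma summable_chainW : ∀ l : ℕ, Summable (fun c : Chain l => chainW c) := by
  intro l
  induction l with
  | zero => exact Summable.of_finite
  | succ l ih =>
    rw [← (chainEquiv l).symm.summable_iff]
    have hnn : ∀ z : Σ c : Chain l, {k : ℕ // headF c.1 < k},
        0 ≤ chainW ((chainEquiv l).symm z) := fun z => chainW_nonneg _
    apply (summable_sigma_of_nonneg hnn).mpr
    constructor
    · intro c
      apply Summable.congr ((summable_inv_sq_tail (headF c.1)).mul_right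
        (∏ i, ((c.1 i : ℝ))⁻¹))
      intro k
      show (k.1:ℝ)⁻¹ * (k.1:ℝ)⁻¹ * ∏ i, ((c.1 i : ℝ))⁻¹ = _
      rw [show (chainEquiv l).symm ⟨c, k⟩ = chainCons c k.1 k.2 from rfl, chainW_cons]
    · apply Summable.of_nonneg_of_le (f := fun c : Chain l => 2 * chainW c)
        (fun c => tsum_nonneg fun k => chainW_nonneg _)
      · intro c
        have he : ∀ k : {k : ℕ // headF c.1 < k},
            chainW ((chainEquiv l).symm ⟨c, k⟩)
              = ((k.1:ℝ))⁻¹ * ((k.1:ℝ))⁻¹ * ∏ i, ((c.1 i : ℝ))⁻¹ := by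
          intro k
          rw [show (chainEquiv l).symm ⟨c, k⟩ = chainCons c k.1 k.2 from rfl, chainW_cons]
        rw [tsum_congr he, tsum_mul_right]
        have hP : 0 ≤ ∏ i, ((c.1 i : ℝ))⁻¹ :=
          Finset.prod_nonneg fun i _ => by positivity
        calc (∑' k : {k : ℕ // headF c.1 < k}, ((k.1:ℝ))⁻¹ * ((k.1:ℝ))⁻¹)
              * ∏ i, ((c.1 i : ℝ))⁻¹
            ≤ (2 * ((max (headF c.1) 1 : ℕ) : ℝ)⁻¹) * ∏ i, ((c.1 i : ℝ))⁻¹ :=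
              mul_le_mul_of_nonneg_right (tsum_inv_sq_tail_le _) hP
          _ = 2 * chainW c := by rw [chainW]; ring
      · exact ih.mul_left 2

end Chains

section Terms

lemma connTerm_eq (s t : List ℕ) (x) :
    connTerm s t x = fc (headF x.1.1) (headF x.2.1) *
      (∏ i, ((x.1.1 i : ℝ) ^ s.get i)⁻¹) * (∏ j, ((x.2.1 j : ℝ) ^ t.get j)⁻¹) := rfl

lemma connTerm_nonneg (s t : List ℕ) (x) : 0 ≤ connTerm s t x := by
  rw [connTerm_eq]
  apply mul_nonneg (mul_nonneg (fc_nonneg _ _) ?_) ?_ <;>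
    exact Finset.prod_nonneg fun i _ => by positivity

lemma prod_weights_le {u : List ℕ} (hu : ∀ e ∈ u, 1 ≤ e) (c : Chain u.length) :
    (∏ j, ((c.1 j : ℝ) ^ u.get j)⁻¹) ≤ ∏ j, ((c.1 j : ℝ))⁻¹ := by
  apply Finset.prod_le_prod (fun j _ => by positivity)
  intro j _
  have h1 : (1:ℝ) ≤ (c.1 j : ℝ) := by exact_mod_cast c.2.2 j
  apply inv_anti₀ (by exact_mod_cast c.2.2 j)
  calc ((c.1 j : ℝ)) = (c.1 j : ℝ) ^ 1 := (pow_one _).symm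
    _ ≤ (c.1 j : ℝ) ^ u.get j := by
        apply pow_le_pow_right₀ h1
        exact hu _ (u.get_mem j)

lemma prod_weights_cons (v : ℕ) (u : List ℕ) (c : Chain u.length) (k : ℕ)
    (hk : headF c.1 < k) :
    (∏ j, (((chainCons c k hk).1 j : ℝ) ^ ((v::u).get j))⁻¹)
      = ((k:ℝ) ^ v)⁻¹ * ∏ j, ((c.1 j : ℝ) ^ (u.get j))⁻¹ := by
  rw [Fin.prod_univ_succ, chainCons_val_zero]
  congr 1

lemma prod_weights_head {v : ℕ} (hv : 2 ≤ v) {u : List ℕ} (hu : ∀ e ∈ u, 1 ≤ e)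
    (c : Chain (u.length + 1)) :
    (∏ i, ((c.1 i : ℝ) ^ ((v::u).get i))⁻¹) ≤ chainW c := by
  have h0 : (1:ℝ) ≤ (c.1 0 : ℝ) := by exact_mod_cast c.2.2 0
  have hpos : (0:ℝ) < (c.1 0 : ℝ) := by exact_mod_cast c.2.2 0
  have hhead : ((c.1 0 : ℝ) ^ ((v::u).get (0 : Fin (u.length+1))))⁻¹ ≤ (c.1 0 : ℝ)⁻¹ * (c.1 0 : ℝ)⁻¹ := by
    have : (c.1 0 : ℝ) * (c.1 0 : ℝ) ≤ (c.1 0 : ℝ) ^ ((v::u).get (0 : Fin (u.length+1))) := by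
      have hget : (v::u).get (0 : Fin (u.length+1)) = v := rfl
      rw [hget]
      calc (c.1 0 : ℝ) * (c.1 0 : ℝ) = (c.1 0 : ℝ) ^ 2 := (sq _).symm
        _ ≤ (c.1 0 : ℝ) ^ v := pow_le_pow_right₀ h0 hv
    rw [← mul_inv]
    exact inv_anti₀ (by positivity) this
  have htail : (∏ i : Fin u.length, ((c.1 i.succ : ℝ) ^ ((v::u).get i.succ))⁻¹)
      ≤ ∏ i : Fin u.length, ((c.1 i.succ : ℝ))⁻¹ := by
    apply Finset.prod_le_prod (fun j _ => by positivity)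
    intro j _
    have h1 : (1:ℝ) ≤ (c.1 j.succ : ℝ) := by exact_mod_cast c.2.2 j.succ
    apply inv_anti₀ (by exact_mod_cast c.2.2 j.succ)
    calc ((c.1 j.succ : ℝ)) = (c.1 j.succ : ℝ) ^ 1 := (pow_one _).symm
      _ ≤ (c.1 j.succ : ℝ) ^ ((v::u).get j.succ) := by
          apply pow_le_pow_right₀ h1
          have : (v::u).get j.succ = u.get j := rfl
          rw [this]
          exact hu _ (u.get_mem j)
  have hW : chainW c = (c.1 0 : ℝ)⁻¹ * ((c.1 0 : ℝ)⁻¹ *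
      ∏ i : Fin u.length, ((c.1 i.succ : ℝ))⁻¹) := by
    unfold chainW
    rw [headF_succ, max_eq_left (c.2.2 0), Fin.prod_univ_succ]
  rw [hW, Fin.prod_univ_succ]
  calc ((c.1 0 : ℝ) ^ ((v::u).get (0 : Fin (u.length+1))))⁻¹ *
        ∏ i : Fin u.length, ((c.1 i.succ : ℝ) ^ ((v::u).get i.succ))⁻¹
      ≤ ((c.1 0 : ℝ)⁻¹ * (c.1 0 : ℝ)⁻¹) *
        ∏ i : Fin u.length, ((c.1 i.succ : ℝ))⁻¹ := by
        apply mul_le_mul hhead htail (Finset.prod_nonneg fun i _ => by positivity)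
          (by positivity)
    _ = (c.1 0 : ℝ)⁻¹ * ((c.1 0 : ℝ)⁻¹ * ∏ i : Fin u.length, ((c.1 i.succ : ℝ))⁻¹) := by
        ring

end Terms

end ConnAux


namespace ConnAux

lemma summable_termA (a : ℕ) (ha : 1 ≤ a) (rest t : List ℕ)
    (hrest : ∀ x ∈ rest, 1 ≤ x) (ht : ∀ x ∈ t, 1 ≤ x) :
    Summable (connTerm ((a + 1) :: rest) t) := by
  have key : ∀ x, connTerm ((a + 1) :: rest) t x ≤ 2 * (chainW x.1 * chainW x.2) := by
    intro x
    rw [connTerm_eq]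
    have h1 : (∏ i, ((x.1.1 i : ℝ) ^ (((a+1) :: rest).get i))⁻¹) ≤ chainW x.1 :=
      prod_weights_head (by omega) hrest x.1
    have h2 : (∏ j, ((x.2.1 j : ℝ) ^ (t.get j))⁻¹) ≤ ∏ j, ((x.2.1 j : ℝ))⁻¹ :=
      prod_weights_le ht x.2
    have hn1 : 1 ≤ headF x.1.1 := headF_pos x.1
    have h3 : fc (headF x.1.1) (headF x.2.1) ≤ 2 * ((max (headF x.2.1) 1 : ℕ) : ℝ)⁻¹ :=
      fc_le_headm _ _ hn1
    have hW2 : (∏ j, ((x.2.1 j : ℝ))⁻¹) ≤ ((max (headF x.2.1) 1 : ℕ) : ℝ) * chainW x.2 := by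
      unfold chainW
      rw [← mul_assoc, mul_inv_cancel₀ (by positivity), one_mul]
    calc fc (headF x.1.1) (headF x.2.1) *
          (∏ i, ((x.1.1 i : ℝ) ^ (((a+1) :: rest).get i))⁻¹) *
          (∏ j, ((x.2.1 j : ℝ) ^ (t.get j))⁻¹)
        ≤ (2 * ((max (headF x.2.1) 1 : ℕ) : ℝ)⁻¹) * chainW x.1 *
          (((max (headF x.2.1) 1 : ℕ) : ℝ) * chainW x.2) := by
          have hc1 : 0 ≤ chainW x.1 := chainW_nonneg _
          apply mul_le_mul (mul_le_mul h3 h1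
            (Finset.prod_nonneg fun i _ => by positivity) (by positivity))
            (h2.trans hW2)
            (Finset.prod_nonneg fun i _ => by positivity)
            (by positivity)
      _ = 2 * (chainW x.1 * chainW x.2) *
          (((max (headF x.2.1) 1 : ℕ) : ℝ)⁻¹ * ((max (headF x.2.1) 1 : ℕ) : ℝ)) := by
          ring
      _ = 2 * (chainW x.1 * chainW x.2) := by
          rw [inv_mul_cancel₀ (by positivity), mul_one]
  exact Summable.of_nonneg_of_le (fun x => connTerm_nonneg _ _ x) key
    (((summable_chainW _).mul_of_nonneg (summable_chainW _)
      (fun c => chainW_nonneg c) (fun c => chainW_nonneg c)).mul_left 2)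

lemma hasSum_fiber (a : ℕ) (rest t : List ℕ)
    (x : Chain (rest.length + 1) × Chain t.length) :
    HasSum (fun k : {k : ℕ // headF x.2.1 < k} =>
        connTerm (a :: rest) (1 :: t) (x.1, chainCons x.2 k.1 k.2))
      (connTerm ((a + 1) :: rest) t x) := by
  obtain ⟨c, m⟩ := x
  have hn1 : 1 ≤ headF c.1 := headF_pos c
  set W1 : ℝ := ∏ i, ((c.1 i : ℝ) ^ ((a :: rest).get i))⁻¹ with hW1
  set W2 : ℝ := ∏ j, ((m.1 j : ℝ) ^ (t.get j))⁻¹ with hW2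
  have hfun : ∀ k : {k : ℕ // headF m.1 < k},
      connTerm (a :: rest) (1 :: t) (c, chainCons m k.1 k.2)
        = (W1 * W2) * (fc (headF c.1) k.1 * ((k.1 : ℕ) : ℝ)⁻¹) := by
    intro k
    rw [connTerm_eq]
    show fc (headF c.1) (headF (chainCons m k.1 k.2).1) * W1 *
        (∏ j, (((chainCons m k.1 k.2).1 j : ℝ) ^ ((1 :: t).get j))⁻¹) = _
    rw [headF_chainCons, prod_weights_cons 1 t m k.1 k.2, pow_one]
    rw [← hW2]
    ring
  have hbase := (hasSum_fc_tail (headF c.1) (headF m.1) hn1).mul_left (W1 * W2)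
  have hval : (W1 * W2) * (fc (headF c.1) (headF m.1) * ((headF c.1 : ℕ) : ℝ)⁻¹)
      = connTerm ((a + 1) :: rest) t (c, m) := by
    rw [connTerm_eq]
    show _ = fc (headF c.1) (headF m.1) *
        (∏ i, ((c.1 i : ℝ) ^ (((a+1) :: rest).get i))⁻¹) * W2
    have hsplit : (∏ i, ((c.1 i : ℝ) ^ (((a+1) :: rest).get i))⁻¹)
        = ((c.1 0 : ℝ))⁻¹ * W1 := by
      rw [hW1, Fin.prod_univ_succ, Fin.prod_univ_succ]
      have hh : ((c.1 0 : ℝ) ^ (((a+1) :: rest).get (0 : Fin (rest.length+1))))⁻¹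
          = (c.1 0 : ℝ)⁻¹ * ((c.1 0 : ℝ) ^ ((a :: rest).get (0 : Fin (rest.length+1))))⁻¹ := by
        have e1 : ((a+1) :: rest).get (0 : Fin (rest.length+1)) = a + 1 := rfl
        have e2 : (a :: rest).get (0 : Fin (rest.length+1)) = a := rfl
        rw [e1, e2, pow_succ, mul_inv]
        ring
      have htails : (∏ i : Fin rest.length,
          ((c.1 i.succ : ℝ) ^ (((a+1) :: rest).get i.succ))⁻¹)
          = ∏ i : Fin rest.length, ((c.1 i.succ : ℝ) ^ ((a :: rest).get i.succ))⁻¹ := rfl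
      rw [htails, hh]
      ring
    rw [hsplit, headF_succ]
    ring
  rw [hval] at hbase
  have hfe : (fun k : {k : ℕ // headF m.1 < k} =>
      connTerm (a :: rest) (1 :: t) (c, chainCons m k.1 k.2))
      = (fun k : {k : ℕ // headF m.1 < k} =>
        (W1 * W2) * (fc (headF c.1) k.1 * ((k.1 : ℕ) : ℝ)⁻¹)) := funext hfun
  rw [hfe]
  exact hbase

end ConnAux

open ConnAux in
/-- **Index-shift identity for connected sums**: for tuples of positive
integers `s = (s_1, …, s_l)` (with `l ≥ 1`, here `s = a :: rest`) and
`t = (t_1, …, t_p)` (possibly empty), both connected sums converge and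
`Z(s_1+1, s_2, …, s_l ; t) = Z(s ; 1, t_1, …, t_p)`. -/
theorem connSum_shift (a : ℕ) (ha : 1 ≤ a) (rest t : List ℕ)
    (hrest : ∀ x ∈ rest, 1 ≤ x) (ht : ∀ x ∈ t, 1 ≤ x) :
    Summable (connTerm ((a + 1) :: rest) t) ∧
    Summable (connTerm (a :: rest) (1 :: t)) ∧
    connSum ((a + 1) :: rest) t = connSum (a :: rest) (1 :: t) := by
  classical
  have hA : Summable (connTerm ((a + 1) :: rest) t) := summable_termA a ha rest t hrest ht
  have hfib := hasSum_fiber a rest t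
  let J := Σ x : Chain (rest.length + 1) × Chain t.length, {k : ℕ // headF x.2.1 < k}
  let sig : J → ℝ := fun z => connTerm (a :: rest) (1 :: t)
    (z.1.1, chainCons z.1.2 z.2.1 z.2.2)
  have hsig_nonneg : ∀ z : J, 0 ≤ sig z := fun z => connTerm_nonneg _ _ _
  have hsig : Summable sig := by
    apply (summable_sigma_of_nonneg hsig_nonneg).mpr
    exact ⟨fun x => (hfib x).summable, hA.congr (fun x => ((hfib x).tsum_eq).symm)⟩
  let E : (Chain (rest.length + 1) × Chain (t.length + 1)) ≃ J :=
    { toFun := fun z => ⟨(z.1, (chainEquiv t.length z.2).1), (chainEquiv t.length z.2).2⟩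
      invFun := fun w => (w.1.1, (chainEquiv t.length).symm ⟨w.1.2, w.2⟩)
      left_inv := fun z => by
        show (z.1, (chainEquiv t.length).symm
          ⟨(chainEquiv t.length z.2).1, (chainEquiv t.length z.2).2⟩) = z
        rw [Sigma.eta, (chainEquiv t.length).symm_apply_apply]
      right_inv := fun w => by
        obtain ⟨⟨c, m⟩, k⟩ := w
        show (⟨((c, (chainEquiv t.length ((chainEquiv t.length).symm ⟨m, k⟩)).1)),
          (chainEquiv t.length ((chainEquiv t.length).symm ⟨m, k⟩)).2⟩ : J) = ⟨(c, m), k⟩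
        rw [(chainEquiv t.length).apply_symm_apply] }
  have hcomp : ∀ z, sig (E z) = connTerm (a :: rest) (1 :: t) z := by
    intro z
    show connTerm (a :: rest) (1 :: t)
      (z.1, chainCons (chainEquiv t.length z.2).1
        ((chainEquiv t.length z.2).2).1 ((chainEquiv t.length z.2).2).2) = _
    have h : chainCons (chainEquiv t.length z.2).1
        ((chainEquiv t.length z.2).2).1 ((chainEquiv t.length z.2).2).2 = z.2 :=
      (chainEquiv t.length).symm_apply_apply z.2
    rw [h]
    rfl
  have hB : Summable (connTerm (a :: rest) (1 :: t)) :=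
    ((E.summable_iff (f := sig)).mpr hsig).congr hcomp
  refine ⟨hA, hB, ?_⟩
  calc connSum ((a + 1) :: rest) t
      = ∑' x : Chain (rest.length + 1) × Chain t.length,
          connTerm ((a + 1) :: rest) t x := rfl
    _ = ∑' x : Chain (rest.length + 1) × Chain t.length, ∑' k, sig ⟨x, k⟩ :=
        tsum_congr (fun x => ((hfib x).tsum_eq).symm)
    _ = ∑' w, sig w := (Summable.tsum_sigma hsig).symm
    _ = ∑' z, sig (E z) := (E.tsum_eq sig).symm
    _ = ∑' z, connTerm (a :: rest) (1 :: t) z := tsum_congr hcomp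
    _ = connSum (a :: rest) (1 :: t) := rfl
end

section
/- (q-telescoping lemma) Let 0 < q < 1 and 0 ≤ x < 1 be real numbers, let n ≥ 1 and m ≥ 0 be integers. Then the series Σ_{k=m+1}^{∞} (1/([k]_q − q^k x)) · q^{kn} f_q(k;x) f_q(n;x) / f_q(k+n;x) converges and equals (q^n/[n]_q) · q^{mn} f_q(m;x) f_q(n;x) / f_q(m+n;x). -/
/-- The `q`-integer `[n]_q = (1 - q^n)/(1 - q)`. -/
noncomputable def qnum (q : ℝ) (n : ℕ) : ℝ := (1 - q ^ n) / (1 - q)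

/-- `f_q(n; x) = ∏_{j=1}^n ([j]_q - q^j x)`, with `f_q(0; x) = 1`. -/
noncomputable def fq (q x : ℝ) (n : ℕ) : ℝ :=
  ∏ j ∈ Finset.range n, (qnum q (j + 1) - q ^ (j + 1) * x)

section aux

variable {q x : ℝ} (hq0 : 0 < q) (hq1 : q < 1) (hx0 : 0 ≤ x) (hx1 : x < 1)

include hq0 hq1 hx0 hx1 in
lemma d_ge (j : ℕ) (hj : 1 ≤ j) : 1 - q * x ≤ qnum q j - q ^ j * x := by
  have h1q : 0 < 1 - q := by linarith
  have hqj : q ^ j ≤ q := by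
    calc q ^ j ≤ q ^ 1 := pow_le_pow_of_le_one hq0.le hq1.le hj
    _ = q := pow_one q
  have h1 : (1:ℝ) ≤ qnum q j := by
    rw [qnum, le_div_iff₀ h1q]
    nlinarith
  nlinarith

include hq0 hq1 hx0 hx1 in
lemma d_pos (j : ℕ) (hj : 1 ≤ j) : 0 < qnum q j - q ^ j * x := by
  have := d_ge hq0 hq1 hx0 hx1 j hj
  nlinarith

include hq0 hq1 hx0 hx1 in
lemma fq_pos (k : ℕ) : 0 < fq q x k := by
  rw [fq]
  exact Finset.prod_pos fun j _ => d_pos hq0 hq1 hx0 hx1 (j + 1) (by omega)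

lemma fq_succ (k : ℕ) :
    fq q x (k + 1) = fq q x k * (qnum q (k + 1) - q ^ (k + 1) * x) :=
  Finset.prod_range_succ _ _

include hq0 hq1 in
lemma qnum_pos (n : ℕ) (hn : 1 ≤ n) : 0 < qnum q n := by
  have h1q : 0 < 1 - q := by linarith
  have : q ^ n < 1 := pow_lt_one₀ hq0.le hq1 (by omega)
  rw [qnum]
  exact div_pos (by linarith) h1q

include hq0 hq1 hx0 hx1 in
lemma fq_lower (k n : ℕ) : fq q x k * (1 - q * x) ^ n ≤ fq q x (k + n) := by
  induction n with
  | zero => simp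
  | succ n ih =>
      have h1 : 1 - q * x ≤ qnum q (k + n + 1) - q ^ (k + n + 1) * x :=
        d_ge hq0 hq1 hx0 hx1 _ (by omega)
      have h2 : 0 < 1 - q * x := by nlinarith
      have h3 : 0 < fq q x (k + n) := fq_pos hq0 hq1 hx0 hx1 _
      calc fq q x k * (1 - q * x) ^ (n + 1)
          = (fq q x k * (1 - q * x) ^ n) * (1 - q * x) := by ring
        _ ≤ fq q x (k + n) * (qnum q (k + n + 1) - q ^ (k + n + 1) * x) := by
            apply mul_le_mul ih h1 h2.le h3.le
        _ = fq q x (k + n + 1) := (fq_succ _).symm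

lemma alg_identity (a b A N F Fn P qn : ℝ) (ha : a ≠ 0) (hb : b ≠ 0)
    (hA : A ≠ 0) (hN : N ≠ 0) (hrel : b - qn * a = N) :
    (1 / a) * (P * qn * (F * a) * Fn / (A * b)) =
    (qn / N) * (P * F * Fn / A - P * qn * (F * a) * Fn / (A * b)) := by
  subst hrel
  field_simp
  have hX : -(qn * a) + b ≠ 0 := by intro h; apply hN; linarith
  field_simp

include hq0 hq1 hx0 hx1 in
lemma key_identity (n : ℕ) (hn : 1 ≤ n) (k : ℕ) :
    (1 / (qnum q (k + 1) - q ^ (k + 1) * x)) *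
      (q ^ ((k + 1) * n) * fq q x (k + 1) * fq q x n / fq q x (k + 1 + n)) =
    (q ^ n / qnum q n) *
      (q ^ (k * n) * fq q x k * fq q x n / fq q x (k + n) -
       q ^ ((k + 1) * n) * fq q x (k + 1) * fq q x n / fq q x (k + 1 + n)) := by
  have h1q : (1:ℝ) - q ≠ 0 := by linarith
  have hd1 : qnum q (k + 1) - q ^ (k + 1) * x ≠ 0 :=
    (d_pos hq0 hq1 hx0 hx1 _ (by omega)).ne'
  have hd2 : qnum q (k + n + 1) - q ^ (k + n + 1) * x ≠ 0 :=
    (d_pos hq0 hq1 hx0 hx1 _ (by omega)).ne'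
  have hfkn : fq q x (k + n) ≠ 0 := (fq_pos hq0 hq1 hx0 hx1 _).ne'
  have hqn : qnum q n ≠ 0 := (qnum_pos hq0 hq1 n hn).ne'
  have e1 : fq q x (k + 1) = fq q x k * (qnum q (k + 1) - q ^ (k + 1) * x) := fq_succ k
  have e2 : fq q x (k + 1 + n) =
      fq q x (k + n) * (qnum q (k + n + 1) - q ^ (k + n + 1) * x) := by
    have h : k + 1 + n = (k + n) + 1 := by omega
    rw [h, fq_succ]
  have epow : q ^ ((k + 1) * n) = q ^ (k * n) * q ^ n := by
    rw [← pow_add]; ring_nf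
  have hrel : (qnum q (k + n + 1) - q ^ (k + n + 1) * x) -
      q ^ n * (qnum q (k + 1) - q ^ (k + 1) * x) = qnum q n := by
    rw [qnum, qnum, qnum]
    field_simp
    ring
  rw [e1, e2, epow]
  exact alg_identity _ _ _ _ _ _ _ _ hd1 hd2 hfkn hqn hrel

end aux

/-- **q-telescoping lemma**: for `0 < q < 1`, `0 ≤ x < 1`, `n ≥ 1`, `m ≥ 0`,
`Σ_{k > m} (1/([k]_q - q^k x)) · q^{kn} f_q(k;x) f_q(n;x)/f_q(k+n;x)`
converges to `(q^n/[n]_q) · q^{mn} f_q(m;x) f_q(n;x)/f_q(m+n;x)`. -/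
theorem q_telescoping (q x : ℝ) (hq0 : 0 < q) (hq1 : q < 1)
    (hx0 : 0 ≤ x) (hx1 : x < 1) (n m : ℕ) (hn : 1 ≤ n) :
    HasSum
      (fun k : {k : ℕ // m < k} =>
        (1 / (qnum q k.1 - q ^ (k.1 : ℕ) * x)) *
          (q ^ (k.1 * n) * fq q x k.1 * fq q x n / fq q x (k.1 + n)))
      ((q ^ n / qnum q n) *
        (q ^ (m * n) * fq q x m * fq q x n / fq q x (m + n))) := by
  -- setup
  set g : ℕ → ℝ := fun k => q ^ (k * n) * fq q x k * fq q x n / fq q x (k + n) with hg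
  set c : ℝ := q ^ n / qnum q n with hc
  have hcpos : 0 < c := by
    have := qnum_pos hq0 hq1 n hn
    have := pow_pos hq0 n
    positivity
  -- equivalence ℕ ≃ {k // m < k}
  let e : ℕ ≃ {k : ℕ // m < k} :=
    { toFun := fun i => ⟨m + 1 + i, by omega⟩
      invFun := fun k => k.1 - (m + 1)
      left_inv := fun i => by show m + 1 + i - (m + 1) = i; omega
      right_inv := fun k => by
        have := k.2
        apply Subtype.ext
        show m + 1 + (k.1 - (m + 1)) = k.1
        omega }
  rw [← e.hasSum_iff]
  have hterm : ∀ i : ℕ,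
      ((fun k : {k : ℕ // m < k} =>
        (1 / (qnum q k.1 - q ^ (k.1 : ℕ) * x)) *
          (q ^ (k.1 * n) * fq q x k.1 * fq q x n / fq q x (k.1 + n))) ∘ e) i
      = c * (g (m + i) - g (m + i + 1)) := by
    intro i
    have hkey := key_identity hq0 hq1 hx0 hx1 n hn (m + i)
    have hmi : m + 1 + i = (m + i) + 1 := by omega
    simp only [Function.comp, e, Equiv.coe_fn_mk, hmi]
    rw [hkey]
  rw [funext hterm]
  -- nonnegativity of differences
  have hdiff_nonneg : ∀ i : ℕ, 0 ≤ g (m + i) - g (m + i + 1) := by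
    intro i
    have hkey := (key_identity hq0 hq1 hx0 hx1 n hn (m + i)).symm
    have hlhs : 0 ≤ (1 / (qnum q (m + i + 1) - q ^ (m + i + 1) * x)) *
        (q ^ ((m + i + 1) * n) * fq q x (m + i + 1) * fq q x n / fq q x (m + i + 1 + n)) := by
      have h1 := d_pos hq0 hq1 hx0 hx1 (m + i + 1) (by omega)
      have h2 := fq_pos hq0 hq1 hx0 hx1 (m + i + 1)
      have h3 := fq_pos hq0 hq1 hx0 hx1 n
      have h4 := fq_pos hq0 hq1 hx0 hx1 (m + i + 1 + n)
      have h5 := pow_pos hq0 ((m + i + 1) * n)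
      positivity
    rw [← hkey] at hlhs
    exact nonneg_of_mul_nonneg_right hlhs hcpos
  -- limit of g
  have hg_tendsto : Filter.Tendsto g Filter.atTop (nhds 0) := by
    have h2 : 0 < 1 - q * x := by nlinarith
    have hub : ∀ k : ℕ, g k ≤ (fq q x n / (1 - q * x) ^ n) * (q ^ n) ^ k := by
      intro k
      have hlow := fq_lower hq0 hq1 hx0 hx1 k n
      have hfk := fq_pos hq0 hq1 hx0 hx1 k
      have hfn := fq_pos hq0 hq1 hx0 hx1 n
      have hfkn := fq_pos hq0 hq1 hx0 hx1 (k + n)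
      have h3 : (0:ℝ) < (1 - q * x) ^ n := by positivity
      have hb : 0 < fq q x k * (1 - q * x) ^ n := by positivity
      have step1 : g k ≤ q ^ (k * n) * fq q x k * fq q x n / (fq q x k * (1 - q * x) ^ n) := by
        rw [hg]
        exact (div_le_div_iff_of_pos_left (by positivity) hfkn hb).mpr hlow
      calc g k ≤ q ^ (k * n) * fq q x k * fq q x n / (fq q x k * (1 - q * x) ^ n) := step1
        _ = (fq q x n / (1 - q * x) ^ n) * (q ^ n) ^ k := by
            rw [← pow_mul]
            field_simp
            ring
    have hlb : ∀ k : ℕ, 0 ≤ g k := by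
      intro k
      have hfk := fq_pos hq0 hq1 hx0 hx1 k
      have hfn := fq_pos hq0 hq1 hx0 hx1 n
      have hfkn := fq_pos hq0 hq1 hx0 hx1 (k + n)
      have hqk := pow_pos hq0 (k * n)
      rw [hg]
      positivity
    have hgeo : Filter.Tendsto (fun k : ℕ => (fq q x n / (1 - q * x) ^ n) * (q ^ n) ^ k)
        Filter.atTop (nhds 0) := by
      have hqn1 : q ^ n < 1 := pow_lt_one₀ hq0.le hq1 (by omega)
      have := tendsto_pow_atTop_nhds_zero_of_lt_one (pow_pos hq0 n).le hqn1
      simpa using this.const_mul (fq q x n / (1 - q * x) ^ n)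
    exact squeeze_zero hlb hub hgeo
  -- telescoping
  have hsum : HasSum (fun i : ℕ => g (m + i) - g (m + i + 1)) (g m) := by
    rw [hasSum_iff_tendsto_nat_of_nonneg hdiff_nonneg]
    have hps : ∀ N : ℕ, ∑ i ∈ Finset.range N, (g (m + i) - g (m + i + 1))
        = g m - g (m + N) := by
      intro N
      have := Finset.sum_range_sub' (fun i => g (m + i)) N
      simpa [add_assoc] using this
    simp only [hps]
    have h1 : Filter.Tendsto (fun N : ℕ => g (m + N)) Filter.atTop (nhds 0) := by
      have := hg_tendsto.comp (Filter.tendsto_add_atTop_nat m)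
      simpa [Function.comp_def, Nat.add_comm] using this
    simpa using (tendsto_const_nhds (x := g m)).sub h1
  have := hsum.mul_left c
  simpa using this
end

section
/- (Duality for q-connected sums) Let 0 < q < 1 and 0 ≤ x < 1 be real numbers and let s be an admissible index with dual s†. Then Z_q(s ; ∅ ; x) = Z_q(∅ ; s† ; x). -/
/-- The `q`-connected sum `Z_q(s ; t ; x)` of Seki–Yamamoto.  (When one of the
tuples is empty its head is `0` and the connector factor equals `1`.) -/
noncomputable def Zq (q x : ℝ) (s t : List ℕ) : ℝ :=
  ∑' p : {n : Fin s.length → ℕ // StrictAnti n ∧ ∀ i, 0 < n i} ×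
         {m : Fin t.length → ℕ // StrictAnti m ∧ ∀ i, 0 < m i},
    (q ^ (headF p.1.1 * headF p.2.1) * fq q x (headF p.1.1) * fq q x (headF p.2.1) /
        fq q x (headF p.1.1 + headF p.2.1)) *
      (∏ i, q ^ ((s.get i - 1) * p.1.1 i) /
        ((qnum q (p.1.1 i) - q ^ (p.1.1 i) * x) * qnum q (p.1.1 i) ^ (s.get i - 1))) *
      (∏ j, q ^ ((t.get j - 1) * p.2.1 j) /
        ((qnum q (p.2.1 j) - q ^ (p.2.1 j) * x) * qnum q (p.2.1 j) ^ (t.get j - 1)))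

open scoped ENNReal
open Filter

namespace ZqD

variable {q x : ℝ}

noncomputable def wR (q x : ℝ) (a n : ℕ) : ℝ :=
  q ^ ((a - 1) * n) / ((qnum q n - q ^ n * x) * qnum q n ^ (a - 1))

noncomputable def CR (q x : ℝ) (n m : ℕ) : ℝ :=
  q ^ (n * m) * fq q x n * fq q x m / fq q x (n + m)

section pos
variable (hq0 : 0 < q) (hq1 : q < 1) (hx0 : 0 ≤ x) (hx1 : x < 1)
include hq0 hq1

lemma qnum_pos {n : ℕ} (hn : 1 ≤ n) : 0 < qnum q n := by
  have : q ^ n < 1 := pow_lt_one₀ hq0.le hq1 (by omega)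
  exact div_pos (by linarith) (by linarith)

lemma one_le_qnum {n : ℕ} (hn : 1 ≤ n) : 1 ≤ qnum q n := by
  rw [qnum, le_div_iff₀ (by linarith)]
  have : q ^ n ≤ q ^ 1 := pow_le_pow_of_le_one hq0.le hq1.le hn
  simpa using by linarith [this]

include hx0 hx1 in
lemma den_ge {n : ℕ} (hn : 1 ≤ n) : 1 - x ≤ qnum q n - q ^ n * x := by
  have h1 := one_le_qnum hq0 hq1 hn
  have h2 : q ^ n * x ≤ x := by
    have : q ^ n ≤ 1 := pow_le_one₀ hq0.le hq1.le
    nlinarith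
  linarith

include hx0 hx1 in
lemma den_pos {n : ℕ} (hn : 1 ≤ n) : 0 < qnum q n - q ^ n * x :=
  lt_of_lt_of_le (by linarith) (den_ge hq0 hq1 hx0 hx1 hn)

include hx0 hx1 in
lemma fq_pos (n : ℕ) : 0 < fq q x n :=
  Finset.prod_pos fun j _ => den_pos hq0 hq1 hx0 hx1 (Nat.succ_le_succ (Nat.zero_le j))

include hx0 hx1 in
lemma CR_nonneg (n m : ℕ) : 0 ≤ CR q x n m :=
  div_nonneg (mul_nonneg (mul_nonneg (pow_nonneg hq0.le _) (fq_pos hq0 hq1 hx0 hx1 n).le)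
    (fq_pos hq0 hq1 hx0 hx1 m).le) (fq_pos hq0 hq1 hx0 hx1 _).le

include hx0 hx1 in
lemma wR_nonneg {a n : ℕ} (hn : 1 ≤ n) : 0 ≤ wR q x a n := by
  have h1 := den_pos hq0 hq1 hx0 hx1 hn
  have h2 := qnum_pos hq0 hq1 hn
  exact div_nonneg (pow_nonneg hq0.le _) (by positivity)

end pos

lemma fq_succ (q x : ℝ) (n : ℕ) :
    fq q x (n + 1) = fq q x n * (qnum q (n + 1) - q ^ (n + 1) * x) :=
  Finset.prod_range_succ _ _

lemma CR_comm (q x : ℝ) (n m : ℕ) : CR q x n m = CR q x m n := by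
  rw [CR, CR, Nat.mul_comm, Nat.add_comm]; ring

lemma CR_zero_left (hq0 : 0 < q) (hq1 : q < 1) (hx0 : 0 ≤ x) (hx1 : x < 1) (m : ℕ) :
    CR q x 0 m = 1 := by
  have h := (fq_pos hq0 hq1 hx0 hx1 m).ne'
  have h0 : fq q x 0 = 1 := Finset.prod_range_zero _
  rw [CR, h0]
  simp [div_self h]

lemma CR_zero_right (hq0 : 0 < q) (hq1 : q < 1) (hx0 : 0 ≤ x) (hx1 : x < 1) (n : ℕ) :
    CR q x n 0 = 1 := by rw [CR_comm]; exact CR_zero_left hq0 hq1 hx0 hx1 n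

lemma qnum_key (hq1 : q < 1) (n m : ℕ) :
    qnum q (n + m + 1) - q ^ n * qnum q (m + 1) = qnum q n := by
  have hq : (1 : ℝ) - q ≠ 0 := by intro h; nlinarith [h]
  rw [qnum, qnum, qnum]
  field_simp
  ring

section key
variable {q x : ℝ} (hq0 : 0 < q) (hq1 : q < 1) (hx0 : 0 ≤ x) (hx1 : x < 1)
include hq0 hq1 hx0 hx1

/-- The fundamental telescoping step. -/
lemma step {n : ℕ} (hn : 1 ≤ n) (k : ℕ) :
    CR q x n (k + 1) * wR q x 1 (k + 1) =
      q ^ n / qnum q n * (CR q x n k - CR q x n (k + 1)) := by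
  have hqn : (0:ℝ) < qnum q n := qnum_pos hq0 hq1 hn
  have hd1 : (0:ℝ) < qnum q (k+1) - q ^ (k+1) * x := den_pos hq0 hq1 hx0 hx1 (by omega)
  have hFk : (0:ℝ) < fq q x k := fq_pos hq0 hq1 hx0 hx1 k
  have hFn : (0:ℝ) < fq q x n := fq_pos hq0 hq1 hx0 hx1 n
  have hFnk : (0:ℝ) < fq q x (n + k) := fq_pos hq0 hq1 hx0 hx1 (n+k)
  have hkey : qnum q (n + k + 1) = qnum q n + q ^ n * qnum q (k + 1) := by
    have := qnum_key (q := q) hq1 n k; linarith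
  have e1 : fq q x (k + 1) = fq q x k * (qnum q (k+1) - q ^ (k+1) * x) := fq_succ q x k
  have e2 : fq q x (n + (k + 1)) =
      fq q x (n + k) * (qnum q (n+k+1) - q ^ (n+k+1) * x) := fq_succ q x (n+k)
  rw [CR, CR, wR, e1, e2, hkey]
  have epow : q ^ (n + k + 1) = q ^ n * q ^ (k+1) := by rw [← pow_add]; ring_nf
  rw [epow]
  have hdd : (0:ℝ) < qnum q n + q ^ n * qnum q (k+1) - q ^ n * q ^ (k+1) * x := by
    have : qnum q n + q ^ n * (qnum q (k+1) - q ^ (k+1) * x) > 0 := by positivity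
    linarith [this]
  simp only [Nat.sub_self, pow_zero, mul_one, Nat.zero_mul]
  have hdd' : 0 < qnum q n + qnum q (k + 1) * q ^ n - q ^ (k + 1) * x * q ^ n := by linarith [hdd]
  field_simp
  ring
end key

section key2
variable {q x : ℝ} (hq0 : 0 < q) (hq1 : q < 1) (hx0 : 0 ≤ x) (hx1 : x < 1)
include hq0 hq1 hx0 hx1

lemma fq_mul_le (m n : ℕ) : fq q x m * (1 - x) ^ n ≤ fq q x (m + n) := by
  induction n with
  | zero => simp
  | succ n ih =>
      rw [pow_succ, show m + (n+1) = (m+n)+1 from rfl, fq_succ]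
      have h1 : (1:ℝ) - x ≤ qnum q (m+n+1) - q ^ (m+n+1) * x :=
        den_ge hq0 hq1 hx0 hx1 (by omega)
      have h2 : (0:ℝ) ≤ fq q x m * (1-x)^n := by
        exact mul_nonneg (fq_pos hq0 hq1 hx0 hx1 m).le (pow_nonneg (by linarith) n)
      nlinarith [fq_pos hq0 hq1 hx0 hx1 (m+n), mul_le_mul_of_nonneg_right ih (by linarith : (0:ℝ) ≤ 1 - x)]

lemma CR_le (n m : ℕ) :
    CR q x n m ≤ (fq q x n / (1 - x) ^ n) * (q ^ n) ^ m := by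
  have hFn := fq_pos hq0 hq1 hx0 hx1 n
  have hFm := fq_pos hq0 hq1 hx0 hx1 m
  have hFnm := fq_pos hq0 hq1 hx0 hx1 (n+m)
  have hx' : (0:ℝ) < 1 - x := by linarith
  have hb : fq q x m * (1-x)^n ≤ fq q x (n + m) := by
    rw [Nat.add_comm]; exact fq_mul_le hq0 hq1 hx0 hx1 m n
  rw [CR, div_le_iff₀ hFnm, pow_mul]
  have h1 : (fq q x n / (1-x)^n) * (q^n)^m * (fq q x m * (1-x)^n) ≤
      (fq q x n / (1-x)^n) * (q^n)^m * fq q x (n+m) := by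
    apply mul_le_mul_of_nonneg_left hb
    have h3 : (0:ℝ) < (1-x)^n := by positivity
    positivity
  calc (q ^ n) ^ m * fq q x n * fq q x m
      = (fq q x n / (1-x)^n) * (q^n)^m * (fq q x m * (1-x)^n) := by
        field_simp
    _ ≤ _ := h1

lemma CR_tendsto {n : ℕ} (hn : 1 ≤ n) (M : ℕ) :
    Tendsto (fun G : ℕ => CR q x n (M + G)) atTop (nhds 0) := by
  have hr0 : (0:ℝ) ≤ q ^ n := by positivity
  have hr1 : q ^ n < 1 := pow_lt_one₀ hq0.le hq1 (by omega)
  have hgeo : Tendsto (fun G : ℕ => (fq q x n / (1-x)^n) * ((q^n)^M * (q^n)^G))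
      atTop (nhds 0) := by
    have := tendsto_pow_atTop_nhds_zero_of_lt_one hr0 hr1
    have h2 := this.const_mul ((fq q x n / (1-x)^n) * (q^n)^M)
    simpa [mul_assoc, mul_comm, mul_left_comm] using h2
  apply squeeze_zero (fun G => CR_nonneg hq0 hq1 hx0 hx1 n (M+G)) _ hgeo
  intro G
  calc CR q x n (M+G) ≤ (fq q x n / (1-x)^n) * (q^n)^(M+G) :=
        CR_le hq0 hq1 hx0 hx1 n (M+G)
    _ = (fq q x n / (1-x)^n) * ((q^n)^M * (q^n)^G) := by rw [pow_add]

lemma keyR {n : ℕ} (hn : 1 ≤ n) (M : ℕ) :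
    HasSum (fun g : ℕ => CR q x n (M + g + 1) * wR q x 1 (M + g + 1))
      (q ^ n / qnum q n * CR q x n M) := by
  have hnn : ∀ g : ℕ, 0 ≤ CR q x n (M + g + 1) * wR q x 1 (M + g + 1) := fun g =>
    mul_nonneg (CR_nonneg hq0 hq1 hx0 hx1 _ _) (wR_nonneg hq0 hq1 hx0 hx1 (by omega))
  rw [hasSum_iff_tendsto_nat_of_nonneg hnn]
  have hps : ∀ G : ℕ, ∑ g ∈ Finset.range G, CR q x n (M + g + 1) * wR q x 1 (M + g + 1)
      = q ^ n / qnum q n * (CR q x n M - CR q x n (M + G)) := by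
    intro G
    have : ∀ g, CR q x n (M + g + 1) * wR q x 1 (M + g + 1) =
        q ^ n / qnum q n * ((fun i => CR q x n (M + i)) g - (fun i => CR q x n (M + i)) (g+1)) := by
      intro g
      have := step hq0 hq1 hx0 hx1 hn (M + g)
      exact this
    rw [Finset.sum_congr rfl (fun g _ => this g), ← Finset.mul_sum,
      Finset.sum_range_sub' (fun i => CR q x n (M + i)) G]
    simp
  simp only [hps]
  have := ((tendsto_const_nhds (x := CR q x n M)).sub (CR_tendsto hq0 hq1 hx0 hx1 hn M)).const_mul
    (q ^ n / qnum q n)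
  simpa using this
end key2

noncomputable def wE (q x : ℝ) (a n : ℕ) : ℝ≥0∞ := ENNReal.ofReal (wR q x a n)
noncomputable def CE (q x : ℝ) (n m : ℕ) : ℝ≥0∞ := ENNReal.ofReal (CR q x n m)

section elayer
variable {q x : ℝ} (hq0 : 0 < q) (hq1 : q < 1) (hx0 : 0 ≤ x) (hx1 : x < 1)
include hq0 hq1 hx0 hx1

lemma CE_zero_left (m : ℕ) : CE q x 0 m = 1 := by
  rw [CE, CR_zero_left hq0 hq1 hx0 hx1, ENNReal.ofReal_one]

lemma CE_zero_right (n : ℕ) : CE q x n 0 = 1 := by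
  rw [CE, CR_zero_right hq0 hq1 hx0 hx1, ENNReal.ofReal_one]

lemma keyE {n : ℕ} (hn : 1 ≤ n) (M : ℕ) :
    ∑' g : ℕ, CE q x n (M + g + 1) * wE q x 1 (M + g + 1) =
      ENNReal.ofReal (q ^ n / qnum q n) * CE q x n M := by
  have h := keyR hq0 hq1 hx0 hx1 hn M
  have hnn : ∀ g : ℕ, 0 ≤ CR q x n (M + g + 1) * wR q x 1 (M + g + 1) := fun g =>
    mul_nonneg (CR_nonneg hq0 hq1 hx0 hx1 _ _) (wR_nonneg hq0 hq1 hx0 hx1 (by omega))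
  calc ∑' g : ℕ, CE q x n (M + g + 1) * wE q x 1 (M + g + 1)
      = ∑' g : ℕ, ENNReal.ofReal (CR q x n (M + g + 1) * wR q x 1 (M + g + 1)) := by
        refine tsum_congr fun g => ?_
        rw [CE, wE, ENNReal.ofReal_mul (CR_nonneg hq0 hq1 hx0 hx1 _ _)]
    _ = ENNReal.ofReal (∑' g : ℕ, CR q x n (M + g + 1) * wR q x 1 (M + g + 1)) :=
        (ENNReal.ofReal_tsum_of_nonneg hnn h.summable).symm
    _ = ENNReal.ofReal (q ^ n / qnum q n * CR q x n M) := by rw [h.tsum_eq]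
    _ = _ := by
        rw [ENNReal.ofReal_mul (div_nonneg (pow_nonneg hq0.le n) (qnum_pos hq0 hq1 hn).le), CE]

lemma keyE' {m : ℕ} (hm : 1 ≤ m) (M : ℕ) :
    ∑' g : ℕ, CE q x (M + g + 1) m * wE q x 1 (M + g + 1) =
      ENNReal.ofReal (q ^ m / qnum q m) * CE q x M m := by
  have : ∀ g, CE q x (M + g + 1) m = CE q x m (M + g + 1) := fun g => by
    rw [CE, CE, CR_comm]
  simp only [this]
  rw [keyE hq0 hq1 hx0 hx1 hm M, CE, CE, CR_comm]

lemma wE_succ {a n : ℕ} (ha : 1 ≤ a) (hn : 1 ≤ n) :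
    wE q x (a + 1) n = wE q x a n * ENNReal.ofReal (q ^ n / qnum q n) := by
  obtain ⟨b, rfl⟩ : ∃ b, a = b + 1 := ⟨a - 1, by omega⟩
  have h : wR q x (b + 1 + 1) n = wR q x (b + 1) n * (q ^ n / qnum q n) := by
    have hd := den_pos hq0 hq1 hx0 hx1 hn
    have hqn := qnum_pos hq0 hq1 hn
    rw [wR, wR]
    simp only [Nat.add_sub_cancel]
    field_simp
    ring
  rw [wE, wE, h, ENNReal.ofReal_mul (wR_nonneg hq0 hq1 hx0 hx1 hn)]
end elayer

abbrev Dt (l : ℕ) := {n : Fin l → ℕ // StrictAnti n ∧ ∀ i, 0 < n i}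

instance : Unique (Dt 0) where
  default := ⟨fun i => i.elim0, fun a => a.elim0, fun i => i.elim0⟩
  uniq a := Subtype.ext (funext fun i => i.elim0)

lemma headF_zero (n : Fin 0 → ℕ) : headF n = 0 := rfl

lemma headF_succ {l : ℕ} (n : Fin (l + 1) → ℕ) : headF n = n 0 := by
  rw [headF, dif_pos (Nat.succ_pos l)]
  exact congrArg n (Fin.ext (by simp))

def tailD {l : ℕ} (n : Dt (l + 1)) : Dt l :=
  ⟨fun i => n.1 i.succ, fun a b h => n.2.1 (Fin.succ_lt_succ_iff.mpr h),
    fun i => n.2.2 i.succ⟩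

lemma headF_tailD_lt {l : ℕ} (n : Dt (l + 1)) : headF (tailD n).1 < n.1 0 := by
  cases l with
  | zero => rw [headF_zero]; exact n.2.2 0
  | succ m =>
      rw [headF_succ]
      exact n.2.1 (by simp [Fin.lt_def])

def consD {l : ℕ} (g : ℕ) (m : Dt l) : Dt (l + 1) := by
  refine ⟨Fin.cons (headF m.1 + g + 1) m.1, ?_, ?_⟩
  · have hlt : ∀ i : Fin l, m.1 i < headF m.1 + g + 1 := by
      intro i
      have h0 : (0 : ℕ) < l := i.pos
      have : headF m.1 = m.1 ⟨0, h0⟩ := by rw [headF, dif_pos h0]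
      have hle : m.1 i ≤ m.1 ⟨0, h0⟩ := m.2.1.antitone (Fin.mk_le_of_le_val (Nat.zero_le _))
      omega
    intro a b hab
    rcases Fin.eq_zero_or_eq_succ b with rfl | ⟨j, rfl⟩
    · exact absurd hab (Fin.not_lt_zero a)
    · rcases Fin.eq_zero_or_eq_succ a with rfl | ⟨i, rfl⟩
      · simpa only [Fin.cons_zero, Fin.cons_succ] using hlt j
      · simp only [Fin.cons_succ]
        exact m.2.1 (Fin.succ_lt_succ_iff.mp hab)
  · intro i
    rcases Fin.eq_zero_or_eq_succ i with rfl | ⟨j, rfl⟩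
    · simp only [Fin.cons_zero]; omega
    · simp only [Fin.cons_succ]; exact m.2.2 j

lemma consD_val {l : ℕ} (g : ℕ) (m : Dt l) :
    (consD g m).1 = Fin.cons (headF m.1 + g + 1) m.1 := rfl

lemma tailD_val {l : ℕ} (n : Dt (l + 1)) : (tailD n).1 = fun i => n.1 i.succ := rfl

lemma consD_head {l : ℕ} (g : ℕ) (m : Dt l) :
    headF (consD g m).1 = headF m.1 + g + 1 := by
  rw [headF_succ]; rfl

def eD (l : ℕ) : Dt (l + 1) ≃ Dt l × ℕ where
  toFun n := (tailD n, n.1 0 - headF (tailD n).1 - 1)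
  invFun p := consD p.2 p.1
  left_inv n := by
    show consD (n.1 0 - headF (tailD n).1 - 1) (tailD n) = n
    apply Subtype.ext; funext i
    rw [consD_val]
    rcases Fin.eq_zero_or_eq_succ i with rfl | ⟨j, rfl⟩
    · rw [Fin.cons_zero]
      have h1 := headF_tailD_lt n
      omega
    · rw [Fin.cons_succ, tailD_val]
  right_inv p := by
    rcases p with ⟨m, g⟩
    show (tailD (consD g m), (consD g m).1 0 - headF (tailD (consD g m)).1 - 1) = (m, g)
    have ht : tailD (consD g m) = m := by
      apply Subtype.ext; funext i
      rw [tailD_val]; rw [consD_val]; exact Fin.cons_succ _ _ i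
    refine Prod.ext ht ?_
    show (consD g m).1 0 - headF (tailD (consD g m)).1 - 1 = g
    rw [ht, consD_val, Fin.cons_zero]; omega

noncomputable def FE (q x : ℝ) (s : List ℕ) (f : ℕ → ℝ≥0∞) : ℝ≥0∞ :=
  ∑' n : Dt s.length, f (headF n.1) * ∏ i, wE q x (s.get i) (n.1 i)

lemma FE_nil (q x : ℝ) (f : ℕ → ℝ≥0∞) : FE q x [] f = f 0 := by
  rw [FE]
  simp only [List.length_nil]
  rw [tsum_eq_single (default : Dt 0) (fun b hb => absurd (Subsingleton.elim b default) hb)]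
  simp [headF_zero]

lemma FE_cons (q x : ℝ) (a : ℕ) (s : List ℕ) (f : ℕ → ℝ≥0∞) :
    FE q x (a :: s) f =
      FE q x s (fun M => ∑' g : ℕ, f (M + g + 1) * wE q x a (M + g + 1)) := by
  rw [FE, FE]
  simp only [List.length_cons]
  rw [← Equiv.tsum_eq (eD s.length).symm, ENNReal.tsum_prod']
  refine tsum_congr fun m => ?_
  rw [← ENNReal.tsum_mul_right]
  refine tsum_congr fun g => ?_
  rw [show ((eD s.length).symm (m, g)) = consD g m from rfl, consD_head, consD_val,
    Fin.prod_univ_succ]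
  simp only [Fin.cons_zero, Fin.cons_succ, List.get_eq_getElem, List.getElem_cons_zero,
    Fin.val_succ, List.getElem_cons_succ, Fin.val_zero]
  ring

lemma FE_mul_left (q x : ℝ) (s : List ℕ) (c : ℝ≥0∞) (f : ℕ → ℝ≥0∞) :
    FE q x s (fun N => c * f N) = c * FE q x s f := by
  rw [FE, FE, ← ENNReal.tsum_mul_left]
  exact tsum_congr fun n => by ring

lemma FE_tsum (q x : ℝ) (s : List ℕ) (F : ℕ → ℕ → ℝ≥0∞) :
    ∑' g : ℕ, FE q x s (F g) = FE q x s (fun N => ∑' g, F g N) := by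
  rw [FE]
  rw [show (∑' g : ℕ, FE q x s (F g)) =
    ∑' g : ℕ, ∑' n : Dt s.length, F g (headF n.1) * ∏ i, wE q x (s.get i) (n.1 i) from rfl]
  rw [ENNReal.tsum_comm]
  exact tsum_congr fun n => ENNReal.tsum_mul_right

lemma FE_congr (q x : ℝ) (s : List ℕ) {f g : ℕ → ℝ≥0∞} (h : ∀ N, f N = g N) :
    FE q x s f = FE q x s g := by
  rw [FE, FE]; exact tsum_congr fun n => by rw [h]

noncomputable def ZEF (q x : ℝ) (s t : List ℕ) : ℝ≥0∞ :=
  FE q x s (fun N => FE q x t (fun M => CE q x N M))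

lemma FE_mul_right (q x : ℝ) (s : List ℕ) (c : ℝ≥0∞) (f : ℕ → ℝ≥0∞) :
    FE q x s (fun N => f N * c) = FE q x s f * c := by
  rw [mul_comm, ← FE_mul_left]
  exact FE_congr q x s fun N => mul_comm _ _

lemma tsum_eq_toReal {ι : Type*} (f : ι → ℝ) (hf : ∀ i, 0 ≤ f i) :
    ∑' i, f i = (∑' i, ENNReal.ofReal (f i)).toReal := by
  by_cases h : Summable f
  · rw [← ENNReal.ofReal_tsum_of_nonneg hf h, ENNReal.toReal_ofReal (tsum_nonneg hf)]
  · rw [tsum_eq_zero_of_not_summable h]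
    have htop : ∑' i, ENNReal.ofReal (f i) = ⊤ := by
      by_contra hne
      have h2 := ENNReal.summable_toReal hne
      have h3 : (fun i => (ENNReal.ofReal (f i)).toReal) = f :=
        funext fun i => ENNReal.toReal_ofReal (hf i)
      rw [h3] at h2
      exact h h2
    rw [htop]
    simp

lemma FE2 (q x : ℝ) (s t : List ℕ) :
    ZEF q x s t = ∑' n : Dt s.length, ∑' m : Dt t.length,
      CE q x (headF n.1) (headF m.1) * (∏ i, wE q x (s.get i) (n.1 i)) *
        (∏ j, wE q x (t.get j) (m.1 j)) := by
  rw [ZEF]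
  simp only [FE]
  refine tsum_congr fun n => ?_
  rw [← ENNReal.tsum_mul_right]
  refine tsum_congr fun m => ?_
  ring

section bridge
variable {q x : ℝ} (hq0 : 0 < q) (hq1 : q < 1) (hx0 : 0 ≤ x) (hx1 : x < 1)
include hq0 hq1 hx0 hx1

lemma Zq_eq (s t : List ℕ) : Zq q x s t = (ZEF q x s t).toReal := by
  rw [Zq]
  have hre : ∀ p : Dt s.length × Dt t.length,
      (q ^ (headF p.1.1 * headF p.2.1) * fq q x (headF p.1.1) * fq q x (headF p.2.1) /
        fq q x (headF p.1.1 + headF p.2.1)) *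
      (∏ i, q ^ ((s.get i - 1) * p.1.1 i) /
        ((qnum q (p.1.1 i) - q ^ (p.1.1 i) * x) * qnum q (p.1.1 i) ^ (s.get i - 1))) *
      (∏ j, q ^ ((t.get j - 1) * p.2.1 j) /
        ((qnum q (p.2.1 j) - q ^ (p.2.1 j) * x) * qnum q (p.2.1 j) ^ (t.get j - 1)))
      = CR q x (headF p.1.1) (headF p.2.1) * (∏ i, wR q x (s.get i) (p.1.1 i)) *
          (∏ j, wR q x (t.get j) (p.2.1 j)) := fun p => rfl
  simp only [hre]
  have hP1 : ∀ n : Dt s.length, 0 ≤ ∏ i, wR q x (s.get i) (n.1 i) := fun n =>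
    Finset.prod_nonneg fun i _ => wR_nonneg hq0 hq1 hx0 hx1 (n.2.2 i)
  have hP2 : ∀ m : Dt t.length, 0 ≤ ∏ j, wR q x (t.get j) (m.1 j) := fun m =>
    Finset.prod_nonneg fun j _ => wR_nonneg hq0 hq1 hx0 hx1 (m.2.2 j)
  have hnn : ∀ p : Dt s.length × Dt t.length, 0 ≤
      CR q x (headF p.1.1) (headF p.2.1) * (∏ i, wR q x (s.get i) (p.1.1 i)) *
        (∏ j, wR q x (t.get j) (p.2.1 j)) := fun p =>
    mul_nonneg (mul_nonneg (CR_nonneg hq0 hq1 hx0 hx1 _ _) (hP1 p.1)) (hP2 p.2)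
  rw [tsum_eq_toReal _ hnn]
  congr 1
  rw [FE2]
  rw [ENNReal.tsum_prod']
  refine tsum_congr fun n => tsum_congr fun m => ?_
  rw [ENNReal.ofReal_mul (mul_nonneg (CR_nonneg hq0 hq1 hx0 hx1 _ _) (hP1 n)),
    ENNReal.ofReal_mul (CR_nonneg hq0 hq1 hx0 hx1 _ _),
    ENNReal.ofReal_prod_of_nonneg (fun i _ => wR_nonneg hq0 hq1 hx0 hx1 (n.2.2 i)),
    ENNReal.ofReal_prod_of_nonneg (fun j _ => wR_nonneg hq0 hq1 hx0 hx1 (m.2.2 j))]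
  rfl

lemma moveA {a : ℕ} (ha : 1 ≤ a) (s t : List ℕ) :
    ZEF q x ((a + 1) :: s) t = ZEF q x (a :: s) (1 :: t) := by
  rw [ZEF, ZEF, FE_cons, FE_cons]
  refine FE_congr q x s fun M => ?_
  refine tsum_congr fun g => ?_
  have hN1 : 1 ≤ M + g + 1 := by omega
  have h1 : FE q x (1 :: t) (fun M' => CE q x (M + g + 1) M') =
      ENNReal.ofReal (q ^ (M + g + 1) / qnum q (M + g + 1)) *
        FE q x t (fun M' => CE q x (M + g + 1) M') := by
    rw [FE_cons, ← FE_mul_left]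
    exact FE_congr q x t fun M' => keyE hq0 hq1 hx0 hx1 hN1 M'
  rw [h1, wE_succ hq0 hq1 hx0 hx1 ha hN1]
  ring

lemma moveB {b : ℕ} (hb : 1 ≤ b) (s t : List ℕ) :
    ZEF q x (1 :: s) (b :: t) = ZEF q x s ((b + 1) :: t) := by
  rw [ZEF, ZEF, FE_cons]
  refine FE_congr q x s fun M => ?_
  calc ∑' g : ℕ, FE q x (b :: t) (fun M' => CE q x (M + g + 1) M') * wE q x 1 (M + g + 1)
      = ∑' g : ℕ, FE q x t (fun M' =>
          ∑' h : ℕ, wE q x 1 (M + g + 1) *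
            (CE q x (M + g + 1) (M' + h + 1) * wE q x b (M' + h + 1))) := by
        refine tsum_congr fun g => ?_
        rw [FE_cons, ← FE_mul_right]
        refine FE_congr q x t fun M' => ?_
        rw [← ENNReal.tsum_mul_right]
        refine tsum_congr fun h => ?_
        ring
    _ = FE q x t (fun M' => ∑' g : ℕ, ∑' h : ℕ, wE q x 1 (M + g + 1) *
          (CE q x (M + g + 1) (M' + h + 1) * wE q x b (M' + h + 1))) := by
        rw [FE_tsum]
    _ = FE q x t (fun M' => ∑' h : ℕ, CE q x M (M' + h + 1) * wE q x (b + 1) (M' + h + 1)) := by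
        refine FE_congr q x t fun M' => ?_
        rw [ENNReal.tsum_comm]
        refine tsum_congr fun h => ?_
        have hK : 1 ≤ M' + h + 1 := by omega
        calc ∑' g : ℕ, wE q x 1 (M + g + 1) *
              (CE q x (M + g + 1) (M' + h + 1) * wE q x b (M' + h + 1))
            = wE q x b (M' + h + 1) * ∑' g : ℕ,
                CE q x (M + g + 1) (M' + h + 1) * wE q x 1 (M + g + 1) := by
              rw [← ENNReal.tsum_mul_left]
              exact tsum_congr fun g => by ring
          _ = wE q x b (M' + h + 1) *
                (ENNReal.ofReal (q ^ (M' + h + 1) / qnum q (M' + h + 1)) *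
                  CE q x M (M' + h + 1)) := by
              rw [keyE' hq0 hq1 hx0 hx1 hK M]
          _ = CE q x M (M' + h + 1) * wE q x (b + 1) (M' + h + 1) := by
              rw [wE_succ hq0 hq1 hx0 hx1 hb hK]
              ring
    _ = FE q x ((b + 1) :: t) (fun M' => CE q x M M') := by
        rw [FE_cons]
end bridge

section iter
variable {q x : ℝ} (hq0 : 0 < q) (hq1 : q < 1) (hx0 : 0 ≤ x) (hx1 : x < 1)
include hq0 hq1 hx0 hx1

lemma moveA_iter {a : ℕ} (ha : 1 ≤ a) (j : ℕ) (s t : List ℕ) :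
    ZEF q x ((a + j) :: s) t = ZEF q x (a :: s) (List.replicate j 1 ++ t) := by
  induction j generalizing t with
  | zero => simp
  | succ j ih =>
      have h2 := moveA hq0 hq1 hx0 hx1 (a := a + j) (by omega) s t
      rw [show a + (j + 1) = (a + j) + 1 from rfl, h2, ih (1 :: t)]
      congr 1
      rw [List.replicate_succ', List.append_assoc]
      rfl

lemma moveB_iter (j : ℕ) {b : ℕ} (hb : 1 ≤ b) (s t : List ℕ) :
    ZEF q x (List.replicate j 1 ++ s) (b :: t) = ZEF q x s ((b + j) :: t) := by
  induction j generalizing b with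
  | zero => simp
  | succ j ih =>
      rw [List.replicate_succ, List.cons_append, moveB hq0 hq1 hx0 hx1 hb,
        ih (by omega : 1 ≤ b + 1)]
      have : b + 1 + j = b + (j + 1) := by omega
      rw [this]

lemma block_move {a b : ℕ} (ha : 1 ≤ a) (hb : 1 ≤ b) (s r : List ℕ) :
    ZEF q x (((a + 1) :: List.replicate (b - 1) 1) ++ s) r =
      ZEF q x s (((b + 1) :: List.replicate (a - 1) 1) ++ r) := by
  have h1 : ((a + 1) :: List.replicate (b - 1) 1) ++ s =
      (1 + a) :: (List.replicate (b - 1) 1 ++ s) := by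
    rw [List.cons_append, Nat.add_comm 1 a]
  rw [h1, moveA_iter hq0 hq1 hx0 hx1 le_rfl a _ r]
  have h2 : List.replicate a 1 ++ r = 1 :: (List.replicate (a - 1) 1 ++ r) := by
    conv_lhs => rw [show a = (a - 1) + 1 by omega]
    rw [List.replicate_succ, List.cons_append]
  have h3 : (1 : ℕ) :: (List.replicate (b - 1) 1 ++ s) = List.replicate b 1 ++ s := by
    conv_rhs => rw [show b = (b - 1) + 1 by omega]
    rw [List.replicate_succ, List.cons_append]
  rw [h2, h3, moveB_iter hq0 hq1 hx0 hx1 b le_rfl s _]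
  rw [List.cons_append, Nat.add_comm 1 b]

lemma main_move : ∀ (k : ℕ) (u t : Fin k → ℕ), (∀ i, 1 ≤ u i) → (∀ i, 1 ≤ t i) →
    ∀ r : List ℕ,
    ZEF q x (buildIndex u t) r =
      ZEF q x [] (buildIndex (fun i => t i.rev) (fun i => u i.rev) ++ r) := by
  intro k
  induction k with
  | zero =>
      intro u t hu ht r
      simp [buildIndex]
  | succ k ih =>
      intro u t hu ht r
      have hbuild : buildIndex u t =
          ((u 0 + 1) :: List.replicate (t 0 - 1) 1) ++
            buildIndex (fun i : Fin k => u i.succ) (fun i => t i.succ) := by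
        rw [buildIndex, List.ofFn_succ, List.flatten_cons]; rfl
      rw [hbuild, block_move hq0 hq1 hx0 hx1 (hu 0) (ht 0),
        ih _ _ (fun i => hu i.succ) (fun i => ht i.succ)]
      congr 1
      have hdual : buildIndex (fun i : Fin (k + 1) => t i.rev) (fun i => u i.rev) =
          buildIndex (fun i : Fin k => t i.rev.succ) (fun i => u i.rev.succ) ++
            ((t 0 + 1) :: List.replicate (u 0 - 1) 1) := by
        rw [buildIndex, buildIndex, List.ofFn_succ']
        simp only [Fin.rev_castSucc, Fin.rev_last, List.concat_eq_append,
          List.flatten_append, List.flatten_cons, List.flatten_nil, List.append_nil]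
      rw [hdual, List.append_assoc]
end iter

end ZqD

/-- **Duality for q-connected sums**: for `0 < q < 1`, `0 ≤ x < 1` and an
admissible index `s` (written in its unique block form) with dual `s†`,
`Z_q(s ; ∅ ; x) = Z_q(∅ ; s† ; x)`. -/
theorem Zq_duality (q x : ℝ) (hq0 : 0 < q) (hq1 : q < 1)
    (hx0 : 0 ≤ x) (hx1 : x < 1) (k : ℕ) (hk : 1 ≤ k) (u t : Fin k → ℕ)
    (hu : ∀ i, 1 ≤ u i) (ht : ∀ i, 1 ≤ t i) :
    Zq q x (buildIndex u t) [] =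
      Zq q x [] (buildIndex (fun i => t i.rev) (fun i => u i.rev)) := by
  have h := ZqD.main_move hq0 hq1 hx0 hx1 k u t hu ht []
  rw [List.append_nil] at h
  rw [ZqD.Zq_eq hq0 hq1 hx0 hx1, ZqD.Zq_eq hq0 hq1 hx0 hx1, h]
end

section
/- (q-stuffle product in length 1) Let 0 < q < 1 be real and let s, t ≥ 2 be integers. Then ζ_q(s)·ζ_q(t) = ζ_q(s,t) + ζ_q(t,s) + ζ_q(s+t) + (1−q)·ζ_q(s+t−1). -/
/-- The `q`-multiple zeta value
`ζ_q(s) = Σ_{n_1 > ⋯ > n_l ≥ 1} ∏_i q^{n_i (s_i - 1)}/[n_i]_q^{s_i}`. -/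
noncomputable def zetaq (q : ℝ) (s : List ℕ) : ℝ :=
  ∑' n : {n : Fin s.length → ℕ // StrictAnti n ∧ ∀ i, 0 < n i},
    ∏ i, q ^ (n.1 i * (s.get i - 1)) / qnum q (n.1 i) ^ s.get i

set_option linter.unusedVariables false
set_option linter.unreachableTactic false
set_option linter.unusedTactic false
set_option linter.unnecessarySeqFocus false

noncomputable def F (q : ℝ) (s n : ℕ) : ℝ := q ^ (n * (s - 1)) / qnum q n ^ s

variable {q : ℝ}

lemma qnum_zero : qnum q 0 = 0 := by simp [qnum]

lemma one_le_qnum (hq0 : 0 < q) (hq1 : q < 1) {n : ℕ} (hn : n ≠ 0) : 1 ≤ qnum q n := by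
  rw [qnum, le_div_iff₀ (by linarith)]
  have : q ^ n ≤ q := pow_le_of_le_one hq0.le hq1.le hn
  linarith

lemma F_zero (hs : 1 ≤ s) : F q s 0 = 0 := by
  rw [F, qnum_zero, zero_pow (by omega), div_zero]

lemma F_nonneg (hq0 : 0 < q) (hq1 : q < 1) (s n : ℕ) : 0 ≤ F q s n := by
  apply div_nonneg (pow_nonneg hq0.le _)
  apply pow_nonneg
  apply div_nonneg _ (by linarith)
  have : q ^ n ≤ 1 := pow_le_one₀ hq0.le hq1.le
  linarith

lemma F_le (hq0 : 0 < q) (hq1 : q < 1) {s : ℕ} (hs : 2 ≤ s) (n : ℕ) : F q s n ≤ q ^ n := by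
  rcases Nat.eq_zero_or_pos n with rfl | hn
  · rw [F_zero (by omega)]; positivity
  · have h1 : 1 ≤ qnum q n := one_le_qnum hq0 hq1 hn.ne'
    have : F q s n ≤ q ^ (n * (s - 1)) := by
      rw [F]
      apply div_le_self (pow_nonneg hq0.le _)
      exact one_le_pow₀ h1
    refine this.trans ?_
    exact pow_le_pow_of_le_one hq0.le hq1.le (by nlinarith [Nat.sub_pos_of_lt hs])

lemma summable_F (hq0 : 0 < q) (hq1 : q < 1) {s : ℕ} (hs : 2 ≤ s) :
    Summable (F q s) := by
  refine Summable.of_nonneg_of_le (F_nonneg hq0 hq1 s) (F_le hq0 hq1 hs) ?_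
  exact summable_geometric_of_lt_one hq0.le hq1

lemma F_mul_F (hq0 : 0 < q) (hq1 : q < 1) {s t : ℕ} (hs : 2 ≤ s) (ht : 2 ≤ t) (n : ℕ) :
    F q s n * F q t n = (1 - q) * F q (s + t - 1) n + F q (s + t) n := by
  rcases Nat.eq_zero_or_pos n with rfl | hn
  · rw [F_zero (show 1 ≤ s by omega), F_zero (show 1 ≤ t by omega),
      F_zero (show 1 ≤ s + t - 1 by omega), F_zero (show 1 ≤ s + t by omega)]; ring
  · obtain ⟨s', rfl⟩ : ∃ s', s = s' + 2 := ⟨s - 2, by omega⟩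
    obtain ⟨t', rfl⟩ : ∃ t', t = t' + 2 := ⟨t - 2, by omega⟩
    have hm1 : 1 ≤ qnum q n := one_le_qnum hq0 hq1 hn.ne'
    have hm0 : qnum q n ≠ 0 := by linarith
    have h1q : (1 : ℝ) - q ≠ 0 := by linarith
    have hrel : (1 - q) * qnum q n = 1 - q ^ n := by
      rw [qnum, mul_div_assoc', mul_div_cancel_left₀ _ h1q]
    simp only [F]
    rw [show s' + 2 + (t' + 2) - 1 = s' + t' + 3 from by omega,
       show s' + 2 + (t' + 2) = s' + t' + 4 from by omega,
       show s' + 2 - 1 = s' + 1 from by omega,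
       show t' + 2 - 1 = t' + 1 from by omega,
       show s' + t' + 3 - 1 = s' + t' + 2 from by omega]
    rw [div_mul_div_comm, ← pow_add, ← pow_add,
       show n * (s' + 1) + n * (t' + 1) = n * (s' + t' + 2) from by ring,
       show s' + 2 + (t' + 2) = s' + t' + 4 from by omega]
    have hq' : q ^ (n * (s' + t' + 3)) = q ^ (n * (s' + t' + 2)) * q ^ n := by
      rw [← pow_add]; congr 1 <;> omega
    have hmpow : qnum q n ^ (s' + t' + 4) = qnum q n ^ (s' + t' + 3) * qnum q n :=
      pow_succ _ _
    rw [hq', hmpow]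
    field_simp
    linear_combination -hrel


def eSingle : {m : ℕ // 0 < m} ≃ {n : Fin 1 → ℕ // StrictAnti n ∧ ∀ i, 0 < n i} where
  toFun m := ⟨fun _ => m.1, fun i j h => absurd (Subsingleton.elim i j ▸ h) (lt_irrefl _),
    fun _ => m.2⟩
  invFun n := ⟨n.1 0, n.2.2 0⟩
  left_inv m := rfl
  right_inv n := by
    ext i
    exact congrArg n.1 (Subsingleton.elim 0 i)

lemma zetaq_single {s : ℕ} (hs : 2 ≤ s) : zetaq q [s] = ∑' n : ℕ, F q s n := by
  have h0 : zetaq q [s] = ∑' n : {n : Fin 1 → ℕ // StrictAnti n ∧ ∀ i, 0 < n i},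
      F q s (n.1 0) :=
    tsum_congr fun n => Fin.prod_univ_one _
  rw [h0, ← eSingle.tsum_eq]
  have h1 : ∀ m : {m : ℕ // 0 < m}, F q s ((eSingle m).1 0) = F q s m.1 := fun m => rfl
  rw [tsum_congr h1]
  exact tsum_subtype_eq_of_support_subset (by
    intro m hm
    rcases Nat.eq_zero_or_pos m with rfl | h
    · exact absurd (F_zero (show 1 ≤ s by omega)) hm
    · exact h)

def ePair : {p : ℕ × ℕ // p.2 < p.1 ∧ 0 < p.2} ≃
    {n : Fin 2 → ℕ // StrictAnti n ∧ ∀ i, 0 < n i} where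
  toFun p := ⟨![p.1.1, p.1.2], by
    constructor
    · intro i j hij
      fin_cases i <;> fin_cases j <;>
        simp_all [Matrix.cons_val_zero, Matrix.cons_val_one] <;> omega
    · intro i
      fin_cases i <;> simp <;> omega⟩
  invFun n := ⟨(n.1 0, n.1 1), n.2.1 (show (0 : Fin 2) < 1 by decide), n.2.2 1⟩
  left_inv p := rfl
  right_inv n := by
    ext i
    fin_cases i <;> simp

lemma zetaq_pair {a b : ℕ} :
    zetaq q [a, b] = ∑' p : {p : ℕ × ℕ // p.2 < p.1 ∧ 0 < p.2},
      F q a p.1.1 * F q b p.1.2 := by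
  have h0 : zetaq q [a, b] = ∑' n : {n : Fin 2 → ℕ // StrictAnti n ∧ ∀ i, 0 < n i},
      F q a (n.1 0) * F q b (n.1 1) :=
    tsum_congr fun n => Fin.prod_univ_two _
  rw [h0, ← ePair.tsum_eq]
  exact tsum_congr fun p => rfl

lemma tsum_indicator_lt {q : ℝ} (hq0 : 0 < q) (hq1 : q < 1) {a b : ℕ} (ha : 2 ≤ a)
    (hb : 2 ≤ b) :
    ∑' p : ℕ × ℕ, ({p : ℕ × ℕ | p.2 < p.1}).indicator (fun p => F q a p.1 * F q b p.2) p
      = zetaq q [a, b] := by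
  rw [zetaq_pair]
  have h1 : ({p : ℕ × ℕ | p.2 < p.1}).indicator (fun p => F q a p.1 * F q b p.2)
      = ({p : ℕ × ℕ | p.2 < p.1 ∧ 0 < p.2}).indicator (fun p => F q a p.1 * F q b p.2) := by
    funext p
    rcases Nat.eq_zero_or_pos p.2 with h2 | h2
    · rw [Set.indicator_of_notMem
        (show p ∉ {p : ℕ × ℕ | p.2 < p.1 ∧ 0 < p.2} from fun hm => by have := hm.2; omega)]
      by_cases h3 : p.2 < p.1
      · rw [Set.indicator_of_mem (show p ∈ {p : ℕ × ℕ | p.2 < p.1} from h3), h2,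
          F_zero (show 1 ≤ b by omega), mul_zero]
      · rw [Set.indicator_of_notMem (show p ∉ {p : ℕ × ℕ | p.2 < p.1} from h3)]
    · by_cases h3 : p.2 < p.1
      · rw [Set.indicator_of_mem (show p ∈ {p : ℕ × ℕ | p.2 < p.1} from h3),
          Set.indicator_of_mem (show p ∈ {p : ℕ × ℕ | p.2 < p.1 ∧ 0 < p.2} from ⟨h3, h2⟩)]
      · rw [Set.indicator_of_notMem (show p ∉ {p : ℕ × ℕ | p.2 < p.1} from h3),
          Set.indicator_of_notMem
            (show p ∉ {p : ℕ × ℕ | p.2 < p.1 ∧ 0 < p.2} from fun hm => h3 hm.1)]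
  rw [h1, ← tsum_subtype]
  rfl

def eDiag : ℕ ≃ {p : ℕ × ℕ // p.1 = p.2} where
  toFun n := ⟨(n, n), rfl⟩
  invFun p := p.1.1
  left_inv n := rfl
  right_inv p := Subtype.ext (Prod.ext rfl p.2)

/-- **q-stuffle product in length 1**: for `0 < q < 1` and integers `s, t ≥ 2`,
`ζ_q(s)·ζ_q(t) = ζ_q(s,t) + ζ_q(t,s) + ζ_q(s+t) + (1-q)·ζ_q(s+t-1)`. -/
theorem q_stuffle_length_one (q : ℝ) (hq0 : 0 < q) (hq1 : q < 1)
    (s t : ℕ) (hs : 2 ≤ s) (ht : 2 ≤ t) :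
    zetaq q [s] * zetaq q [t] =
      zetaq q [s, t] + zetaq q [t, s] + zetaq q [s + t] +
        (1 - q) * zetaq q [s + t - 1] := by
  set G : ℕ × ℕ → ℝ := fun p => F q s p.1 * F q t p.2 with hGdef
  set U : Set (ℕ × ℕ) := {p | p.2 < p.1} with hU
  set V : Set (ℕ × ℕ) := {p | p.1 < p.2} with hV
  set D : Set (ℕ × ℕ) := {p | p.1 = p.2} with hD
  have hS : Summable (F q s) := summable_F hq0 hq1 hs
  have hT : Summable (F q t) := summable_F hq0 hq1 ht
  have hG : Summable G :=
    hS.mul_of_nonneg hT (fun n => F_nonneg hq0 hq1 s n) (fun n => F_nonneg hq0 hq1 t n)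
  -- product as a double sum
  have hprod : zetaq q [s] * zetaq q [t] = ∑' p : ℕ × ℕ, G p := by
    rw [zetaq_single hs, zetaq_single ht]
    refine tsum_mul_tsum_of_summable_norm ?_ ?_
    · simpa [Real.norm_of_nonneg (F_nonneg hq0 hq1 s _)] using hS
    · simpa [Real.norm_of_nonneg (F_nonneg hq0 hq1 t _)] using hT
  -- split into three parts
  have hsplit : ∀ p, G p = U.indicator G p + V.indicator G p + D.indicator G p := by
    intro p
    rcases lt_trichotomy p.1 p.2 with h | h | h
    · rw [Set.indicator_of_notMem (show p ∉ U by simp [hU]; omega),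
        Set.indicator_of_mem (show p ∈ V from h),
        Set.indicator_of_notMem (show p ∉ D by simp [hD]; omega)]
      ring
    · rw [Set.indicator_of_notMem (show p ∉ U by simp [hU]; omega),
        Set.indicator_of_notMem (show p ∉ V by simp [hV]; omega),
        Set.indicator_of_mem (show p ∈ D from h)]
      ring
    · rw [Set.indicator_of_mem (show p ∈ U from h),
        Set.indicator_of_notMem (show p ∉ V by simp [hV]; omega),
        Set.indicator_of_notMem (show p ∉ D by simp [hD]; omega)]
      ring
  have htot : ∑' p : ℕ × ℕ, G p =
      (∑' p : ℕ × ℕ, U.indicator G p) + (∑' p : ℕ × ℕ, V.indicator G p) +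
        (∑' p : ℕ × ℕ, D.indicator G p) := by
    rw [tsum_congr hsplit,
      Summable.tsum_add ((hG.indicator U).add (hG.indicator V)) (hG.indicator D),
      Summable.tsum_add (hG.indicator U) (hG.indicator V)]
  -- the U part
  have hUeq : ∑' p : ℕ × ℕ, U.indicator G p = zetaq q [s, t] :=
    tsum_indicator_lt hq0 hq1 hs ht
  -- the V part, by swapping coordinates
  have hVeq : ∑' p : ℕ × ℕ, V.indicator G p = zetaq q [t, s] := by
    rw [← (Equiv.prodComm ℕ ℕ).tsum_eq (V.indicator G)]
    have h2 : ∀ p : ℕ × ℕ, V.indicator G ((Equiv.prodComm ℕ ℕ) p)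
        = ({r : ℕ × ℕ | r.2 < r.1}).indicator (fun r => F q t r.1 * F q s r.2) p := by
      intro p
      by_cases h : p.2 < p.1
      · rw [Set.indicator_of_mem (show ((Equiv.prodComm ℕ ℕ) p) ∈ V from h),
          Set.indicator_of_mem (show p ∈ {r : ℕ × ℕ | r.2 < r.1} from h)]
        exact mul_comm _ _
      · rw [Set.indicator_of_notMem (show ((Equiv.prodComm ℕ ℕ) p) ∉ V from h),
          Set.indicator_of_notMem (show p ∉ {r : ℕ × ℕ | r.2 < r.1} from h)]
    rw [tsum_congr h2]
    exact tsum_indicator_lt hq0 hq1 ht hs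
  -- the diagonal part
  have hDeq : ∑' p : ℕ × ℕ, D.indicator G p =
      zetaq q [s + t] + (1 - q) * zetaq q [s + t - 1] := by
    have hdd : ∑' p : ℕ × ℕ, D.indicator G p = ∑' n : ℕ, G (n, n) := by
      rw [← tsum_subtype D G]
      exact (eDiag.tsum_eq (fun p : {p : ℕ × ℕ // p.1 = p.2} => G p.1)).symm
    have h3 : ∀ n : ℕ, G (n, n) =
        (1 - q) * F q (s + t - 1) n + F q (s + t) n := fun n => F_mul_F hq0 hq1 hs ht n
    rw [hdd, tsum_congr h3,
      Summable.tsum_add (((summable_F hq0 hq1 (show 2 ≤ s + t - 1 by omega)).mul_left (1 - q)))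
        (summable_F hq0 hq1 (show 2 ≤ s + t by omega)),
      tsum_mul_left, zetaq_single (show 2 ≤ s + t by omega),
      zetaq_single (show 2 ≤ s + t - 1 by omega)]
    ring
  rw [hprod, htot, hUeq, hVeq, hDeq]
  ring
end
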